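/- arXiv:2405.17040 — 8 statements merged into one kernel-verified Lean document; each statement's English description precedes it below -/
import Mathlib

section
/- Let G be a connected simple graph with a perfect matching, and let {u,v} be a 2-vertex cut of G (that is, u ≠ v and the graph obtained from G by deleting u and v is disconnected). If G − {u,v} has a connected component with an odd number of vertices, then {u,v} is a barrier of G. -/
open SimpleGraph

/-- `G` has a perfect matching. -/
def HasPerfectMatching {V : Type*} (G : SimpleGraph V) : Prop :=
  ∃ M : G.Subgraph, M.IsPerfectMatching

/-- `B` is a (nonempty) barrier of `G`: the number of odd components of `G − B`
equals `|B|`. -/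
def IsBarrier {V : Type*} (G : SimpleGraph V) (B : Set V) : Prop :=
  B.Nonempty ∧
    Nat.card {c : (G.induce (Bᶜ : Set V)).ConnectedComponent // Odd (Nat.card c.supp)}
      = Nat.card B

/-- `G` is matching covered: connected, has an edge, and every edge lies in some
perfect matching. -/
def IsMatchingCovered {V : Type*} (G : SimpleGraph V) : Prop :=
  G.Connected ∧ G.edgeSet.Nonempty ∧
    ∀ ⦃u v : V⦄, G.Adj u v → ∃ M : G.Subgraph, M.IsPerfectMatching ∧ M.Adj u v

/-- The edge `uv` is removable in `G`. -/
def IsRemovable {V : Type*} (G : SimpleGraph V) (u v : V) : Prop :=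
  IsMatchingCovered (G.deleteEdges {s(u, v)})


/-- The graph `G − B` realized as a subgraph coercion is isomorphic to `G.induce Bᶜ`. -/
def delIso {V : Type*} (G : SimpleGraph V) (B : Set V) :
    ((⊤ : G.Subgraph).deleteVerts B).coe ≃g (G.induce (Bᶜ : Set V)) where
  toFun x := ⟨x.1, x.2.2⟩
  invFun x := ⟨x.1, ⟨trivial, x.2⟩⟩
  left_inv x := rfl
  right_inv x := rfl
  map_rel_iff' := by
    rintro ⟨a, -, ha⟩ ⟨b, -, hb⟩
    simp [Subgraph.deleteVerts_adj, ha, hb, comap_adj]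

/-- If `G` is a connected graph with a perfect matching, `{u, v}` is a
2-vertex cut of `G`, and `G − {u, v}` has an odd component, then `{u, v}` is a barrier. -/
theorem stmt_0 {V : Type*} [Fintype V] (G : SimpleGraph V)
    (hconn : G.Connected) (hpm : HasPerfectMatching G)
    (u v : V) (huv : u ≠ v)
    (hcut : ¬ (G.induce (({u, v} : Set V)ᶜ)).Connected)
    (hodd : ∃ c : (G.induce (({u, v} : Set V)ᶜ)).ConnectedComponent,
      Odd (Nat.card c.supp)) :
    IsBarrier G {u, v} := by
  classical
  obtain ⟨M, hM⟩ := hpm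
  set B : Set V := {u, v} with hB
  set S := {c : (G.induce (Bᶜ : Set V)).ConnectedComponent // Odd (Nat.card c.supp)}
  have hcardB : Nat.card B = 2 := by
    rw [Nat.card_coe_set_eq, Set.ncard_pair huv]
  set ψ := (delIso G B).connectedComponentEquiv with hψ
  -- each odd component has a vertex matched into `B`
  have key : ∀ c : S, ∃ w : V, w ∈ B ∧
      ∃ x : ((⊤ : G.Subgraph).deleteVerts B).verts,
        M.Adj x w ∧ x ∈ (ψ.symm c.1).supp := by
    rintro ⟨c, hc⟩
    have hcodd : Odd (Nat.card (ψ.symm c).supp) := by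
      have := Nat.card_eq_of_bijective _
        (ConnectedComponent.isoEquivSupp (delIso G B) (ψ.symm c)).bijective
      rw [Equiv.apply_symm_apply] at this
      rwa [this]
    obtain ⟨w, hwB, x, hx1, hx2⟩ :=
      SimpleGraph.ConnectedComponent.odd_matches_node_outside hM
        ⟨ψ.symm c, by rw [Set.mem_setOf_eq, ← Nat.card_coe_set_eq]; exact hcodd⟩
    exact ⟨w, hwB, x, hx1, hx2⟩
  choose w hwB x hx1 hx2 using key
  have hinj : Function.Injective (fun c : S => (⟨w c, hwB c⟩ : B)) := by
    intro c1 c2 h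
    simp only [Subtype.mk.injEq] at h
    obtain ⟨y, -, hy⟩ := hM.1 (hM.2 (w c1))
    have hx12 : x c1 = x c2 := by
      have e1 : (x c1 : V) = y := hy _ (M.adj_symm (hx1 c1))
      have e2 : (x c2 : V) = y := hy _ (M.adj_symm (h ▸ hx1 c2))
      exact Subtype.ext (e1.trans e2.symm)
    have : ψ.symm c1.1 = ψ.symm c2.1 := by
      rw [← (ConnectedComponent.mem_supp_iff _ _).mp (hx2 c1),
        ← (ConnectedComponent.mem_supp_iff _ _).mp (hx2 c2), hx12]
    exact Subtype.ext (ψ.symm.injective this)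
  have hle : Nat.card S ≤ 2 := hcardB ▸ Nat.card_le_card_of_injective _ hinj
  have hpos : 0 < Nat.card S := by
    obtain ⟨c, hc⟩ := hodd
    have : Nonempty S := ⟨⟨c, hc⟩⟩
    exact Nat.card_pos
  have heven : ¬ Odd (Nat.card S) := by
    intro hoddS
    have : Odd (Nat.card (↥(Bᶜ) : Type _)) :=
      (odd_ncard_oddComponents (G := G.induce (Bᶜ : Set V))).mp (by
        rw [← Nat.card_coe_set_eq]
        rwa [Nat.card_congr (Equiv.subtypeEquivRight (p := fun c => c ∈ (G.induce (Bᶜ : Set V)).oddComponents) (q := fun c => Odd (Nat.card c.supp)) (fun c => by rw [Set.mem_setOf_eq, Nat.card_coe_set_eq]))])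
    have hV : Even (Nat.card V) := by
      rw [Nat.card_eq_fintype_card]; exact hM.even_card
    have hsum : Nat.card (↥(Bᶜ) : Type _) + 2 = Nat.card V := by
      rw [Nat.card_coe_set_eq, ← hcardB, Nat.card_coe_set_eq]
      have h2 := Set.ncard_add_ncard_compl B (Set.toFinite B) (Set.toFinite Bᶜ)
      omega
    rw [Nat.odd_iff] at this
    rw [Nat.even_iff] at hV
    omega
  rw [Nat.not_odd_iff_even, Nat.even_iff] at heven
  have hS : Nat.card S = 2 := by omega
  refine ⟨⟨u, Or.inl rfl⟩, ?_⟩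
  rw [hcardB]
  exact hS
end

section
/- Let G be a simple graph with a perfect matching and let B be a maximal barrier of G, i.e., a barrier that is not properly contained in any other barrier of G. Then every connected component of G − B is factor-critical. -/
open SimpleGraph Set Function

namespace Stmt2Work
variable {V W : Type*} {G : SimpleGraph V}

noncomputable def oddC (G : SimpleGraph V) (s : Set V) : ℕ :=
  Nat.card {c : (G.induce s).ConnectedComponent // Odd (Nat.card c.supp)}

def sVal {s : Set V} (c : (G.induce s).ConnectedComponent) : Set V := Subtype.val '' c.supp

lemma oddC_parity [Finite V] (G : SimpleGraph V) (s : Set V) :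
    Odd (s.ncard) ↔ Odd (oddC G s) := by
  rw [oddC, ← Nat.card_coe_set_eq]
  have := (G.induce s).odd_ncard_oddComponents
  simp_rw [← Nat.card_coe_set_eq] at this
  exact this.symm

lemma sVal_subset {s : Set V} (c : (G.induce s).ConnectedComponent) : sVal c ⊆ s := by
  rintro v ⟨⟨v, hv⟩, -, rfl⟩; exact hv

lemma sVal_injective {s : Set V} : Injective (sVal (G := G) (s := s)) := by
  intro c d h
  unfold sVal at h
  have := congrArg (Set.preimage (Subtype.val : s → V)) h
  rw [Set.preimage_image_eq _ Subtype.val_injective,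
    Set.preimage_image_eq _ Subtype.val_injective] at this
  exact ConnectedComponent.supp_injective this

lemma sVal_nonempty {s : Set V} (c : (G.induce s).ConnectedComponent) : (sVal c).Nonempty := by
  obtain ⟨v, hv⟩ := c.exists_rep
  exact ⟨v.1, v, by rw [ConnectedComponent.mem_supp_iff, ← hv]; rfl, rfl⟩

lemma card_sVal {s : Set V} (c : (G.induce s).ConnectedComponent) :
    Nat.card (sVal c) = Nat.card c.supp :=
  Nat.card_image_of_injective Subtype.val_injective _

lemma card_supp_eq_of_sVal {s t : Set V} {c : (G.induce s).ConnectedComponent}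
    {d : (G.induce t).ConnectedComponent} (h : sVal c = sVal d) :
    Nat.card c.supp = Nat.card d.supp := by
  rw [← card_sVal, ← card_sVal, h]

lemma mem_sVal_of_adj {s : Set V} {c : (G.induce s).ConnectedComponent} {v w : V}
    (hv : v ∈ sVal c) (hw : w ∈ s) (hadj : G.Adj v w) : w ∈ sVal c := by
  obtain ⟨⟨v, hvs⟩, hvc, rfl⟩ := hv
  refine ⟨⟨w, hw⟩, ?_, rfl⟩
  rw [ConnectedComponent.mem_supp_iff] at hvc ⊢
  rw [← hvc]
  exact ConnectedComponent.connectedComponentMk_eq_of_adj (by exact hadj.symm)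

lemma sVal_eq_of_mem {s : Set V} {c d : (G.induce s).ConnectedComponent} {v : V}
    (hc : v ∈ sVal c) (hd : v ∈ sVal d) : c = d := by
  obtain ⟨v₁, h₁, rfl⟩ := hc
  obtain ⟨v₂, h₂, hv⟩ := hd
  cases Subtype.val_injective hv
  rw [ConnectedComponent.mem_supp_iff] at h₁ h₂
  rw [← h₁, ← h₂]

/-- Transfer a component of a smaller induced graph up, if it is closed under
adjacency into the bigger set. -/
lemma core_up {r s : Set V} (hrs : r ⊆ s) (E : (G.induce r).ConnectedComponent)
    (hcl : ∀ v w, v ∈ sVal E → w ∈ s → G.Adj v w → w ∈ r) :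
    ∃ D : (G.induce s).ConnectedComponent, sVal D = sVal E := by
  obtain ⟨x₀, hx₀⟩ := E.exists_rep
  subst hx₀
  use (G.induce s).connectedComponentMk ⟨x₀.1, hrs x₀.2⟩
  have hx₀E : (x₀ : V) ∈ sVal ((G.induce r).connectedComponentMk x₀) := ⟨x₀, rfl, rfl⟩
  apply Set.Subset.antisymm
  · rintro v ⟨⟨v, hvs⟩, hvc, rfl⟩
    rw [ConnectedComponent.mem_supp_iff, ConnectedComponent.eq] at hvc
    obtain ⟨p⟩ := hvc
    -- walk from ⟨v,hvs⟩ to x₀' in induce s; reverse: from x₀' to v.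
    have key : ∀ {a b : s} (_ : (G.induce s).Walk a b),
        (a : V) ∈ sVal ((G.induce r).connectedComponentMk x₀) →
        (b : V) ∈ sVal ((G.induce r).connectedComponentMk x₀) := by
      intro a b p
      induction p with
      | nil => exact id
      | cons h p ih =>
        rename_i a' b' c'
        intro ha
        apply ih
        have hadj : G.Adj a' b' := h
        have hb'r : (b' : V) ∈ r := hcl _ _ ha b'.2 hadj
        -- b' is adjacent to a' in induce r, so same component
        obtain ⟨⟨a'', ha''r⟩, ha''c, ha''v⟩ := ha
        refine ⟨⟨b', hb'r⟩, ?_, rfl⟩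
        rw [ConnectedComponent.mem_supp_iff] at ha''c ⊢
        rw [← ha''c]
        apply ConnectedComponent.connectedComponentMk_eq_of_adj
        show G.Adj (b' : V) (a'' : V)
        rw [show (a'' : V) = (a' : V) from ha''v]
        exact hadj.symm
    exact key p.reverse hx₀E
  · rintro v ⟨⟨v, hvr⟩, hvc, rfl⟩
    change (G.induce r).connectedComponentMk ⟨v, hvr⟩ = Quot.mk (G.induce r).Reachable x₀ at hvc
    rw [show Quot.mk (G.induce r).Reachable x₀ = (G.induce r).connectedComponentMk x₀ from rfl, ConnectedComponent.eq] at hvc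
    refine ⟨⟨v, hrs hvr⟩, ?_, rfl⟩
    rw [ConnectedComponent.mem_supp_iff, ConnectedComponent.eq]
    exact hvc.map (induceHomOfLE G hrs).toHom

lemma core_down {r s : Set V} (hrs : r ⊆ s) (D : (G.induce s).ConnectedComponent)
    (hD : sVal D ⊆ r) :
    ∃ E : (G.induce r).ConnectedComponent, sVal E = sVal D := by
  obtain ⟨x₀, hx₀⟩ := D.exists_rep
  have hx₀D : (x₀ : V) ∈ sVal D := ⟨x₀, by rw [ConnectedComponent.mem_supp_iff, ← hx₀]; rfl, rfl⟩
  use (G.induce r).connectedComponentMk ⟨x₀.1, hD hx₀D⟩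
  apply Set.Subset.antisymm
  · rintro v ⟨⟨v, hvr⟩, hvc, rfl⟩
    rw [ConnectedComponent.mem_supp_iff, ConnectedComponent.eq] at hvc
    refine ⟨⟨v, hrs hvr⟩, ?_, rfl⟩
    rw [ConnectedComponent.mem_supp_iff, ← hx₀]
    exact ConnectedComponent.sound (hvc.map (induceHomOfLE G hrs).toHom)
  · rintro v ⟨⟨v, hvs⟩, hvc, rfl⟩
    rw [ConnectedComponent.mem_supp_iff, ← hx₀,
      show Quot.mk (G.induce s).Reachable x₀ = (G.induce s).connectedComponentMk x₀ from rfl,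
      ConnectedComponent.eq] at hvc
    obtain ⟨p⟩ := hvc.symm
    -- p : walk in induce s from x₀' to ⟨v, hvs⟩
    have key : ∀ {a b : s} (_ : (G.induce s).Walk a b),
        a ∈ D.supp →
        (a : V) ∈ sVal ((G.induce r).connectedComponentMk ⟨x₀.1, hD hx₀D⟩) →
        (b : V) ∈ sVal ((G.induce r).connectedComponentMk ⟨x₀.1, hD hx₀D⟩) := by
      intro a b p
      induction p with
      | nil => exact fun _ h => h
      | cons h p ih =>
        rename_i a' b' c'
        intro haD ha
        have hadj : G.Adj a' b' := h
        have hb'D : b' ∈ D.supp := by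
          rw [ConnectedComponent.mem_supp_iff] at haD ⊢
          rw [← haD]
          exact ConnectedComponent.connectedComponentMk_eq_of_adj (by exact hadj.symm)
        have hb'r : (b' : V) ∈ r := hD ⟨b', hb'D, rfl⟩
        refine ih hb'D ?_
        obtain ⟨⟨a'', ha''r⟩, ha''c, ha''v⟩ := ha
        refine ⟨⟨b', hb'r⟩, ?_, rfl⟩
        rw [ConnectedComponent.mem_supp_iff] at ha''c ⊢
        rw [← ha''c]
        apply ConnectedComponent.connectedComponentMk_eq_of_adj
        show G.Adj (b' : V) (a'' : V)
        rw [show (a'' : V) = (a' : V) from ha''v]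
        exact hadj.symm
    have hx₀supp : x₀ ∈ D.supp := by rw [ConnectedComponent.mem_supp_iff, ← hx₀]; rfl
    exact key p hx₀supp ⟨⟨x₀.1, hD hx₀D⟩, rfl, rfl⟩

lemma odd_comp_matches [Finite V] {x : Set V} {M : G.Subgraph} (hM : M.IsPerfectMatching)
    {c : (G.induce xᶜ).ConnectedComponent} (hodd : Odd (Nat.card c.supp)) :
    ∃ w ∈ x, ∃ v ∈ sVal c, M.Adj v w := by
  by_contra! h
  have hN : (M.induce (sVal c)).IsMatching := by
    intro v hv
    obtain ⟨w, hw⟩ := hM.1 (hM.2 v)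
    have hwx : w ∈ xᶜ := fun hwx => h w hwx v hv hw.1
    have hwc : w ∈ sVal c := mem_sVal_of_adj hv hwx (M.adj_sub hw.1)
    exact ⟨w, ⟨hv, hwc, hw.1⟩, fun y hy => hw.2 y hy.2.2⟩
  rw [← card_sVal] at hodd
  apply (Nat.not_even_iff_odd.mpr hodd)
  classical
  haveI : Fintype ↑(M.induce (sVal c)).verts := Fintype.ofFinite _
  have := hN.even_card
  rw [Set.toFinset_card] at this
  have hv : (M.induce (sVal c)).verts = sVal c := rfl
  rw [show Nat.card (sVal c) = Fintype.card (M.induce (sVal c)).verts from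
    Nat.card_eq_fintype_card (α := ↑(M.induce (sVal c)).verts)]
  exact this

lemma pm_oddC_le [Finite V] {M : G.Subgraph} (hM : M.IsPerfectMatching) (x : Set V) :
    oddC G xᶜ ≤ Nat.card x := by
  classical
  have key : ∀ c : {c : (G.induce xᶜ).ConnectedComponent // Odd (Nat.card c.supp)},
      ∃ w ∈ x, ∃ v ∈ sVal c.1, M.Adj v w := fun c => odd_comp_matches hM c.2
  choose w hwx v hv hadj using key
  apply Nat.card_le_card_of_injective (fun c => (⟨w c, hwx c⟩ : x))
  intro c₁ c₂ hw
  simp only [Subtype.mk.injEq] at hw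
  have h₁ := hadj c₁
  have h₂ := hadj c₂
  rw [hw] at h₁
  obtain ⟨v', hv'⟩ := hM.1 (hM.2 (w c₂))
  have e₁ : v c₁ = v' := hv'.2 _ h₁.symm
  have e₂ : v c₂ = v' := hv'.2 _ (hadj c₂).symm
  have : v c₁ = v c₂ := e₁.trans e₂.symm
  exact Subtype.ext (sVal_eq_of_mem (this ▸ hv c₁) (hv c₂))

lemma count_split [Finite V] {s : Set V} (c : (G.induce s).ConnectedComponent) {m : Set V}
    (hm : m ⊆ sVal c) :
    Nat.card {D : (G.induce s).ConnectedComponent // Odd (Nat.card D.supp) ∧ D ≠ c}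
      + oddC G (sVal c \ m) ≤ oddC G (s \ m) := by
  classical
  rw [oddC, oddC, ← Nat.card_sum]
  have hdisj : ∀ (D : (G.induce s).ConnectedComponent), D ≠ c → Disjoint (sVal D) m := by
    intro D hD
    refine Set.disjoint_of_subset_right hm ?_
    rw [Set.disjoint_left]
    intro a haD haC
    exact hD (sVal_eq_of_mem haD haC)
  have map1 : ∀ D : {D : (G.induce s).ConnectedComponent // Odd (Nat.card D.supp) ∧ D ≠ c},
      ∃ E : (G.induce (s \ m)).ConnectedComponent, sVal E = sVal D.1 :=
    fun ⟨D, _, hDne⟩ => core_down diff_subset D (subset_diff.mpr ⟨sVal_subset D, hdisj D hDne⟩)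
  have map2 : ∀ D' : {D' : (G.induce (sVal c \ m)).ConnectedComponent // Odd (Nat.card D'.supp)},
      ∃ E : (G.induce (s \ m)).ConnectedComponent, sVal E = sVal D'.1 := by
    rintro ⟨D', -⟩
    refine core_up (diff_subset_diff_left (sVal_subset c)) D' ?_
    intro v w hv hw hvw
    have hvc : v ∈ sVal c := ((sVal_subset D') hv).1
    exact ⟨mem_sVal_of_adj hvc hw.1 hvw, hw.2⟩
  choose F1 hF1 using map1
  choose F2 hF2 using map2
  have hodd1 : ∀ D, Odd (Nat.card (F1 D).supp) := fun D => card_supp_eq_of_sVal (hF1 D) ▸ D.2.1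
  have hodd2 : ∀ D, Odd (Nat.card (F2 D).supp) := fun D => card_supp_eq_of_sVal (hF2 D) ▸ D.2
  apply Nat.card_le_card_of_injective
    (fun D => match D with
      | Sum.inl D => (⟨F1 D, hodd1 D⟩ : {E : (G.induce (s \ m)).ConnectedComponent // Odd (Nat.card E.supp)})
      | Sum.inr D => ⟨F2 D, hodd2 D⟩)
  have hdisjc : ∀ (D : (G.induce s).ConnectedComponent), D ≠ c → Disjoint (sVal D) (sVal c) := by
    intro D hD
    rw [Set.disjoint_left]
    intro a haD haC
    exact hD (sVal_eq_of_mem haD haC)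
  rintro (D₁ | D₁) (D₂ | D₂) h <;> simp only [Subtype.mk.injEq] at h
  · have : sVal D₁.1 = sVal D₂.1 := by rw [← hF1 D₁, ← hF1 D₂, h]
    exact congrArg Sum.inl (Subtype.ext (sVal_injective this))
  · exfalso
    have heq : sVal D₁.1 = sVal D₂.1 := by rw [← hF1 D₁, ← hF2 D₂, h]
    obtain ⟨v, hv⟩ := sVal_nonempty D₂.1
    have hvc : v ∈ sVal c := ((sVal_subset D₂.1) hv).1
    exact Set.disjoint_left.mp (hdisjc D₁.1 D₁.2.2) (heq ▸ hv) hvc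
  · exfalso
    have heq : sVal D₁.1 = sVal D₂.1 := by rw [← hF2 D₁, ← hF1 D₂, h]
    obtain ⟨v, hv⟩ := sVal_nonempty D₁.1
    have hvc : v ∈ sVal c := ((sVal_subset D₁.1) hv).1
    exact Set.disjoint_left.mp (hdisjc D₂.1 D₂.2.2) (heq ▸ hv) hvc
  · have : sVal D₁.1 = sVal D₂.1 := by rw [← hF2 D₁, ← hF2 D₂, h]
    exact congrArg Sum.inr (Subtype.ext (sVal_injective this))

/-- Nested induced subgraphs flatten. -/
noncomputable def induceInduceIso (G : SimpleGraph V) (d : Set V) (t : Set ↥d) :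
    (G.induce d).induce t ≃g G.induce (Subtype.val '' t) where
  toEquiv := (Equiv.Set.image Subtype.val t Subtype.val_injective)
  map_rel_iff' := by
    intro a b
    simp only [Equiv.Set.image, Equiv.Set.imageOfInjOn, Equiv.coe_fn_mk]
    rfl

/-- transport of the odd-component count along a graph isomorphism -/
lemma card_odd_comp_eq {A : SimpleGraph V} {B : SimpleGraph W} (φ : A ≃g B) :
    Nat.card {c : A.ConnectedComponent // Odd (Nat.card c.supp)}
      = Nat.card {c : B.ConnectedComponent // Odd (Nat.card c.supp)} := by
  apply Nat.card_congr
  refine Equiv.subtypeEquiv φ.connectedComponentEquiv (fun c => ?_)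
  rw [Nat.card_congr (ConnectedComponent.isoEquivSupp φ c)]

/-- transport of perfect matchings along a graph isomorphism -/
lemma pm_transport {A : SimpleGraph V} {B : SimpleGraph W} (φ : A ≃g B)
    (h : ∃ M : B.Subgraph, M.IsPerfectMatching) :
    ∃ M : A.Subgraph, M.IsPerfectMatching := by
  obtain ⟨M, hM⟩ := h
  refine ⟨M.map φ.symm.toHom, (Subgraph.Iso.isMatching_map φ.symm).mpr hM.1, ?_⟩
  intro v
  rw [Subgraph.map_verts]
  exact ⟨φ v, hM.2 _, by simp⟩


lemma card_odd_ne [Finite V] {s : Set V} (c : (G.induce s).ConnectedComponent) :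
    Nat.card {D : (G.induce s).ConnectedComponent // Odd (Nat.card D.supp) ∧ D ≠ c}
      = if Odd (Nat.card c.supp) then oddC G s - 1 else oddC G s := by
  classical
  have h1 : Nat.card {D : (G.induce s).ConnectedComponent // Odd (Nat.card D.supp) ∧ D ≠ c}
      = ({D : (G.induce s).ConnectedComponent | Odd (Nat.card D.supp)} \ {c}).ncard := by
    rw [← Nat.card_coe_set_eq]
    apply Nat.card_congr
    apply Equiv.subtypeEquivRight
    intro D
    simp [Set.mem_diff, and_comm]
  have h2 : oddC G s = {D : (G.induce s).ConnectedComponent | Odd (Nat.card D.supp)}.ncard := by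
    rw [oddC, ← Nat.card_coe_set_eq]
    rfl
  rw [h1, h2]
  by_cases hodd : Odd (Nat.card c.supp)
  · rw [if_pos hodd]
    have hcmem : c ∈ {D : (G.induce s).ConnectedComponent | Odd (Nat.card D.supp)} := hodd
    rw [Set.ncard_diff_singleton_of_mem hcmem]
  · rw [if_neg hodd]
    congr 1
    exact Set.diff_singleton_eq_self (fun h => hodd h)

lemma oddC_pos_of_odd [Finite V] {t : Set V} (h : Odd t.ncard) : 1 ≤ oddC G t := by
  have := (oddC_parity G t).mp h
  exact this.pos

/-- Extending an "equality set" through an even component. -/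
lemma key_even [Finite V] {B : Set V}
    (hub : ∀ x : Set V, oddC G xᶜ ≤ x.ncard)
    (hBeq : oddC G Bᶜ = B.ncard)
    {c : (G.induce Bᶜ).ConnectedComponent} (hodd : ¬ Odd (Nat.card c.supp))
    {v : V} (hv : v ∈ sVal c) :
    oddC G (B ∪ {v})ᶜ = (B ∪ {v}).ncard := by
  classical
  have hvB : v ∉ B := sVal_subset c hv
  have hcompl : (B ∪ {v})ᶜ = Bᶜ \ {v} := by
    rw [Set.compl_union]; ext x; simp [Set.mem_diff, and_comm]
  have hsplit := count_split (G := G) c (Set.singleton_subset_iff.mpr hv)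
  rw [card_odd_ne, if_neg hodd, hBeq] at hsplit
  have hone : 1 ≤ oddC G (sVal c \ {v}) := by
    apply oddC_pos_of_odd
    have hfin : (sVal c).Finite := Set.toFinite _
    have hcv : (sVal c).ncard = Nat.card c.supp := by
      rw [← card_sVal, Nat.card_coe_set_eq]
    have heven : Even ((sVal c).ncard) := by
      rw [hcv]; exact Nat.not_odd_iff_even.mp hodd
    have hvpos : 0 < (sVal c).ncard := (Set.ncard_pos hfin).mpr ⟨v, hv⟩
    rw [Set.ncard_diff_singleton_of_mem hv]
    obtain ⟨k, hk⟩ := heven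
    rw [Nat.odd_iff]; omega
  have hle := hub (B ∪ {v})
  rw [hcompl] at hle ⊢
  have hcard : (B ∪ {v}).ncard = B.ncard + 1 := by
    rw [Set.union_singleton, Set.ncard_insert_of_notMem hvB (Set.toFinite _)]
  rw [hcard] at hle ⊢
  omega

/-- Extending an "equality set" via a Tutte violator inside an odd component. -/
lemma key_odd [Finite V] {B : Set V}
    (hub : ∀ x : Set V, oddC G xᶜ ≤ x.ncard)
    (hBeq : oddC G Bᶜ = B.ncard)
    {c : (G.induce Bᶜ).ConnectedComponent} (hodd : Odd (Nat.card c.supp))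
    {u : V} (hu : u ∈ sVal c) {m : Set V} (hm : m ⊆ sVal c \ {u})
    (hviol : m.ncard < oddC G (sVal c \ ({u} ∪ m))) :
    oddC G (B ∪ ({u} ∪ m))ᶜ = (B ∪ ({u} ∪ m)).ncard := by
  classical
  have huB : u ∉ B := sVal_subset c hu
  have hmc : m ⊆ sVal c := hm.trans diff_subset
  have hmB : ∀ x ∈ m, x ∉ B := fun x hx => sVal_subset c (hmc hx)
  have hum : u ∉ m := fun h => (hm h).2 rfl
  -- parity upgrade
  have hstep : m.ncard + 2 ≤ oddC G (sVal c \ ({u} ∪ m)) := by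
    have hpar := (oddC_parity G (sVal c \ ({u} ∪ m)))
    have hsub' : ({u} ∪ m) ⊆ sVal c := by
      rw [Set.union_subset_iff]; exact ⟨Set.singleton_subset_iff.mpr hu, hmc⟩
    have h1 : (sVal c \ ({u} ∪ m)).ncard = (sVal c).ncard - (1 + m.ncard) := by
      rw [Set.ncard_diff hsub' (Set.toFinite _)]
      congr 1
      rw [Set.ncard_union_eq (Set.disjoint_singleton_left.mpr hum) (Set.toFinite _)
        (Set.toFinite _), Set.ncard_singleton]
    have hcv : (sVal c).ncard = Nat.card c.supp := by
      rw [← card_sVal, Nat.card_coe_set_eq]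
    have hums : ({u} ∪ m).ncard = 1 + m.ncard := by
      rw [Set.ncard_union_eq (Set.disjoint_singleton_left.mpr hum) (Set.toFinite _)
        (Set.toFinite _), Set.ncard_singleton]
    have hle' : 1 + m.ncard ≤ (sVal c).ncard := by
      rw [← hums]; exact Set.ncard_le_ncard hsub' (Set.toFinite _)
    have hcodd : (sVal c).ncard % 2 = 1 := by
      rw [hcv]; exact Nat.odd_iff.mp hodd
    simp only [Nat.odd_iff] at hpar
    omega
  have hcompl : (B ∪ ({u} ∪ m))ᶜ = Bᶜ \ ({u} ∪ m) := by
    rw [Set.compl_union]; ext x; simp [Set.mem_diff, and_comm]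
  have hsub2 : ({u} ∪ m) ⊆ sVal c := by
    rw [Set.union_subset_iff]; exact ⟨Set.singleton_subset_iff.mpr hu, hmc⟩
  have hsplit := count_split (G := G) c hsub2
  rw [card_odd_ne, if_pos hodd, hBeq] at hsplit
  have hle := hub (B ∪ ({u} ∪ m))
  rw [hcompl] at hle ⊢
  have hdisjBum : Disjoint B ({u} ∪ m) := by
    rw [Set.disjoint_union_right, Set.disjoint_singleton_right]
    exact ⟨huB, Set.disjoint_left.mpr (fun x hx hxm => hmB x hxm hx)⟩
  have hcard : (B ∪ ({u} ∪ m)).ncard = B.ncard + (1 + m.ncard) := by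
    rw [Set.ncard_union_eq hdisjBum (Set.toFinite _) (Set.toFinite _),
      Set.ncard_union_eq (Set.disjoint_singleton_left.mpr hum) (Set.toFinite _) (Set.toFinite _),
      Set.ncard_singleton]
  rw [hcard] at hle ⊢
  have hBpos : 1 ≤ B.ncard := by
    rw [← hBeq, oddC]
    haveI : Nonempty {c : (G.induce Bᶜ).ConnectedComponent // Odd (Nat.card c.supp)} :=
      ⟨⟨c, hodd⟩⟩
    exact Nat.card_pos
  omega


lemma violator_flat [Finite V] {G : SimpleGraph V} {d : Set V}
    (h : ∃ x : Set ↥d, x.ncard < oddC (G.induce d) xᶜ) :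
    ∃ m ⊆ d, m.ncard < oddC G (d \ m) := by
  obtain ⟨x, hx⟩ := h
  refine ⟨Subtype.val '' x, by rintro v ⟨a, -, rfl⟩; exact a.2, ?_⟩
  have himg : Subtype.val '' (xᶜ : Set ↥d) = d \ Subtype.val '' x := by
    ext v
    constructor
    · rintro ⟨a, ha, rfl⟩
      exact ⟨a.2, fun ⟨b, hb, hba⟩ => ha (Subtype.val_injective hba ▸ hb)⟩
    · rintro ⟨hvd, hvm⟩
      exact ⟨⟨v, hvd⟩, fun hmem => hvm ⟨⟨v, hvd⟩, hmem, rfl⟩, rfl⟩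
  have hcardeq : oddC (G.induce d) xᶜ = oddC G (d \ Subtype.val '' x) := by
    rw [oddC, oddC, card_odd_comp_eq (induceInduceIso G d xᶜ), himg]
  rw [Set.ncard_image_of_injective x Subtype.val_injective, ← hcardeq]
  exact hx

lemma pm_of_isEmpty {W : Type*} (H : SimpleGraph W) (h : IsEmpty W) :
    ∃ M : H.Subgraph, M.IsPerfectMatching :=
  ⟨⊥, fun v _ => (h.false v).elim, fun v => (h.false v).elim⟩

lemma card_coe_set (s : Set V) [Fintype ↥s] : Fintype.card ↥s = s.ncard := by
  rw [← Nat.card_eq_fintype_card, Nat.card_coe_set_eq]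

theorem tutte_aux : ∀ (n : ℕ) {W : Type u} [Fintype W] (H : SimpleGraph W),
    Fintype.card W ≤ n → (∀ x : Set W, oddC H xᶜ ≤ x.ncard) →
    ∃ M : H.Subgraph, M.IsPerfectMatching := by
  intro n
  induction n with
  | zero =>
    intro W _ H hcard _
    exact pm_of_isEmpty H (by rw [← Fintype.card_eq_zero_iff]; omega)
  | succ n ih =>
    intro W _ H hcardW cond
    classical
    rcases isEmpty_or_nonempty W with hW | hW
    · exact pm_of_isEmpty H hW
    -- maximal equality set
    have hempty : (∅ : Set W) ∈ {S : Set W | oddC H Sᶜ = S.ncard} := by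
      have := cond ∅
      simp only [Set.ncard_empty, Nat.le_zero] at this
      show oddC H (∅ : Set W)ᶜ = (∅ : Set W).ncard
      rw [Set.ncard_empty]
      exact this
    obtain ⟨S, hSeq, hSmax⟩ := Set.Finite.exists_maximalFor Set.ncard
      {S : Set W | oddC H Sᶜ = S.ncard} (Set.toFinite _) ⟨∅, hempty⟩
    have hmax' : ∀ S' : Set W, oddC H S'ᶜ = S'.ncard → S.ncard < S'.ncard → False := by
      intro S' h1 h2
      exact absurd (hSmax h1 h2.le) (not_le.mpr h2)
    -- every component is odd
    have hallodd : ∀ c : (H.induce Sᶜ).ConnectedComponent, Odd (Nat.card c.supp) := by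
      intro c
      by_contra hodd
      obtain ⟨v, hv⟩ := sVal_nonempty c
      have h1 := key_even cond hSeq hodd hv
      refine hmax' _ h1 ?_
      rw [Set.union_singleton, Set.ncard_insert_of_notMem (sVal_subset c hv) (Set.toFinite _)]
      omega
    -- factor-critical step
    have hFC : ∀ (c : (H.induce Sᶜ).ConnectedComponent) (u : W), u ∈ sVal c →
        ∃ M : (H.induce (sVal c \ {u})).Subgraph, M.IsPerfectMatching := by
      intro c u hu
      by_contra hno
      have hcard : Fintype.card ↥(sVal c \ {u}) ≤ n := by
        rw [card_coe_set]
        have h1 : (sVal c \ {u}) ⊆ Set.univ \ {u} := fun x hx => ⟨trivial, hx.2⟩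
        have h2 := Set.ncard_le_ncard h1 (Set.toFinite _)
        have h3 : (Set.univ \ {u} : Set W).ncard = Fintype.card W - 1 := by
          rw [Set.ncard_diff (Set.subset_univ _) (Set.toFinite _), Set.ncard_univ,
            Set.ncard_singleton, Nat.card_eq_fintype_card]
        have h4 : 1 ≤ Fintype.card W := Fintype.card_pos
        omega
      have hviol : ∃ x : Set ↥(sVal c \ {u}), x.ncard < oddC (H.induce (sVal c \ {u})) xᶜ := by
        by_contra hcond
        push_neg at hcond
        exact hno (ih (H.induce (sVal c \ {u})) hcard (fun x => (hcond x)))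
      obtain ⟨m, hm, hmviol⟩ := violator_flat hviol
      rw [Set.diff_diff] at hmviol
      have h1 := key_odd cond hSeq (hallodd c) hu hm hmviol
      refine hmax' _ h1 ?_
      have hdisj : Disjoint S ({u} ∪ m) := by
        rw [Set.disjoint_union_right, Set.disjoint_singleton_right]
        exact ⟨fun h => (sVal_subset c hu) h,
          Set.disjoint_left.mpr (fun x hx hxm => (sVal_subset c ((hm hxm).1)) hx)⟩
      rw [Set.ncard_union_eq hdisj (Set.toFinite _) (Set.toFinite _)]
      have : 1 ≤ ({u} ∪ m).ncard := by
        have : ({u} : Set W) ⊆ {u} ∪ m := Set.subset_union_left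
        have h2 := Set.ncard_le_ncard this (Set.toFinite _)
        rw [Set.ncard_singleton] at h2
        omega
      omega
    -- number of components equals ncard S
    have hcount : Nat.card (H.induce Sᶜ).ConnectedComponent = S.ncard := by
      rw [← hSeq, oddC]
      exact (Nat.card_congr (Equiv.subtypeUnivEquiv hallodd)).symm
    -- Hall setup
    set t : (H.induce Sᶜ).ConnectedComponent → Finset W :=
      fun c => Finset.univ.filter (fun w => w ∈ S ∧ ∃ v ∈ sVal c, H.Adj v w) with ht
    have hall_cond : ∀ T : Finset (H.induce Sᶜ).ConnectedComponent,
        T.card ≤ (T.biUnion t).card := by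
      intro T
      set S₀ : Set W := ↑(T.biUnion t) with hS₀
      have hS₀S : S₀ ⊆ S := by
        intro w hw
        rw [hS₀] at hw
        simp only [Finset.coe_biUnion, Set.mem_iUnion, Finset.mem_coe, ht,
          Finset.mem_filter] at hw
        obtain ⟨c, -, -, hwS, -⟩ := hw
        exact hwS
      have hrs : Sᶜ ⊆ S₀ᶜ := Set.compl_subset_compl.mpr hS₀S
      have hFup : ∀ c ∈ T, ∃ D : (H.induce S₀ᶜ).ConnectedComponent, sVal D = sVal c := by
        intro c hcT
        apply core_up hrs c
        intro v w hv hw hadj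
        by_contra hwS
        apply hw
        rw [hS₀]
        simp only [Finset.coe_biUnion, Set.mem_iUnion, Finset.mem_coe]
        refine ⟨c, hcT, ?_⟩
        rw [ht]
        simp only [Finset.mem_filter, Finset.mem_univ, true_and]
        exact ⟨not_not.mp (fun h => hwS h), v, hv, hadj⟩
      have key : ∀ c : {c // c ∈ T},
          ∃ D : {D : (H.induce S₀ᶜ).ConnectedComponent // Odd (Nat.card D.supp)},
            sVal D.1 = sVal c.1 := by
        rintro ⟨c, hcT⟩
        obtain ⟨D, hD⟩ := hFup c hcT
        exact ⟨⟨D, (card_supp_eq_of_sVal hD) ▸ hallodd c⟩, hD⟩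
      choose F hF using key
      have hFinj : Injective F := by
        intro c₁ c₂ h
        apply Subtype.ext
        apply sVal_injective
        rw [← hF c₁, ← hF c₂, h]
      have h1 : T.card = Nat.card {c // c ∈ T} := by
        rw [Nat.card_eq_fintype_card, Fintype.card_coe]
      have h2 : Nat.card {D : (H.induce S₀ᶜ).ConnectedComponent // Odd (Nat.card D.supp)}
          ≤ S₀.ncard := by
        have := cond S₀
        rwa [oddC] at this
      have h3 : S₀.ncard = (T.biUnion t).card := by rw [hS₀, Set.ncard_coe_finset]
      calc T.card = Nat.card {c // c ∈ T} := h1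
        _ ≤ Nat.card {D : (H.induce S₀ᶜ).ConnectedComponent // Odd (Nat.card D.supp)} :=
            Nat.card_le_card_of_injective F hFinj
        _ ≤ S₀.ncard := h2
        _ = (T.biUnion t).card := h3
    obtain ⟨f, hfinj, hft⟩ := (Finset.all_card_le_biUnion_card_iff_existsInjective' t).mp hall_cond
    have hfS : ∀ c, f c ∈ S := by
      intro c
      have := hft c
      rw [ht] at this
      simp only [Finset.mem_filter] at this
      exact this.2.1
    have hfadj : ∀ c, ∃ v ∈ sVal c, H.Adj v (f c) := by
      intro c
      have := hft c
      rw [ht] at this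
      simp only [Finset.mem_filter] at this
      exact this.2.2
    choose vc hvc hadjc using hfadj
    have hrange : Set.range f = S := by
      have hcr : (Set.range f).ncard = S.ncard := by
        rw [← Nat.card_coe_set_eq, Nat.card_range_of_injective hfinj, hcount]
      exact Set.eq_of_subset_of_ncard_le (Set.range_subset_iff.mpr hfS) hcr.ge (Set.toFinite _)
    -- perfect matchings of components minus chosen representative
    have hPMc : ∀ c, ∃ M : (H.induce (sVal c \ {vc c})).Subgraph, M.IsPerfectMatching :=
      fun c => hFC c (vc c) (hvc c)
    choose P hP using hPMc
    let emb : ∀ d : Set W, H.induce d →g H := fun d => ⟨Subtype.val, fun {a b} h => h⟩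
    let Mc : (H.induce Sᶜ).ConnectedComponent → H.Subgraph :=
      fun c => H.subgraphOfAdj (hadjc c) ⊔ (P c).map (emb _)
    have hPverts : ∀ c, ((P c).map (emb (sVal c \ {vc c}))).verts = sVal c \ {vc c} := by
      intro c
      rw [Subgraph.map_verts]
      have : (P c).verts = Set.univ := Set.eq_univ_of_forall (hP c).2
      rw [this, Set.image_univ]
      exact Subtype.range_coe
    have hMcverts : ∀ c, (Mc c).verts = {vc c, f c} ∪ (sVal c \ {vc c}) := by
      intro c
      show (H.subgraphOfAdj (hadjc c)).verts ∪ _ = _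
      rw [subgraphOfAdj_verts, hPverts c]
    have hMcverts' : ∀ c, (Mc c).verts ⊆ insert (f c) (sVal c) := by
      intro c w hw
      rw [hMcverts c] at hw
      rcases hw with (rfl | rfl) | ⟨hw, -⟩
      · exact Set.mem_insert_iff.mpr (Or.inr (hvc c))
      · exact Set.mem_insert _ _
      · exact Set.mem_insert_iff.mpr (Or.inr hw)
    have hfnotc : ∀ (c c' : (H.induce Sᶜ).ConnectedComponent), f c ∉ sVal c' := by
      intro c c' h
      exact (sVal_subset c' h) (hfS c)
    have hMcM : ∀ c, (Mc c).IsMatching := by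
      intro c
      apply Subgraph.IsMatching.sup (Subgraph.IsMatching.subgraphOfAdj _)
        ((hP c).1.map (emb _) Subtype.val_injective)
      apply Set.disjoint_of_subset (Subgraph.support_subset_verts _)
        (Subgraph.support_subset_verts _)
      rw [subgraphOfAdj_verts, hPverts c]
      rw [Set.disjoint_left]
      rintro x (rfl | rfl)
      · exact fun h => h.2 rfl
      · exact fun h => hfnotc c c h.1
    have hpairwise : Pairwise fun c c' => Disjoint (Mc c).support (Mc c').support := by
      intro c c' hne
      apply Set.disjoint_of_subset
        ((Subgraph.support_subset_verts _).trans (hMcverts' c))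
        ((Subgraph.support_subset_verts _).trans (hMcverts' c'))
      rw [Set.disjoint_left]
      rintro x (rfl | hx)
      · rintro (h | h)
        · exact hne (hfinj h)
        · exact hfnotc c c' h
      · rintro (rfl | hx')
        · exact hfnotc c' c hx
        · exact hne (sVal_eq_of_mem hx hx')
    refine ⟨⨆ c, Mc c, Subgraph.IsMatching.iSup hMcM hpairwise, ?_⟩
    intro w
    rw [Subgraph.verts_iSup, Set.mem_iUnion]
    by_cases hwS : w ∈ S
    · obtain ⟨c, rfl⟩ := hrange.ge hwS
      exact ⟨c, (hMcverts c) ▸ Or.inl (Or.inr rfl)⟩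
    · set c := (H.induce Sᶜ).connectedComponentMk ⟨w, hwS⟩ with hc
      have hwc : w ∈ sVal c := ⟨⟨w, hwS⟩, rfl, rfl⟩
      refine ⟨c, (hMcverts c) ▸ ?_⟩
      by_cases hwv : w = vc c
      · exact Or.inl (Or.inl hwv)
      · exact Or.inr ⟨hwc, hwv⟩


theorem tutte {W : Type u} [Fintype W] (H : SimpleGraph W)
    (cond : ∀ x : Set W, oddC H xᶜ ≤ x.ncard) : ∃ M : H.Subgraph, M.IsPerfectMatching :=
  tutte_aux (Fintype.card W) H le_rfl cond

end Stmt2Work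

/-- A graph is factor-critical if deleting any single vertex leaves a graph
with a perfect matching. -/
def IsFactorCritical {W : Type*} (H : SimpleGraph W) : Prop :=
  ∀ u : W, ∃ M : (H.induce {w | w ≠ u}).Subgraph, M.IsPerfectMatching

open Stmt2Work in
/-- If `B` is a maximal barrier of a graph `G` with a perfect matching,
then every connected component of `G − B` is factor-critical. -/
theorem stmt_2 {V : Type*} [Fintype V] (G : SimpleGraph V)
    (hpm : HasPerfectMatching G) (B : Set V) (hB : IsBarrier G B)
    (hmax : ∀ B' : Set V, IsBarrier G B' → B ⊆ B' → B' = B)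
    (c : (G.induce (Bᶜ : Set V)).ConnectedComponent) :
    IsFactorCritical ((G.induce (Bᶜ : Set V)).induce c.supp) := by
  classical
  obtain ⟨M, hM⟩ := hpm
  have hub : ∀ x : Set V, oddC G xᶜ ≤ x.ncard := by
    intro x
    have := pm_oddC_le hM x
    rwa [Nat.card_coe_set_eq] at this
  have hBeq : oddC G Bᶜ = B.ncard := by
    rw [oddC]
    exact hB.2.trans (Nat.card_coe_set_eq B)
  -- every component is odd
  have hodd : Odd (Nat.card c.supp) := by
    by_contra hodd
    obtain ⟨v, hv⟩ := sVal_nonempty c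
    have h1 := key_even hub hBeq hodd hv
    have hBsub : B ⊆ B ∪ {v} := Set.subset_union_left
    have hbar : IsBarrier G (B ∪ {v}) := by
      refine ⟨hB.1.mono hBsub, ?_⟩
      rw [show Nat.card {c : (G.induce ((B ∪ {v})ᶜ : Set V)).ConnectedComponent //
          Odd (Nat.card c.supp)} = oddC G (B ∪ {v})ᶜ from rfl, h1, Nat.card_coe_set_eq]
    have heq := hmax _ hbar hBsub
    have : v ∈ B := heq ▸ (Set.mem_union_right _ rfl)
    exact (sVal_subset c hv) this
  intro u
  set uval : V := ((u : ↥(Bᶜ : Set V)) : V) with huval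
  have hu : uval ∈ sVal c := ⟨(u : ↥(Bᶜ : Set V)), u.2, rfl⟩
  -- perfect matching of the flattened graph
  have hPM : ∃ M : (G.induce (sVal c \ {uval})).Subgraph, M.IsPerfectMatching := by
    by_contra hno
    have hviol : ∃ x : Set ↥(sVal c \ {uval}),
        x.ncard < oddC (G.induce (sVal c \ {uval})) xᶜ := by
      by_contra hcond
      push_neg at hcond
      exact hno (tutte _ hcond)
    obtain ⟨m, hm, hmviol⟩ := violator_flat hviol
    rw [Set.diff_diff] at hmviol
    have h1 := key_odd hub hBeq hodd hu hm hmviol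
    have hBsub : B ⊆ B ∪ ({uval} ∪ m) := Set.subset_union_left
    have hbar : IsBarrier G (B ∪ ({uval} ∪ m)) := by
      refine ⟨hB.1.mono hBsub, ?_⟩
      rw [show Nat.card {c : (G.induce ((B ∪ ({uval} ∪ m))ᶜ : Set V)).ConnectedComponent //
          Odd (Nat.card c.supp)} = oddC G (B ∪ ({uval} ∪ m))ᶜ from rfl, h1,
        Nat.card_coe_set_eq]
    have heq := hmax _ hbar hBsub
    have : uval ∈ B := heq ▸ (Set.mem_union_right _ (Set.mem_union_left _ rfl))
    exact (u : ↥(Bᶜ : Set V)).2 this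
  -- transport through the isomorphism chain
  have hset : Subtype.val '' (Subtype.val ''
      ({w : ↥c.supp | w ≠ u} : Set ↥c.supp)) = sVal c \ {uval} := by
    ext v
    constructor
    · rintro ⟨x, ⟨w, hw, rfl⟩, rfl⟩
      refine ⟨⟨(w : ↥(Bᶜ : Set V)), w.2, rfl⟩, ?_⟩
      intro hv
      apply hw
      apply Subtype.val_injective
      apply Subtype.val_injective
      exact hv
    · rintro ⟨⟨x, hx, rfl⟩, hne⟩
      exact ⟨x, ⟨⟨x, hx⟩, fun h => hne (congrArg (Subtype.val ∘ Subtype.val) h), rfl⟩, rfl⟩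
  have iso1 := induceInduceIso (G.induce (Bᶜ : Set V)) c.supp {w : ↥c.supp | w ≠ u}
  have iso2 := induceInduceIso G (Bᶜ : Set V)
    (Subtype.val '' ({w : ↥c.supp | w ≠ u} : Set ↥c.supp))
  exact pm_transport (iso1.trans iso2) (hset ▸ hPM)
end

section
/- Let G be a simple matching covered graph that contains a complete subgraph H with at least 5 vertices. Then for any two distinct edges of H that share a common endpoint, at least one of them is removable in G. -/
open SimpleGraph

set_option linter.unusedSectionVars false
set_option linter.unusedVariables false



section Aux
variable {V : Type*} {G : SimpleGraph V}

noncomputable def pmFun {M : G.Subgraph} (hM : M.IsPerfectMatching) (v : V) : V :=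
  (hM.1 (hM.2 v)).exists.choose

lemma pmFun_adj {M : G.Subgraph} (hM : M.IsPerfectMatching) (v : V) :
    M.Adj v (pmFun hM v) := (hM.1 (hM.2 v)).exists.choose_spec

lemma pmFun_eq {M : G.Subgraph} (hM : M.IsPerfectMatching) {v w : V} (h : M.Adj v w) :
    pmFun hM v = w := (hM.1 (hM.2 v)).unique (pmFun_adj hM v) h

lemma pmFun_invol {M : G.Subgraph} (hM : M.IsPerfectMatching) (v : V) :
    pmFun hM (pmFun hM v) = v := pmFun_eq hM ((pmFun_adj hM v).symm)

lemma pmFun_gadj {M : G.Subgraph} (hM : M.IsPerfectMatching) (v : V) :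
    G.Adj v (pmFun hM v) := M.adj_sub (pmFun_adj hM v)

lemma pmFun_adj_iff {M : G.Subgraph} (hM : M.IsPerfectMatching) {v w : V} :
    M.Adj v w ↔ pmFun hM v = w :=
  ⟨pmFun_eq hM, fun h => h ▸ pmFun_adj hM v⟩

def mkPM (h : V → V) (hadj : ∀ v, G.Adj v (h v)) (hinv : ∀ v, h (h v) = v) : G.Subgraph where
  verts := Set.univ
  Adj v w := h v = w
  adj_sub := fun {v w} hvw => hvw ▸ hadj v
  edge_vert := fun _ => Set.mem_univ _
  symm := ⟨fun v w hvw => by subst hvw; exact hinv v⟩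

lemma mkPM_isPerfectMatching (h : V → V) (hadj : ∀ v, G.Adj v (h v))
    (hinv : ∀ v, h (h v) = v) : (mkPM (G := G) h hadj hinv).IsPerfectMatching :=
  ⟨fun v _ => ⟨h v, rfl, fun y (hy : h v = y) => hy.symm⟩, fun v => Set.mem_univ v⟩

lemma mkPM_adj (h : V → V) (hadj : ∀ v, G.Adj v (h v)) (hinv : ∀ v, h (h v) = v)
    (v w : V) : (mkPM (G := G) h hadj hinv).Adj v w ↔ h v = w := Iff.rfl

end Aux



section Seq
variable {V : Type*}

def altSeq (f g : V → V) (x : V) : ℕ → V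
  | 0 => x
  | n+1 => if Even n then f (altSeq f g x n) else g (altSeq f g x n)

variable (f g : V → V) (x : V)

lemma altSeq_zero : altSeq f g x 0 = x := rfl

lemma altSeq_succ_even {n : ℕ} (h : Even n) :
    altSeq f g x (n+1) = f (altSeq f g x n) := by simp [altSeq, h]

lemma altSeq_succ_odd {n : ℕ} (h : ¬ Even n) :
    altSeq f g x (n+1) = g (altSeq f g x n) := by simp [altSeq, h]

variable (hf : ∀ v, f (f v) = v) (hg : ∀ v, g (g v) = v)

include hf hg in
lemma altSeq_back {m n : ℕ} (h : altSeq f g x (m+1) = altSeq f g x (n+1))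
    (hpar : Even m ↔ Even n) : altSeq f g x m = altSeq f g x n := by
  by_cases hm : Even m
  · rw [altSeq_succ_even f g x hm, altSeq_succ_even f g x (hpar.mp hm)] at h
    have := congrArg f h
    rwa [hf, hf] at this
  · rw [altSeq_succ_odd f g x hm, altSeq_succ_odd f g x (fun hn => hm (hpar.mpr hn))] at h
    have := congrArg g h
    rwa [hg, hg] at this

include hf hg in
lemma altSeq_back_shift {m d : ℕ} (h : altSeq f g x m = altSeq f g x (m + d))
    (hd : Even d) : altSeq f g x 0 = altSeq f g x d := by
  induction m with
  | zero => simpa using h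
  | succ k ih =>
    refine ih (altSeq_back f g x hf hg ?_ ?_)
    · rw [show k + 1 + d = (k + d) + 1 by omega] at h; exact h
    · simp [Nat.even_add, hd.two_dvd]
      tauto

include hf hg in
lemma altSeq_return [Finite V] :
    ∃ L, 0 < L ∧ Even L ∧ altSeq f g x L = x := by
  classical
  cases nonempty_fintype V
  set u := altSeq f g x with hu
  have hmap : ∃ k k' : Fin (2 * Fintype.card V + 1), k ≠ k' ∧
      (u k, decide (Even (k : ℕ))) = (u k', decide (Even (k' : ℕ)))  := by
    have hcard : Fintype.card (V × Bool) < Fintype.card (Fin (2 * Fintype.card V + 1)) := by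
      simp [Fintype.card_prod]
      omega
    obtain ⟨k, k', hne, heq⟩ := Fintype.exists_ne_map_eq_of_card_lt
      (fun k : Fin (2 * Fintype.card V + 1) => (u k, decide (Even (k : ℕ)))) hcard
    exact ⟨k, k', hne, heq⟩
  obtain ⟨k, k', hne, heq⟩ := hmap
  rw [Prod.ext_iff] at heq
  have hpar : Even (k : ℕ) ↔ Even (k' : ℕ) := by
    have := heq.2
    simpa [decide_eq_decide] using this
  -- wlog k < k'
  rcases lt_or_gt_of_ne (fun h => hne (Fin.ext h)) with hlt | hlt
  · have hd : Even ((k' : ℕ) - k) := (Nat.even_sub hlt.le).mpr hpar.symm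
    have : u 0 = u ((k' : ℕ) - k) := by
      refine altSeq_back_shift f g x hf hg (m := (k : ℕ)) ?_ hd
      rw [show (k : ℕ) + ((k' : ℕ) - (k : ℕ)) = (k' : ℕ) by omega]
      exact heq.1
    exact ⟨(k' : ℕ) - k, by omega, hd, this.symm⟩
  · have hd : Even ((k : ℕ) - k') := (Nat.even_sub hlt.le).mpr hpar
    have : u 0 = u ((k : ℕ) - k') := by
      refine altSeq_back_shift f g x hf hg (m := (k' : ℕ)) ?_ hd
      rw [show (k' : ℕ) + ((k : ℕ) - (k' : ℕ)) = (k : ℕ) by omega]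
      exact heq.1.symm
    exact ⟨(k : ℕ) - k', by omega, hd, this.symm⟩

end Seq

section Seq2
variable {V : Type*} (f g : V → V) (x : V)
variable (hf : ∀ v, f (f v) = v) (hg : ∀ v, g (g v) = v)

include hf in
lemma altSeq_f_even {j : ℕ} (h : Even j) : f (altSeq f g x j) = altSeq f g x (j+1) :=
  (altSeq_succ_even f g x h).symm

include hf in
lemma altSeq_f_odd {j : ℕ} (h : ¬ Even j) : f (altSeq f g x j) = altSeq f g x (j-1) := by
  have h0 : j ≠ 0 := by rintro rfl; exact h (by simp)
  obtain ⟨j, rfl⟩ : ∃ k, j = k + 1 := ⟨j - 1, by omega⟩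
  have he : Even j := by
    rcases Nat.even_or_odd j with h' | h'
    · exact h'
    · exact absurd (by simpa [Nat.even_add_one] using h') h
  rw [altSeq_succ_even f g x he, hf]
  simp

include hg in
lemma altSeq_g_odd {j : ℕ} (h : ¬ Even j) : g (altSeq f g x j) = altSeq f g x (j+1) :=
  (altSeq_succ_odd f g x h).symm

include hg in
lemma altSeq_g_even {j : ℕ} (h : Even j) (h0 : 0 < j) :
    g (altSeq f g x j) = altSeq f g x (j-1) := by
  obtain ⟨j, rfl⟩ : ∃ k, j = k + 1 := ⟨j - 1, by omega⟩
  have ho : ¬ Even j := by simpa [Nat.even_add_one] using h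
  rw [altSeq_succ_odd f g x ho, hg]
  simp

include hf hg in
lemma altSeq_inj (hfne : ∀ v, f v ≠ v) (hgne : ∀ v, g v ≠ v) {L : ℕ}
    (hLx : altSeq f g x L = x) (hLeven : Even L)
    (hmin : ∀ k, 0 < k → k < L → Even k → altSeq f g x k ≠ x) :
    ∀ {m n}, m < n → n < L → altSeq f g x m ≠ altSeq f g x n := by
  intro m n hmn hnL heq
  set u := altSeq f g x with hu
  by_cases hpar : Even m ↔ Even n
  · have hd : Even (n - m) := (Nat.even_sub hmn.le).mpr hpar.symm
    have h0 : u 0 = u (n - m) := by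
      refine altSeq_back_shift f g x hf hg (m := m) ?_ hd
      rw [show m + (n - m) = n by omega]
      exact heq
    exact hmin (n - m) (by omega) (by omega) hd h0.symm
  · -- palindrome argument
    have hparadd : (m + n) % 2 = 1 := by
      rw [Nat.even_iff, Nat.even_iff] at hpar
      omega
    have claim : ∀ k, k ≤ n - m → u (m + k) = u (n - k) := by
      intro k
      induction k with
      | zero => intro _; simpa using heq
      | succ k ih =>
        intro hk1
        have prev := ih (by omega)
        by_cases hmk : Even (m + k)
        · have hmk2 : (m + k) % 2 = 0 := Nat.even_iff.mp hmk
          have hnke : Even (n - k - 1) := by rw [Nat.even_iff]; omega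
          have e1 : u (m + k + 1) = f (u (m + k)) := altSeq_succ_even f g x hmk
          have e2 : u (n - k) = f (u (n - k - 1)) := by
            rw [show n - k = (n - k - 1) + 1 by omega]
            exact altSeq_succ_even f g x hnke
          rw [show m + (k+1) = m + k + 1 by omega, e1, prev, e2, hf,
            show n - (k+1) = n - k - 1 by omega]
        · have hmk2 : (m + k) % 2 = 1 := by
            rw [Nat.even_iff] at hmk; omega
          have hnke : ¬ Even (n - k - 1) := by rw [Nat.even_iff]; omega
          have e1 : u (m + k + 1) = g (u (m + k)) := altSeq_succ_odd f g x hmk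
          have e2 : u (n - k) = g (u (n - k - 1)) := by
            rw [show n - k = (n - k - 1) + 1 by omega]
            exact altSeq_succ_odd f g x hnke
          rw [show m + (k+1) = m + k + 1 by omega, e1, prev, e2, hg,
            show n - (k+1) = n - k - 1 by omega]
    set k0 := (n - m - 1) / 2 with hk0
    have hodd : (n - m) % 2 = 1 := by omega
    have hc1 : u (m + k0) = u (n - k0) := claim k0 (by omega)
    have hc2 : u (n - k0) = u (m + k0 + 1) := by rw [show n - k0 = m + k0 + 1 by omega]
    have : u (m + k0) = u (m + k0 + 1) := hc1.trans hc2
    by_cases hp : Even (m + k0)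
    · have h2 : u (m + k0 + 1) = f (u (m + k0)) := altSeq_succ_even f g x hp
      rw [h2] at this
      exact hfne _ this.symm
    · have h2 : u (m + k0 + 1) = g (u (m + k0)) := altSeq_succ_odd f g x hp
      rw [h2] at this
      exact hgne _ this.symm

end Seq2
section Flips
variable {V : Type*} {G : SimpleGraph V}

lemma flipA (f g : V → V) (x : V)
    (hf : ∀ v, f (f v) = v) (hg : ∀ v, g (g v) = v)
    (hfG : ∀ v, G.Adj v (f v)) (hgG : ∀ v, G.Adj v (g v))
    {L : ℕ} (hLx : altSeq f g x L = x) (hLe : Even L) (hL4 : 4 ≤ L)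
    (hmin : ∀ k, 0 < k → k < L → Even k → altSeq f g x k ≠ x)
    {t : ℕ} (hodd : ¬ Even t) (ht3 : 3 ≤ t) (htL : t < L)
    (hchord : G.Adj x (altSeq f g x t)) :
    ∃ Q : G.Subgraph, Q.IsPerfectMatching ∧ Q.Adj x (altSeq f g x t) ∧
      ∀ v, v ≠ x → v ≠ altSeq f g x t →
        (∀ r, 0 < r → r < t → altSeq f g x r ≠ v) → Q.Adj v (f v) := by
  classical
  set u := altSeq f g x with hudef
  have hfne : ∀ v, f v ≠ v := fun v => (hfG v).ne'
  have hgne : ∀ v, g v ≠ v := fun v => (hgG v).ne'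
  have INJ : ∀ {m n}, m < n → n < L → u m ≠ u n :=
    altSeq_inj f g x hf hg hfne hgne hLx hLe hmin
  have uinj : ∀ {m n : ℕ}, m < L → n < L → u m = u n → m = n := by
    intro m n hm hn he
    rcases lt_trichotomy m n with h|h|h
    · exact absurd he (INJ h hn)
    · exact h
    · exact absurd he.symm (INJ h hm)
  have hu0 : u 0 = x := rfl
  have pf : ∀ j : ℕ, Even j → f (u j) = u (j+1) := fun j hj => altSeq_f_even f g x hf hj
  have pfo : ∀ j : ℕ, ¬ Even j → f (u j) = u (j-1) := fun j hj => altSeq_f_odd f g x hf hj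
  have pgo : ∀ j : ℕ, ¬ Even j → g (u j) = u (j+1) := fun j hj => altSeq_g_odd f g x hg hj
  have pge : ∀ j : ℕ, Even j → 0 < j → g (u j) = u (j-1) :=
    fun j hj h0 => altSeq_g_even f g x hg hj h0
  set reg : V → Prop := fun v => ∃ r, 0 < r ∧ r < t ∧ u r = v with hregdef
  have husx : u t ≠ x := fun hcon =>
    (by omega : t ≠ 0) (uinj htL (by omega) (hcon.trans hu0.symm))
  set hA : V → V := fun v =>
    if v = x then u t else if v = u t then x else if reg v then g v else f v with hhA
  have hAx : hA x = u t := by simp [hhA]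
  have hAut : hA (u t) = x := by simp [hhA, husx]
  have hAreg : ∀ v, reg v → hA v = g v := by
    rintro v ⟨r, h0, hrt, rfl⟩
    have h1 : u r ≠ x := fun hcon =>
      (by omega : r ≠ 0) (uinj (by omega) (by omega) (hcon.trans hu0.symm))
    have h2 : u r ≠ u t := fun hcon => (by omega : r ≠ t) (uinj (by omega) htL hcon)
    simp only [hhA]; rw [if_neg h1, if_neg h2, if_pos ⟨r, h0, hrt, rfl⟩]
  have hAelse : ∀ v, v ≠ x → v ≠ u t → ¬ reg v → hA v = f v := by
    intro v h1 h2 h3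
    simp only [hhA]; rw [if_neg h1, if_neg h2, if_neg h3]
  have hregG : ∀ v, reg v → reg (g v) ∧ g v ≠ x ∧ g v ≠ u t := by
    rintro v ⟨r, h0, hrt, rfl⟩
    by_cases hr : Even r
    · have hr2 : 2 ≤ r := by rw [Nat.even_iff] at hr; omega
      rw [pge r hr h0]
      refine ⟨⟨r-1, by omega, by omega, rfl⟩, ?_, ?_⟩
      · exact fun hcon => (by omega : r - 1 ≠ 0) (uinj (by omega) (by omega) (hcon.trans hu0.symm))
      · exact fun hcon => (by omega : r - 1 ≠ t) (uinj (by omega) htL hcon)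
    · have hr2 : r + 1 < t := by rw [Nat.even_iff] at hr hodd; omega
      rw [pgo r hr]
      refine ⟨⟨r+1, by omega, hr2, rfl⟩, ?_, ?_⟩
      · exact fun hcon => (by omega : r + 1 ≠ 0) (uinj (by omega) (by omega) (hcon.trans hu0.symm))
      · exact fun hcon => (by omega : r + 1 ≠ t) (uinj (by omega) htL hcon)
  have helseF : ∀ v, v ≠ x → v ≠ u t → ¬ reg v →
      (f v ≠ x ∧ f v ≠ u t ∧ ¬ reg (f v)) := by
    intro v hvx hvt hvr
    refine ⟨?_, ?_, ?_⟩
    · intro hcon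
      have hv : v = u 1 := by
        have : f (u 0) = u 1 := pf 0 (by simp)
        rw [← hf v, hcon]; exact this
      exact hvr ⟨1, one_pos, by omega, hv.symm⟩
    · intro hcon
      have hv : v = u (t-1) := by rw [← hf v, hcon, pfo t hodd]
      exact hvr ⟨t-1, by omega, by omega, hv.symm⟩
    · rintro ⟨r, h0, hrt, hrv⟩
      by_cases hr : Even r
      · have hv : v = u (r+1) := by rw [← hf v, ← hrv, pf r hr]
        rcases eq_or_ne (r+1) t with he | hne
        · exact hvt (by rw [hv, he])
        · exact hvr ⟨r+1, by omega, by omega, hv.symm⟩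
      · have hv : v = u (r-1) := by rw [← hf v, ← hrv, pfo r hr]
        rcases eq_or_ne r 1 with he | hne
        · exact hvx (by rw [hv, he]; exact hu0)
        · exact hvr ⟨r-1, by omega, by omega, hv.symm⟩
  have hAadj : ∀ v, G.Adj v (hA v) := by
    intro v
    by_cases h1 : v = x
    · subst h1; rw [hAx]; exact hchord
    · by_cases h2 : v = u t
      · subst h2; rw [hAut]; exact hchord.symm
      · by_cases h3 : reg v
        · rw [hAreg v h3]; exact hgG v
        · rw [hAelse v h1 h2 h3]; exact hfG v
  have hAinv : ∀ v, hA (hA v) = v := by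
    intro v
    by_cases h1 : v = x
    · subst h1; rw [hAx, hAut]
    · by_cases h2 : v = u t
      · subst h2; rw [hAut, hAx]
      · by_cases h3 : reg v
        · obtain ⟨hr1, hr2, hr3⟩ := hregG v h3
          rw [hAreg v h3, hAreg (g v) hr1, hg]
        · obtain ⟨he1, he2, he3⟩ := helseF v h1 h2 h3
          rw [hAelse v h1 h2 h3, hAelse (f v) he1 he2 he3, hf]
  refine ⟨mkPM hA hAadj hAinv, mkPM_isPerfectMatching _ _ _, hAx, ?_⟩
  intro v hv1 hv2 hv3
  show hA v = f v
  exact hAelse v hv1 hv2 (by rintro ⟨r, h0, hrt, hru⟩; exact hv3 r h0 hrt hru)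

lemma flipB (f g : V → V) (x : V)
    (hf : ∀ v, f (f v) = v) (hg : ∀ v, g (g v) = v)
    (hfG : ∀ v, G.Adj v (f v)) (hgG : ∀ v, G.Adj v (g v))
    {L : ℕ} (hLx : altSeq f g x L = x) (hLe : Even L) (hL4 : 4 ≤ L)
    (hmin : ∀ k, 0 < k → k < L → Even k → altSeq f g x k ≠ x)
    {t : ℕ} (hte : Even t) (ht2 : 2 ≤ t) (htL : t < L)
    (hchord : G.Adj (altSeq f g x 1) (altSeq f g x t)) :
    ∃ Q : G.Subgraph, Q.IsPerfectMatching ∧ Q.Adj (altSeq f g x 1) (altSeq f g x t) ∧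
      ∀ v, v ≠ altSeq f g x 1 → v ≠ altSeq f g x t → v ≠ x →
        (∀ r, t < r → r < L → altSeq f g x r ≠ v) → Q.Adj v (f v) := by
  classical
  set u := altSeq f g x with hudef
  have hfne : ∀ v, f v ≠ v := fun v => (hfG v).ne'
  have hgne : ∀ v, g v ≠ v := fun v => (hgG v).ne'
  have INJ : ∀ {m n}, m < n → n < L → u m ≠ u n :=
    altSeq_inj f g x hf hg hfne hgne hLx hLe hmin
  have uinj : ∀ {m n : ℕ}, m < L → n < L → u m = u n → m = n := by
    intro m n hm hn he
    rcases lt_trichotomy m n with h|h|h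
    · exact absurd he (INJ h hn)
    · exact h
    · exact absurd he.symm (INJ h hm)
  have hu0 : u 0 = x := rfl
  have pf : ∀ j : ℕ, Even j → f (u j) = u (j+1) := fun j hj => altSeq_f_even f g x hf hj
  have pfo : ∀ j : ℕ, ¬ Even j → f (u j) = u (j-1) := fun j hj => altSeq_f_odd f g x hf hj
  have pgo : ∀ j : ℕ, ¬ Even j → g (u j) = u (j+1) := fun j hj => altSeq_g_odd f g x hg hj
  have pge : ∀ j : ℕ, Even j → 0 < j → g (u j) = u (j-1) :=
    fun j hj h0 => altSeq_g_even f g x hg hj h0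
  have htL2 : t < L - 1 := by rw [Nat.even_iff] at hte hLe; omega
  have pgx : g x = u (L-1) := by
    have hodd : ¬ Even (L - 1) := by rw [Nat.even_iff] at hLe ⊢; omega
    have h2 : u (L-1+1) = g (u (L-1)) := altSeq_succ_odd f g x hodd
    rw [show L - 1 + 1 = L by omega, hLx] at h2
    rw [h2, hg]
  set greg : V → Prop := fun v => v = x ∨ ∃ r, t < r ∧ r < L ∧ u r = v with hgregdef
  have hut1 : u t ≠ u 1 := fun hcon => (by omega : t ≠ 1) (uinj htL (by omega) hcon)
  have hxu1 : x ≠ u 1 := fun hcon => (by omega : (0:ℕ) ≠ 1) (uinj (by omega) (by omega) hcon)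
  have hxut : x ≠ u t := fun hcon => (by omega : (0:ℕ) ≠ t) (uinj (by omega) htL hcon)
  set hB : V → V := fun v =>
    if v = u 1 then u t else if v = u t then u 1 else if greg v then g v else f v with hhB
  have hBy : hB (u 1) = u t := by simp [hhB]
  have hBut : hB (u t) = u 1 := by simp [hhB, hut1]
  have hBreg : ∀ v, greg v → v ≠ u 1 ∧ v ≠ u t ∧ hB v = g v := by
    intro v hv
    have h1 : v ≠ u 1 := by
      rcases hv with rfl | ⟨r, hr1, hr2, rfl⟩
      · exact hxu1
      · exact fun hcon => (by omega : r ≠ 1) (uinj hr2 (by omega) hcon)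
    have h2 : v ≠ u t := by
      rcases hv with rfl | ⟨r, hr1, hr2, rfl⟩
      · exact hxut
      · exact fun hcon => (by omega : r ≠ t) (uinj hr2 htL hcon)
    refine ⟨h1, h2, ?_⟩
    simp only [hhB]; rw [if_neg h1, if_neg h2, if_pos hv]
  have hBelse : ∀ v, v ≠ u 1 → v ≠ u t → ¬ greg v → hB v = f v := by
    intro v h1 h2 h3
    simp only [hhB]; rw [if_neg h1, if_neg h2, if_neg h3]
  have hregG : ∀ v, greg v → greg (g v) := by
    rintro v (rfl | ⟨r, hr1, hr2, rfl⟩)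
    · rw [pgx]; exact Or.inr ⟨L-1, by omega, by omega, rfl⟩
    · by_cases hr : Even r
      · have hrt2 : t + 2 ≤ r := by rw [Nat.even_iff] at hr hte; omega
        rw [pge r hr (by omega)]
        exact Or.inr ⟨r-1, by omega, by omega, rfl⟩
      · rcases eq_or_ne (r+1) L with he | hne
        · rw [pgo r hr, he, hLx]; exact Or.inl rfl
        · rw [pgo r hr]; exact Or.inr ⟨r+1, by omega, by omega, rfl⟩
  have helseF : ∀ v, v ≠ u 1 → v ≠ u t → ¬ greg v →
      (f v ≠ u 1 ∧ f v ≠ u t ∧ ¬ greg (f v)) := by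
    intro v hv1 hvt hvr
    refine ⟨?_, ?_, ?_⟩
    · intro hcon
      have hv : v = x := by
        have h2 : f (u 1) = u 0 := pfo 1 (by simp)
        rw [← hf v, hcon, h2, hu0]
      exact hvr (Or.inl hv)
    · intro hcon
      have hv : v = u (t+1) := by rw [← hf v, hcon, pf t hte]
      exact hvr (Or.inr ⟨t+1, by omega, by omega, hv.symm⟩)
    · rintro (hcon | ⟨r, hr1, hr2, hrv⟩)
      · exact hv1 (by rw [← hf v, hcon, ← hu0, pf 0 (by simp)])
      · by_cases hr : Even r
        · have hv : v = u (r+1) := by rw [← hf v, ← hrv, pf r hr]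
          have hrL : r + 1 < L := by rw [Nat.even_iff] at hr hLe; omega
          exact hvr (Or.inr ⟨r+1, by omega, hrL, hv.symm⟩)
        · have hv : v = u (r-1) := by rw [← hf v, ← hrv, pfo r hr]
          rcases eq_or_ne (r-1) t with he | hne
          · exact hvt (by rw [hv, he])
          · exact hvr (Or.inr ⟨r-1, by omega, by omega, hv.symm⟩)
  have hBadj : ∀ v, G.Adj v (hB v) := by
    intro v
    by_cases h1 : v = u 1
    · subst h1; rw [hBy]; exact hchord
    · by_cases h2 : v = u t
      · subst h2; rw [hBut]; exact hchord.symm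
      · by_cases h3 : greg v
        · rw [(hBreg v h3).2.2]; exact hgG v
        · rw [hBelse v h1 h2 h3]; exact hfG v
  have hBinv : ∀ v, hB (hB v) = v := by
    intro v
    by_cases h1 : v = u 1
    · subst h1; rw [hBy, hBut]
    · by_cases h2 : v = u t
      · subst h2; rw [hBut, hBy]
      · by_cases h3 : greg v
        · obtain ⟨_, _, he⟩ := hBreg v h3
          obtain ⟨hg1, hg2, hge⟩ := hBreg (g v) (hregG v h3)
          rw [he, hge, hg]
        · obtain ⟨he1, he2, he3⟩ := helseF v h1 h2 h3
          rw [hBelse v h1 h2 h3, hBelse (f v) he1 he2 he3, hf]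
  refine ⟨mkPM hB hBadj hBinv, mkPM_isPerfectMatching _ _ _, hBy, ?_⟩
  intro v hv1 hv2 hvx hv3
  show hB v = f v
  exact hBelse v hv1 hv2 (by
    rintro (rfl | ⟨r, hr1, hr2, hru⟩)
    · exact hvx rfl
    · exact hv3 r hr1 hr2 hru)

end Flips

lemma nonremovable_dep {V : Type*} {G : SimpleGraph V}
    (hmc : IsMatchingCovered G) {x y z : V}
    (hxy : G.Adj x y) (hxz : G.Adj x z) (hyz : G.Adj y z)
    (hnr : ¬ IsRemovable G x y) :
    ∃ a b, G.Adj a b ∧ ¬ s(a,b) = s(x,y) ∧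
      ∀ M : G.Subgraph, M.IsPerfectMatching → M.Adj a b → M.Adj x y := by
  classical
  set G' := G.deleteEdges {s(x,y)} with hG'
  have hadj' : ∀ {p q : V}, G'.Adj p q ↔ G.Adj p q ∧ ¬ s(p,q) = s(x,y) := by
    intro p q
    rw [hG', SimpleGraph.deleteEdges_adj]
    simp
  have h1 : ¬ s(x,z) = s(x,y) := by
    rw [Sym2.eq_iff]
    rintro (⟨-, h⟩ | ⟨h, -⟩)
    · exact hyz.ne' h
    · exact hxy.ne h
  have h2 : ¬ s(z,y) = s(x,y) := by
    rw [Sym2.eq_iff]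
    rintro (⟨h, -⟩ | ⟨h, -⟩)
    · exact hxz.ne' h
    · exact hyz.ne' h
  have h3 : ¬ s(y,z) = s(x,y) := by
    rw [Sym2.eq_iff]
    rintro (⟨h, -⟩ | ⟨-, h⟩)
    · exact hxy.ne h.symm
    · exact hxz.ne' h
  have h4 : ¬ s(z,x) = s(x,y) := by
    rw [Sym2.eq_iff]
    rintro (⟨h, -⟩ | ⟨h, -⟩)
    · exact hxz.ne' h
    · exact hyz.ne' h
  have hconn : G'.Connected := by
    rw [connected_iff]
    refine ⟨?_, hmc.1.nonempty⟩
    intro uu vv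
    obtain ⟨wlk⟩ := hmc.1.preconnected uu vv
    induction wlk with
    | nil => exact Reachable.refl _
    | @cons u v w h p ih =>
      refine Reachable.trans ?_ ih
      rcases em (s(u,v) = s(x,y)) with he | he
      · rw [Sym2.eq_iff] at he
        rcases he with ⟨rfl, rfl⟩ | ⟨rfl, rfl⟩
        · exact ((hadj'.mpr ⟨hxz, h1⟩).reachable).trans (hadj'.mpr ⟨hyz.symm, h2⟩).reachable
        · exact ((hadj'.mpr ⟨hyz, h3⟩).reachable).trans (hadj'.mpr ⟨hxz.symm, h4⟩).reachable
      · exact (hadj'.mpr ⟨h, he⟩).reachable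
  have hedge : G'.edgeSet.Nonempty :=
    ⟨s(x,z), by rw [SimpleGraph.mem_edgeSet]; exact hadj'.mpr ⟨hxz, h1⟩⟩
  have hnc : ¬ (∀ ⦃uu vv : V⦄, G'.Adj uu vv →
      ∃ M : G'.Subgraph, M.IsPerfectMatching ∧ M.Adj uu vv) := by
    intro hc
    exact hnr ⟨hconn, hedge, hc⟩
  push_neg at hnc
  obtain ⟨aa, bb, hab', hnm⟩ := hnc
  refine ⟨aa, bb, (hadj'.mp hab').1, (hadj'.mp hab').2, ?_⟩
  intro M hM hMab
  by_contra hMxy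
  have hle : M.spanningCoe ≤ G' := by
    intro p q hpq
    refine hadj'.mpr ⟨M.adj_sub hpq, ?_⟩
    intro he
    rw [Sym2.eq_iff] at he
    rcases he with ⟨hp, hq⟩ | ⟨hp, hq⟩
    · subst hp; subst hq; exact hMxy hpq
    · subst hp; subst hq; exact hMxy hpq.symm
  have hM' := (Subgraph.IsPerfectMatching.toSubgraph_iff hle).mpr hM
  have hM'ab : (G'.toSubgraph M.spanningCoe hle).Adj aa bb := by
    rw [toSubgraph_adj, Subgraph.spanningCoe_adj]
    exact hMab
  exact hnm _ hM' hM'ab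

lemma main_dep {V : Type*} [Fintype V] {G : SimpleGraph V}
    (hmc : IsMatchingCovered G) {x y w1 w2 a b : V}
    (hxy : G.Adj x y) (hxw1 : G.Adj x w1) (hxw2 : G.Adj x w2)
    (hyw1 : G.Adj y w1) (hyw2 : G.Adj y w2) (hw1w2 : G.Adj w1 w2)
    (hGab : G.Adj a b) (hnexy : ¬ s(a,b) = s(x,y))
    (P1 : ∀ M : G.Subgraph, M.IsPerfectMatching → M.Adj a b → M.Adj x y)
    {W : G.Subgraph} (hW : W.IsPerfectMatching) (hWw : W.Adj w1 w2) :
    W.Adj x y := by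
  classical
  by_contra hxyW
  obtain ⟨M1, hM1, hM1ab⟩ := hmc.2.2 hGab
  have hM1xy : M1.Adj x y := P1 M1 hM1 hM1ab
  set f := pmFun hM1 with hfdef
  set g := pmFun hW with hgdef
  have hf : ∀ v, f (f v) = v := pmFun_invol hM1
  have hg : ∀ v, g (g v) = v := pmFun_invol hW
  have hfG : ∀ v, G.Adj v (f v) := pmFun_gadj hM1
  have hgG : ∀ v, G.Adj v (g v) := pmFun_gadj hW
  have hfne : ∀ v, f v ≠ v := fun v => (hfG v).ne'
  have hgne : ∀ v, g v ≠ v := fun v => (hgG v).ne'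
  have hfx : f x = y := pmFun_eq hM1 hM1xy
  have hfy : f y = x := by rw [← hfx, hf]
  have hfa : f a = b := pmFun_eq hM1 hM1ab
  have hfb : f b = a := by rw [← hfa, hf]
  have hgw1 : g w1 = w2 := pmFun_eq hW hWw
  have hgw2 : g w2 = w1 := by rw [← hgw1, hg]
  -- distinctness
  have hax : a ≠ x := fun h => hnexy (by subst h; rw [← hfa, hfx])
  have hay : a ≠ y := fun h => hnexy (by subst h; rw [← hfa, hfy, Sym2.eq_swap])
  have hbx : b ≠ x := fun h => hay (by subst h; rw [← hfb, hfx])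
  have hby : b ≠ y := fun h => hax (by subst h; rw [← hfb, hfy])
  have hw1x : w1 ≠ x := hxw1.ne'
  have hw1y : w1 ≠ y := hyw1.ne'
  have hw2x : w2 ≠ x := hxw2.ne'
  have hw2y : w2 ≠ y := hyw2.ne'
  have hw12 : w1 ≠ w2 := hw1w2.ne
  set u := altSeq f g x with hudef
  have hu0 : u 0 = x := rfl
  have hu1 : u 1 = y := by
    have : u (0+1) = f (u 0) := altSeq_succ_even f g x (by simp)
    simpa [hu0, hfx] using this
  -- the return point
  obtain ⟨L0, hL00, hL0e, hL0x⟩ := altSeq_return f g x hf hg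
  have hLex : ∃ k, 0 < k ∧ Even k ∧ u k = x := ⟨L0, hL00, hL0e, hL0x⟩
  set L := Nat.find hLex with hLdef
  obtain ⟨hL0, hLe, hLx⟩ : 0 < L ∧ Even L ∧ u L = x := Nat.find_spec hLex
  have hmin : ∀ k, 0 < k → k < L → Even k → u k ≠ x := by
    intro k h1 h2 h3 h4
    exact Nat.find_min hLex h2 ⟨h1, h3, h4⟩
  have hL2 : L ≠ 2 := by
    intro h
    have h2 : u 2 = g (u 1) := altSeq_succ_odd f g x (by simp)
    have : g y = x := by rw [← hu1, ← h2, ← h, hLx]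
    have : W.Adj y x := by rw [hgdef] at this; exact this ▸ pmFun_adj hW y
    exact hxyW this.symm
  have hL4 : 4 ≤ L := by
    have := Nat.even_iff.mp hLe
    omega
  have INJ : ∀ {m n}, m < n → n < L → u m ≠ u n :=
    altSeq_inj f g x hf hg hfne hgne hLx hLe hmin
  have uinj : ∀ {m n : ℕ}, m < L → n < L → u m = u n → m = n := by
    intro m n hm hn he
    rcases lt_trichotomy m n with h|h|h
    · exact absurd he (INJ h hn)
    · exact h
    · exact absurd he.symm (INJ h hm)
  -- partner lemmas
  have pf : ∀ j : ℕ, Even j → f (u j) = u (j+1) := fun j hj => altSeq_f_even f g x hf hj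
  have pfo : ∀ j : ℕ, ¬ Even j → f (u j) = u (j-1) := fun j hj => altSeq_f_odd f g x hf hj
  have pgo : ∀ j : ℕ, ¬ Even j → g (u j) = u (j+1) := fun j hj => altSeq_g_odd f g x hg hj
  have pge : ∀ j : ℕ, Even j → 0 < j → g (u j) = u (j-1) :=
    fun j hj h0 => altSeq_g_even f g x hg hj h0
  have pgx : g x = u (L-1) := by
    have hodd : ¬ Even (L - 1) := by
      rw [Nat.even_iff] at hLe ⊢; omega
    have h2 : u (L-1+1) = g (u (L-1)) := altSeq_succ_odd f g x hodd
    rw [show L - 1 + 1 = L by omega, hLx] at h2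
    rw [h2, hg]
  set inSeq : V → Prop := fun v => ∃ j, j < L ∧ u j = v with hinSeqdef
  have hInF : ∀ v, inSeq v → inSeq (f v) := by
    rintro v ⟨j, hjL, rfl⟩
    by_cases hj : Even j
    · refine ⟨j+1, ?_, (pf j hj).symm⟩
      rw [Nat.even_iff] at hj hLe; omega
    · exact ⟨j-1, by omega, (pfo j hj).symm⟩
  have hInG : ∀ v, inSeq v → inSeq (g v) := by
    rintro v ⟨j, hjL, rfl⟩
    by_cases hj : Even j
    · rcases Nat.eq_zero_or_pos j with rfl | h0
      · refine ⟨L-1, by omega, ?_⟩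
        rw [hu0, pgx]
      · exact ⟨j-1, by omega, (pge j hj h0).symm⟩
    · rcases eq_or_ne (j+1) L with he | hne
      · refine ⟨0, by omega, ?_⟩
        rw [hu0, ← hLx, ← he, pgo j hj]
      · exact ⟨j+1, by omega, (pgo j hj).symm⟩
  have hOutF : ∀ v, ¬ inSeq v → ¬ inSeq (f v) := by
    intro v hv hcon
    exact hv (by simpa [hf] using hInF (f v) hcon)
  have hOutG : ∀ v, ¬ inSeq v → ¬ inSeq (g v) := by
    intro v hv hcon
    exact hv (by simpa [hg] using hInG (g v) hcon)
    -- Case split: is a on the cycle through x?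
  by_cases ha : inSeq a
  swap
  · -- a (and b) off the cycle: flip M1 on the cycle, keep ab, lose xy
    have hbout : ¬ inSeq b := by
      intro hcon
      apply ha
      have := hInF b hcon
      rwa [hfb] at this
    set h1 : V → V := fun v => if inSeq v then g v else f v with hh1
    have h1x : h1 x = g x := by simp only [hh1]; rw [if_pos ⟨0, hL0, hu0⟩]
    have h1a : h1 a = f a := by simp only [hh1]; rw [if_neg ha]
    have h1adj : ∀ v, G.Adj v (h1 v) := by
      intro v; simp only [hh1]; split_ifs
      · exact hgG v
      · exact hfG v
    have h1inv : ∀ v, h1 (h1 v) = v := by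
      intro v; simp only [hh1]
      by_cases hv : inSeq v
      · rw [if_pos hv, if_pos (hInG v hv), hg]
      · rw [if_neg hv, if_neg (hOutF v hv), hf]
    have hQxy := P1 _ (mkPM_isPerfectMatching h1 h1adj h1inv)
      (show h1 a = b by rw [h1a, hfa])
    have hfin : h1 x = y := hQxy
    rw [h1x, pgx] at hfin
    have : L - 1 = 1 := uinj (by omega) (by omega) (hfin.trans hu1.symm)
    omega
  · -- a on the cycle; find the even index iA of the pair {a,b}
    obtain ⟨ja, hjaL, hja⟩ := ha
    have haIn : inSeq a := ⟨ja, hjaL, hja⟩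
    have habs : ∃ iA, Even iA ∧ 2 ≤ iA ∧ iA + 1 < L ∧
        ((u iA = a ∧ u (iA+1) = b) ∨ (u iA = b ∧ u (iA+1) = a)) := by
      by_cases hj : Even ja
      · have hja0 : ja ≠ 0 := by rintro rfl; rw [hu0] at hja; exact hax hja.symm
        refine ⟨ja, hj, ?_, ?_, Or.inl ⟨hja, ?_⟩⟩
        · rw [Nat.even_iff] at hj; omega
        · rw [Nat.even_iff] at hj hLe; omega
        · rw [← pf ja hj, hja, hfa]
      · have hja1 : ja ≠ 1 := by rintro rfl; rw [hu1] at hja; exact hay hja.symm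
        have hja3 : 3 ≤ ja := by rw [Nat.even_iff] at hj; omega
        refine ⟨ja - 1, ?_, by omega, by omega, Or.inr ⟨?_, ?_⟩⟩
        · rw [Nat.even_iff] at hj ⊢; omega
        · rw [← pfo ja hj, hja, hfa]
        · rw [show ja - 1 + 1 = ja by omega]; exact hja
    obtain ⟨iA, hiAe, hiA2, hiA1L, hab'⟩ := habs
    have hra : ∃ ra, (ra = iA ∨ ra = iA + 1) ∧ ra < L ∧ u ra = a := by
      rcases hab' with ⟨h1, _⟩ | ⟨_, h2⟩
      · exact ⟨iA, Or.inl rfl, by omega, h1⟩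
      · exact ⟨iA+1, Or.inr rfl, hiA1L, h2⟩
    obtain ⟨ra, hraEq, hraL, hrau⟩ := hra
    by_cases hw1in : inSeq w1
    swap
    · -- w1, w2 off the cycle: flip W to agree with M1 on the cycle, then 4-cycle flip
      have hw2out : ¬ inSeq w2 := by
        intro hcon
        apply hw1in
        have := hInG w2 hcon
        rwa [hgw2] at this
      set hst : V → V := fun v => if inSeq v then f v else g v with hhst
      have hstadj : ∀ v, G.Adj v (hst v) := by
        intro v; simp only [hhst]; split_ifs
        · exact hfG v
        · exact hgG v
      have hstinv : ∀ v, hst (hst v) = v := by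
        intro v; simp only [hhst]
        by_cases hv : inSeq v
        · rw [if_pos hv, if_pos (hInF v hv), hf]
        · rw [if_neg hv, if_neg (hOutG v hv), hg]
      have hstx : hst x = y := by simp only [hhst]; rw [if_pos ⟨0, hL0, hu0⟩, hfx]
      have hsty : hst y = x := by simp only [hhst]; rw [if_pos ⟨1, by omega, hu1⟩, hfy]
      have hstw1 : hst w1 = w2 := by simp only [hhst]; rw [if_neg hw1in, hgw1]
      have hstw2 : hst w2 = w1 := by simp only [hhst]; rw [if_neg hw2out, hgw2]
      have hsta : hst a = b := by simp only [hhst]; rw [if_pos ⟨ra, hraL, hrau⟩, hfa]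
      set q : V → V := fun v => if v = x then w1 else if v = w1 then x
        else if v = y then w2 else if v = w2 then y else hst v with hhq
      have hqx : q x = w1 := by simp [hhq]
      have hqw1 : q w1 = x := by simp [hhq, hw1x]
      have hqy : q y = w2 := by
        simp [hhq, (show y ≠ x from hxy.ne'), (show y ≠ w1 from hw1y.symm)]
      have hqw2 : q w2 = y := by
        simp [hhq, hw2x, (show w2 ≠ w1 from hw12.symm), hw2y]
      have hqelse : ∀ v, v ≠ x → v ≠ w1 → v ≠ y → v ≠ w2 → q v = hst v := by
        intro v h1 h2 h3 h4
        simp only [hhq]; rw [if_neg h1, if_neg h2, if_neg h3, if_neg h4]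
      have hstne : ∀ v, v ≠ x → v ≠ w1 → v ≠ y → v ≠ w2 →
          (hst v ≠ x ∧ hst v ≠ w1 ∧ hst v ≠ y ∧ hst v ≠ w2) := by
        intro v h1 h2 h3 h4
        refine ⟨?_, ?_, ?_, ?_⟩
        · intro hcon; apply h3; rw [← hstinv v, hcon, hstx]
        · intro hcon; apply h4; rw [← hstinv v, hcon, hstw1]
        · intro hcon; apply h1; rw [← hstinv v, hcon, hsty]
        · intro hcon; apply h2; rw [← hstinv v, hcon, hstw2]
      have hqadj : ∀ v, G.Adj v (q v) := by
        intro v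
        by_cases h1 : v = x
        · subst h1; rw [hqx]; exact hxw1
        · by_cases h2 : v = w1
          · subst h2; rw [hqw1]; exact hxw1.symm
          · by_cases h3 : v = y
            · subst h3; rw [hqy]; exact hyw2
            · by_cases h4 : v = w2
              · subst h4; rw [hqw2]; exact hyw2.symm
              · rw [hqelse v h1 h2 h3 h4]; exact hstadj v
      have hqinv : ∀ v, q (q v) = v := by
        intro v
        by_cases h1 : v = x
        · subst h1; rw [hqx, hqw1]
        · by_cases h2 : v = w1
          · subst h2; rw [hqw1, hqx]
          · by_cases h3 : v = y
            · subst h3; rw [hqy, hqw2]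
            · by_cases h4 : v = w2
              · subst h4; rw [hqw2, hqy]
              · obtain ⟨k1, k2, k3, k4⟩ := hstne v h1 h2 h3 h4
                rw [hqelse v h1 h2 h3 h4, hqelse _ k1 k2 k3 k4, hstinv]
      have haw1 : a ≠ w1 := fun hcon => hw1in (hcon ▸ haIn)
      have haw2 : a ≠ w2 := fun hcon => hw2out (hcon ▸ haIn)
      have hQxy := P1 _ (mkPM_isPerfectMatching q hqadj hqinv)
        (show q a = b by rw [hqelse a hax haw1 hay haw2, hsta])
      have hfin : q x = y := hQxy
      rw [hqx] at hfin
      exact hw1y hfin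
    · -- w1, w2 on the cycle at positions s, s+1
      obtain ⟨p, hpL, hpu⟩ := hw1in
      have hsex : ∃ s, ¬ Even s ∧ 3 ≤ s ∧ s + 1 < L ∧
          ((u s = w1 ∧ u (s+1) = w2) ∨ (u s = w2 ∧ u (s+1) = w1)) := by
        by_cases hp : Even p
        · have hp0 : p ≠ 0 := by rintro rfl; rw [hu0] at hpu; exact hw1x hpu.symm
          have hw2u : u (p-1) = w2 := by rw [← pge p hp (by omega), hpu]; exact hgw1
          have hs1 : p - 1 ≠ 1 := by
            intro hcon; rw [hcon, hu1] at hw2u; exact hw2y hw2u.symm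
          refine ⟨p - 1, ?_, ?_, by omega, Or.inr ⟨hw2u, ?_⟩⟩
          · rw [Nat.even_iff] at hp ⊢; omega
          · rw [Nat.even_iff] at hp; omega
          · rw [show p - 1 + 1 = p by omega]; exact hpu
        · have hw2u : u (p+1) = w2 := by rw [← pgo p hp, hpu]; exact hgw1
          have hp1L : p + 1 < L := by
            rcases eq_or_ne (p+1) L with he | hne
            · rw [he, hLx] at hw2u; exact absurd hw2u.symm hw2x
            · omega
          have hp1 : p ≠ 1 := by intro hcon; rw [hcon, hu1] at hpu; exact hw1y hpu.symm
          have hp3 : 3 ≤ p := by rw [Nat.even_iff] at hp; omega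
          exact ⟨p, hp, hp3, hp1L, Or.inl ⟨hpu, hw2u⟩⟩
      obtain ⟨s, hsodd, hs3, hs1L, hw'⟩ := hsex
      have hxus : G.Adj x (u s) := by
        rcases hw' with ⟨h1, _⟩ | ⟨h1, _⟩
        · rw [h1]; exact hxw1
        · rw [h1]; exact hxw2
      have hyus1 : G.Adj y (u (s+1)) := by
        rcases hw' with ⟨_, h2⟩ | ⟨_, h2⟩
        · rw [h2]; exact hyw2
        · rw [h2]; exact hyw1
      by_cases hcmp : s < iA
      · obtain ⟨Q, hQ, hQx, hQf⟩ :=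
          flipA f g x hf hg hfG hgG hLx hLe hL4 hmin hsodd hs3 (by omega) hxus
        have hQab : Q.Adj a b := by
          have hne1 : a ≠ u s := by
            intro hcon
            have : ra = s := uinj hraL (by omega) (hrau.trans hcon)
            rcases hraEq with h | h <;> omega
          have hne2 : ∀ r, 0 < r → r < s → u r ≠ a := by
            intro r h0 hrs hcon
            have : r = ra := uinj (by omega) hraL (hcon.trans hrau.symm)
            rcases hraEq with h | h <;> omega
          have := hQf a hax hne1 hne2
          rwa [hfa] at this
        have hQxy := P1 Q hQ hQab
        have h2 : u s = y := (hQ.1 (hQ.2 x)).unique hQx hQxy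
        have : s = 1 := uinj (by omega) (by omega) (h2.trans hu1.symm)
        omega
      · have hiAs : iA + 1 ≤ s := by
          rw [Nat.even_iff] at hiAe hsodd; omega
        obtain ⟨Q, hQ, hQy, hQf⟩ :=
          flipB f g x hf hg hfG hgG hLx hLe hL4 hmin
            (t := s+1) (by rw [Nat.even_iff] at hsodd ⊢; omega) (by omega) hs1L
            (by show G.Adj (u 1) (u (s+1)); rw [hu1]; exact hyus1)
        have hQab : Q.Adj a b := by
          have hne1 : a ≠ u 1 := by rw [hu1]; exact hay
          have hne2 : a ≠ u (s+1) := by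
            intro hcon
            have : ra = s + 1 := uinj hraL hs1L (hrau.trans hcon)
            rcases hraEq with h | h <;> omega
          have hne3 : ∀ r, s + 1 < r → r < L → u r ≠ a := by
            intro r h0 hrs hcon
            have : r = ra := uinj (by omega) hraL (hcon.trans hrau.symm)
            rcases hraEq with h | h <;> omega
          have := hQf a hne1 hne2 hax hne3
          rwa [hfa] at this
        have hQxy := P1 Q hQ hQab
        have hQy' : Q.Adj (u 1) (u (s+1)) := hQy
        rw [hu1] at hQy'
        have h2 : u (s+1) = x := (hQ.1 (hQ.2 y)).unique hQy' hQxy.symm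
        have : s + 1 = 0 := uinj hs1L (by omega) (h2.trans hu0.symm)
        omega


/-- If a matching covered graph `G` contains a complete subgraph on a
vertex set `S` with at least 5 vertices, then of any two adjacent edges of that complete
subgraph, at least one is removable in `G`. -/
theorem stmt_7 {V : Type*} [Fintype V] (G : SimpleGraph V)
    (hmc : IsMatchingCovered G) (S : Set V) (hcard : 5 ≤ Nat.card S)
    (hcomplete : ∀ x ∈ S, ∀ y ∈ S, x ≠ y → G.Adj x y)
    (x y z : V) (hx : x ∈ S) (hy : y ∈ S) (hz : z ∈ S)
    (hxy : x ≠ y) (hxz : x ≠ z) (hyz : y ≠ z) :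
    IsRemovable G x y ∨ IsRemovable G x z := by
  classical
  by_contra hcon
  push_neg at hcon
  obtain ⟨hnr1, hnr2⟩ := hcon
  have hxyA : G.Adj x y := hcomplete x hx y hy hxy
  have hxzA : G.Adj x z := hcomplete x hx z hz hxz
  have hyzA : G.Adj y z := hcomplete y hy z hz hyz
  -- two spare clique vertices
  have hcard2 : 1 < (S \ ({x,y,z} : Set V)).ncard := by
    have hS : (5 : ℕ) ≤ S.ncard := by rw [← Nat.card_coe_set_eq]; exact hcard
    have h3 : ({x,y,z} : Set V).ncard ≤ 3 := by
      refine le_trans (Set.ncard_insert_le _ _) ?_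
      have : ({y,z} : Set V).ncard ≤ 2 := by
        refine le_trans (Set.ncard_insert_le _ _) ?_
        simp [Set.ncard_singleton]
      omega
    have hdiff := Set.ncard_le_ncard_diff_add_ncard S ({x,y,z} : Set V) (Set.toFinite _)
    omega
  rw [Set.one_lt_ncard_iff (Set.toFinite _)] at hcard2
  obtain ⟨w1, w2, hw1m, hw2m, hw12⟩ := hcard2
  obtain ⟨hw1S, hw1n⟩ := hw1m
  obtain ⟨hw2S, hw2n⟩ := hw2m
  simp only [Set.mem_insert_iff, Set.mem_singleton_iff, not_or] at hw1n hw2n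
  obtain ⟨hw1x, hw1y, hw1z⟩ := hw1n
  obtain ⟨hw2x, hw2y, hw2z⟩ := hw2n
  -- adjacencies of the spares
  have hxw1 : G.Adj x w1 := hcomplete x hx w1 hw1S (Ne.symm hw1x)
  have hxw2 : G.Adj x w2 := hcomplete x hx w2 hw2S (Ne.symm hw2x)
  have hyw1 : G.Adj y w1 := hcomplete y hy w1 hw1S (Ne.symm hw1y)
  have hyw2 : G.Adj y w2 := hcomplete y hy w2 hw2S (Ne.symm hw2y)
  have hzw1 : G.Adj z w1 := hcomplete z hz w1 hw1S (Ne.symm hw1z)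
  have hzw2 : G.Adj z w2 := hcomplete z hz w2 hw2S (Ne.symm hw2z)
  have hw1w2 : G.Adj w1 w2 := hcomplete w1 hw1S w2 hw2S hw12
  -- dependencies from non-removability
  obtain ⟨a, b, hGab, hab_ne, P1⟩ := nonremovable_dep hmc hxyA hxzA hyzA hnr1
  obtain ⟨c, d, hGcd, hcd_ne, P2⟩ := nonremovable_dep hmc hxzA hxyA (hyzA.symm) hnr2
  -- a perfect matching containing w1w2
  obtain ⟨W, hW, hWw⟩ := hmc.2.2 hw1w2
  have hWxy : W.Adj x y :=
    main_dep hmc hxyA hxw1 hxw2 hyw1 hyw2 hw1w2 hGab hab_ne P1 hW hWw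
  have hWxz : W.Adj x z :=
    main_dep hmc hxzA hxw1 hxw2 hzw1 hzw2 hw1w2 hGcd hcd_ne P2 hW hWw
  have : y = z := (hW.1 (hW.2 x)).unique hWxy hWxz
  exact hyz this
end

section
/- Let G be a simple matching covered graph that has no removable edge. Then G contains no complete subgraph on 5 vertices, i.e., G has no set of 5 vertices that are pairwise adjacent. -/
open SimpleGraph

/-- functional perfect matching -/
def FnM {V : Type*} (G : SimpleGraph V) (p : V → V) : Prop :=
  (∀ z, p (p z) = z) ∧ (∀ z, G.Adj z (p z))

lemma FnM.ne {V : Type*} {G : SimpleGraph V} {p} (h : FnM G p) (z : V) : p z ≠ z :=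
  fun hz => G.irrefl (hz ▸ h.2 z)

lemma exists_fn_of_pm {V : Type*} {G : SimpleGraph V} {M : G.Subgraph}
    (hM : M.IsPerfectMatching) :
    ∃ p, FnM G p ∧ ∀ a b, M.Adj a b → p a = b := by
  choose f hf hu using fun v => hM.1 (hM.2 v)
  refine ⟨f, ⟨fun z => (hu (f z) z (hf z).symm).symm, fun z => M.adj_sub (hf z)⟩,
    fun a b hab => (hu a b hab).symm⟩

lemma pm_of_fn {V : Type*} (G : SimpleGraph V) {p} (h : FnM G p) :
    ∃ M : G.Subgraph, M.IsPerfectMatching ∧ ∀ a b, p a = b → M.Adj a b := by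
  refine ⟨{ verts := Set.univ
            Adj := fun a b => p a = b ∧ p b = a
            adj_sub := fun {a b} hab => hab.1 ▸ h.2 a
            edge_vert := fun _ => Set.mem_univ _
            symm := ⟨fun a b hab => ⟨hab.2, hab.1⟩⟩ },
    ⟨fun v _ => ⟨p v, ⟨rfl, h.1 v⟩, fun y hy => hy.1.symm⟩, fun v => Set.mem_univ _⟩,
    fun a b hab => ⟨hab, by rw [← hab]; exact h.1 a⟩⟩

/-- the alternating-step permutation -/
def altPerm {V : Type*} (m n : V → V) (hm : ∀ z, m (m z) = z) (hn : ∀ z, n (n z) = z) :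
    Equiv.Perm (V × Bool) where
  toFun z := (cond z.2 (m z.1) (n z.1), !z.2)
  invFun z := (cond z.2 (n z.1) (m z.1), !z.2)
  left_inv := by rintro ⟨z, _ | _⟩ <;> simp [hm z, hn z]
  right_inv := by rintro ⟨z, _ | _⟩ <;> simp [hm z, hn z]

lemma altPerm_apply {V : Type*} (m n : V → V) (hm) (hn) (z : V × Bool) :
    altPerm m n hm hn z = (cond z.2 (m z.1) (n z.1), !z.2) := rfl

lemma altPerm_symm_apply {V : Type*} (m n : V → V) (hm) (hn) (z : V × Bool) :
    (altPerm m n hm hn).symm z = (cond z.2 (n z.1) (m z.1), !z.2) := rfl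

lemma key {V : Type*} [Fintype V] {G : SimpleGraph V} {m n : V → V}
    (hm : FnM G m) (hn : FnM G n) {u v c d x y : V}
    (huv : n u = v) (hcd : m c = d) (hmuv : m u ≠ v)
    (huc : G.Adj u c) (hud : G.Adj u d) (hvc : G.Adj v c) (hvd : G.Adj v d)
    (hcu : c ≠ u) (hcv : c ≠ v) (hdu : d ≠ u) (hdv : d ≠ v)
    (hxy : n x = y) (hxu : x ≠ u) (hxv : x ≠ v) :
    ∃ p, FnM G p ∧ p u ≠ v ∧ p x = y := by
  classical
  by_cases hmx : m x = y
  · exact ⟨m, hm, hmuv, hmx⟩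
  have hGuv : G.Adj u v := huv ▸ hn.2 u
  have huv' : u ≠ v := hGuv.ne
  have hnv : n v = u := by rw [← huv, hn.1]
  have hyu : y ≠ u := fun h => hxv (by rw [← hn.1 x, hxy, h, huv])
  have hyv : y ≠ v := fun h => hxu (by rw [← hn.1 x, hxy, h, hnv])
  set σ : Equiv.Perm (V × Bool) := altPerm m n hm.1 hn.1 with hσ
  set s : ℕ → V × Bool := fun k => (⇑σ)^[k] (u, true) with hs
  set g : ℕ → V := fun k => (s k).1 with hg
  have hs0 : s 0 = (u, true) := rfl
  have hsS : ∀ k, s (k+1) = σ (s k) := fun k => Function.iterate_succ_apply' _ _ _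
  have hg0 : g 0 = u := rfl
  have hsnd : ∀ k, ((s k).2 = true ↔ Even k) := by
    intro k
    induction k with
    | zero => simp [hs0]
    | succ k ih =>
      rw [hsS k, altPerm_apply]
      cases hb : (s k).2 <;>
        simp [hb, Nat.even_add_one, ← ih]
  have gm : ∀ k, Even k → g (k+1) = m (g k) := by
    intro k hk
    have hb : (s k).2 = true := (hsnd k).2 hk
    show (s (k+1)).1 = m (g k)
    rw [hsS k, altPerm_apply, hb]
    rfl
  have gn : ∀ k, ¬ Even k → g (k+1) = n (g k) := by
    intro k hk
    have hb : (s k).2 = false := by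
      cases hb : (s k).2
      · rfl
      · exact absurd ((hsnd k).1 hb) hk
    show (s (k+1)).1 = n (g k)
    rw [hsS k, altPerm_apply, hb]
    rfl
  -- return to start
  have hp0pos : 0 < orderOf σ := orderOf_pos σ
  set p0 := orderOf σ with hp0
  have hsp0 : s p0 = (u, true) := by
    show (⇑σ)^[p0] (u, true) = (u, true)
    rw [Equiv.Perm.iterate_eq_pow, pow_orderOf_eq_one]
    rfl
  have hp0even : Even p0 := (hsnd p0).1 (by rw [hsp0])
  have hp02 : 2 ≤ p0 := by
    obtain ⟨t, ht⟩ := hp0even; omega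
  have hsp0m : s (p0 - 1) = (v, false) := by
    have e : p0 - 1 + 1 = p0 := by omega
    have h1 : σ (s (p0 - 1)) = (u, true) := by
      rw [← hsS, e]; exact hsp0
    have := congrArg σ.symm h1
    rw [Equiv.symm_apply_apply, altPerm_symm_apply] at this
    rw [this]
    simp [huv]
  have hvexist : ∃ t, 1 ≤ t ∧ g t = v :=
    ⟨p0 - 1, by omega, by show (s (p0-1)).1 = v; rw [hsp0m]⟩
  -- L1 : no state is ever the bool-flip of another state
  have hconj : ∀ a : V × Bool, σ.symm (a.1, !a.2) = ((σ a).1, !(σ a).2) := by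
    rintro ⟨z, _ | _⟩ <;> rfl
  have L1aux : ∀ D k, s (k + D) ≠ ((s k).1, !(s k).2) := by
    intro D
    induction D using Nat.strong_induction_on with
    | _ D ih =>
      rcases D with _ | _ | D
      · intro k h
        have := congrArg Prod.snd h
        simp at this
      · intro k h
        rw [hsS k, altPerm_apply] at h
        have hfst := congrArg Prod.fst h
        simp only at hfst
        cases hb : (s k).2 <;> rw [hb] at hfst <;> simp at hfst
        · exact hn.ne (s k).1 hfst
        · exact hm.ne (s k).1 hfst
      · intro k h
        have e1 : k + (D + 2) = ((k+1) + D) + 1 := by omega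
        rw [e1, hsS] at h
        have h2 : s ((k+1) + D) = σ.symm ((s k).1, !(s k).2) := by
          rw [← h, Equiv.symm_apply_apply]
        rw [hconj (s k), ← hsS k] at h2
        exact ih D (by omega) (k+1) h2
  have L1 : ∀ k l, s l ≠ ((s k).1, !(s k).2) := by
    intro k l h
    rcases le_total k l with hkl | hlk
    · exact L1aux (l - k) k (by rw [Nat.add_sub_cancel' hkl]; exact h)
    · exact L1aux (k - l) l (by rw [Nat.add_sub_cancel' hlk, h]; simp)
  -- T : first visit time of v
  set T := Nat.find hvexist with hTdef
  have hTspec : 1 ≤ T ∧ g T = v := Nat.find_spec hvexist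
  have hTmin : ∀ j, 1 ≤ j → j < T → g j ≠ v := by
    intro j h1 h2 h3
    exact Nat.find_min hvexist h2 ⟨h1, h3⟩
  have hsT : s T = (v, false) := by
    cases hb : (s T).2
    · exact Prod.ext_iff.mpr ⟨hTspec.2, hb⟩
    · exfalso
      refine L1 T (p0 - 1) ?_
      rw [hsp0m]
      exact Prod.ext_iff.mpr ⟨(show v = (s T).1 from hTspec.2.symm), by simp [hb]⟩
  have hTodd : ¬ Even T := by
    intro he
    have := (hsnd T).2 he
    rw [hsT] at this
    exact Bool.false_ne_true this
  have no_u : ∀ j, 1 ≤ j → j ≤ T → g j ≠ u := by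
    intro j h1 h2 hgj
    cases hb : (s j).2
    · exact L1 0 j (Prod.ext_iff.mpr ⟨hgj, hb⟩)
    · have hs1 : (s 1).2 = false := rfl
      have hj2 : 2 ≤ j := by
        rcases Nat.lt_or_ge j 2 with h | h
        · exfalso
          have hj1 : j = 1 := by omega
          rw [hj1, hs1] at hb
          exact Bool.false_ne_true hb
        · exact h
      have hsj : s j = (u, true) := Prod.ext_iff.mpr ⟨hgj, hb⟩
      have e : j - 1 + 1 = j := by omega
      have h1' : σ (s (j - 1)) = (u, true) := by rw [← hsS, e]; exact hsj
      have : s (j-1) = (v, false) := by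
        have := congrArg σ.symm h1'
        rw [Equiv.symm_apply_apply, altPerm_symm_apply] at this
        rw [this]
        simp [huv]
      exact hTmin (j-1) (by omega) (by omega)
        (show (s (j-1)).1 = v by rw [this])
  have inj : ∀ j1 j2, j1 ≤ T → j2 ≤ T → g j1 = g j2 → j1 = j2 := by
    have main : ∀ j1 j2, j1 < j2 → j2 ≤ T → g j1 = g j2 → False := by
      intro j1 j2 hlt h2T hgg
      by_cases hb : (s j1).2 = (s j2).2
      · have hss : s j1 = s j2 := Prod.ext_iff.mpr ⟨hgg, hb⟩
        have hiter : (⇑σ)^[j1] (s (j2 - j1)) = (⇑σ)^[j1] (s 0) := by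
          show (⇑σ)^[j1] ((⇑σ)^[j2-j1] (u,true)) = _
          rw [← Function.iterate_add_apply]
          have e : j1 + (j2 - j1) = j2 := by omega
          rw [e]
          exact hss.symm
        have hred : s (j2 - j1) = s 0 :=
          Function.Injective.iterate σ.injective j1 hiter
        exact no_u (j2 - j1) (by omega) (by omega)
          (show (s (j2-j1)).1 = u by rw [hred]; rfl)
      · refine L1 j1 j2 ?_
        have hb2 : (s j2).2 = !(s j1).2 := by
          cases h1 : (s j1).2 <;> cases h2 : (s j2).2 <;> rw [h1, h2] at hb <;> simp_all
        exact Prod.ext_iff.mpr ⟨hgg.symm, hb2⟩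
    intro j1 j2 h1 h2 hgg
    rcases lt_trichotomy j1 j2 with h | h | h
    · exact absurd (main j1 j2 h h2 hgg) not_false
    · exact h
    · exact absurd (main j2 j1 h h1 hgg.symm) not_false
  -- periodicity
  have hsT1 : s (T + 1) = (u, true) := by
    rw [hsS, hsT, altPerm_apply]
    simp [hnv]
  have per : ∀ k, s (k + (T+1)) = s k := by
    intro k
    show (⇑σ)^[k + (T+1)] (u,true) = s k
    rw [Function.iterate_add_apply]
    show (⇑σ)^[k] (s (T+1)) = s k
    rw [hsT1]
  have reduce : ∀ z : V, (∃ k, g k = z) → ∃ j, j ≤ T ∧ g j = z := by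
    rintro z ⟨k, hk⟩
    have hper : ∀ q r, s (r + q * (T+1)) = s r := by
      intro q
      induction q with
      | zero => intro r; simp
      | succ q ih =>
        intro r
        have e : r + (q+1) * (T+1) = (r + q * (T+1)) + (T+1) := by ring
        rw [e, per, ih]
    refine ⟨k % (T+1), by have := Nat.mod_lt k (show 0 < T + 1 by omega); omega, ?_⟩
    have e := Nat.mod_add_div' k (T+1)
    have : s (k % (T+1)) = s k := by
      conv_rhs => rw [← e]
      exact (hper (k / (T+1)) (k % (T+1))).symm
    exact (congrArg Prod.fst this).trans hk
  -- cycle as a set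
  set inC : V → Prop := fun z => ∃ k, g k = z with hinC
  have huC : inC u := ⟨0, rfl⟩
  have hvC : inC v := ⟨T, hTspec.2⟩
  have Cm : ∀ z, inC z → inC (m z) := by
    rintro z ⟨k, rfl⟩
    by_cases he : Even k
    · exact ⟨k+1, gm k he⟩
    · have hk1 : 1 ≤ k := by
        rcases Nat.eq_zero_or_pos k with h | h
        · exact absurd (h ▸ Even.zero) he
        · exact h
      have e : k - 1 + 1 = k := by omega
      have hek : Even (k-1) := by
        rw [← e] at he
        simpa [Nat.even_add_one] using he
      have : g k = m (g (k-1)) := by rw [← e]; exact gm (k-1) hek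
      exact ⟨k-1, by rw [this, hm.1]⟩
  have Cn : ∀ z, inC z → inC (n z) := by
    rintro z ⟨k, rfl⟩
    by_cases he : Even k
    · rcases Nat.eq_zero_or_pos k with h0 | h0
      · subst h0
        exact ⟨T, by rw [hg0, huv, hTspec.2]⟩
      · have e : k - 1 + 1 = k := by omega
        have hok : ¬ Even (k-1) := by
          rw [← e] at he
          simpa [Nat.even_add_one] using he
        have : g k = n (g (k-1)) := by rw [← e]; exact gn (k-1) hok
        exact ⟨k-1, by rw [this, hn.1]⟩
    · exact ⟨k+1, gn k he⟩
  by_cases hxC : inC x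
  · -- x on the cycle
    have hmd : m d = c := by rw [← hcd, hm.1]
    have hcdne : c ≠ d := fun h => hm.ne c (by rw [hcd, ← h])
    by_cases hcC : inC c
    · -- B2 : c and d on the cycle
      have hdC : inC d := hcd ▸ Cm c hcC
      obtain ⟨jc, hjcT, hgjc⟩ := reduce c hcC
      have hjc1 : 1 ≤ jc := by
        rcases Nat.eq_zero_or_pos jc with h | h
        · exfalso; apply hcu; rw [← hgjc, h, hg0]
        · exact h
      have hjcT' : jc < T :=
        lt_of_le_of_ne hjcT (fun h => hcv (by rw [← hgjc, h]; exact hTspec.2))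
      have hex : ∃ k, 1 ≤ k ∧ (g k = c ∨ g k = d) := ⟨jc, hjc1, Or.inl hgjc⟩
      set k₀ := Nat.find hex with hk₀def
      have hk₀spec := Nat.find_spec hex
      have hk₀1 : 1 ≤ k₀ := hk₀spec.1
      have hk₀T : k₀ < T := lt_of_le_of_lt (Nat.find_min' hex ⟨hjc1, Or.inl hgjc⟩) hjcT'
      obtain ⟨jx, hjxT, hgjx⟩ := reduce x hxC
      have hjx1 : 1 ≤ jx := by
        rcases Nat.eq_zero_or_pos jx with h | h
        · exfalso; apply hxu; rw [← hgjx, h, hg0]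
        · exact h
      have hjxT' : jx < T :=
        lt_of_le_of_ne hjxT (fun h => hxv (by rw [← hgjx, h]; exact hTspec.2))
      have hT2 : T % 2 = 1 := Nat.odd_iff.mp (Nat.not_even_iff_odd.mp hTodd)
      have core : ∀ c' d' : V, m c' = d' → c' ≠ u → c' ≠ v → d' ≠ u → d' ≠ v →
          G.Adj u d' → G.Adj v c' → g k₀ = c' →
          (∀ j, 1 ≤ j → j < k₀ → g j ≠ c' ∧ g j ≠ d') →
          ∃ p, FnM G p ∧ p u ≠ v ∧ p x = y := by
        intro c' d' hmc' hc'u hc'v hd'u hd'v hud' hvc' hgk0 hmin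
        have hc'd' : c' ≠ d' := fun h => hm.ne c' (by rw [hmc', ← h])
        have hk₀e : Even k₀ := by
          by_contra ho
          have e : k₀ - 1 + 1 = k₀ := by omega
          have hko := Nat.odd_iff.mp (Nat.not_even_iff_odd.mp ho)
          have hek : Even (k₀ - 1) := Nat.even_iff.mpr (by omega)
          have hh : g k₀ = m (g (k₀ - 1)) := by rw [← e]; exact gm (k₀-1) hek
          have h2 : g (k₀ - 1) = d' := by rw [← hm.1 (g (k₀-1)), ← hh, hgk0, hmc']
          rcases Nat.eq_zero_or_pos (k₀ - 1) with h0 | h0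
          · rw [h0, hg0] at h2; exact hd'u h2.symm
          · exact (hmin (k₀-1) h0 (by omega)).2 h2
        have hk₀2 : k₀ % 2 = 0 := Nat.even_iff.mp hk₀e
        have hgk1 : g (k₀ + 1) = d' := by rw [gm k₀ hk₀e, hgk0, hmc']
        have hk₀T1 : k₀ + 1 < T := by
          rcases lt_or_eq_of_le (show k₀ + 1 ≤ T by omega) with h | h
          · exact h
          · exfalso; rw [h, hTspec.2] at hgk1; exact hd'v hgk1.symm
        by_cases hjk : jx ≤ k₀
        · -- x lies on the u-to-c' arc
          set Pp : V → Prop := fun z => ∃ j, 1 ≤ j ∧ j ≤ k₀ ∧ g j = z with hPp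
          have hxP : Pp x := ⟨jx, hjx1, hjk, hgjx⟩
          have huP : ¬ Pp u := by rintro ⟨j, h1, h2, h3⟩; exact no_u j h1 (by omega) h3
          have hvP : ¬ Pp v := by rintro ⟨j, h1, h2, h3⟩; exact hTmin j h1 (by omega) h3
          have hcP : Pp c' := ⟨k₀, hk₀1, le_refl _, hgk0⟩
          have hdP : ¬ Pp d' := by
            rintro ⟨j, h1, h2, h3⟩
            rcases lt_or_eq_of_le h2 with h | h
            · exact (hmin j h1 h).2 h3
            · rw [h] at h3; exact hc'd' (hgk0.symm.trans h3)
          have hPn : ∀ z, Pp z → Pp (n z) := by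
            rintro z ⟨j, h1, h2, rfl⟩
            by_cases he : Even j
            · have hje := Nat.even_iff.mp he
              have hj2 : 2 ≤ j := by omega
              have e : j - 1 + 1 = j := by omega
              have hoj : ¬ Even (j-1) := by
                intro hh; have := Nat.even_iff.mp hh; omega
              refine ⟨j-1, by omega, by omega, ?_⟩
              have hh : g j = n (g (j-1)) := by rw [← e]; exact gn (j-1) hoj
              rw [hh, hn.1]
            · have hjo := Nat.odd_iff.mp (Nat.not_even_iff_odd.mp he)
              exact ⟨j+1, by omega, by omega, gn j he⟩
          have hPm : ∀ z, ¬ Pp z → z ≠ u → z ≠ d' →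
              ¬ Pp (m z) ∧ m z ≠ u ∧ m z ≠ d' := by
            intro z hzP hzu hzd
            have hmzu : m z ≠ u := by
              intro h
              have hz : z = m u := by rw [← hm.1 z, h]
              have hg1 : g 1 = m u := by have := gm 0 Even.zero; rwa [hg0] at this
              exact hzP ⟨1, le_refl _, hk₀1, by rw [hg1, ← hz]⟩
            have hmzd : m z ≠ d' := by
              intro h
              have hz : z = c' := by rw [← hm.1 z, h, ← hmc', hm.1]
              exact hzP (hz ▸ hcP)
            refine ⟨?_, hmzu, hmzd⟩
            rintro ⟨j, h1, h2, h3⟩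
            have hz : z = m (g j) := by rw [h3, hm.1]
            by_cases he : Even j
            · rcases lt_or_eq_of_le h2 with h | h
              · exact hzP ⟨j+1, by omega, by omega, by rw [gm j he, ← hz]⟩
              · rw [h, hgk0] at hz; exact hzd (by rw [hz, hmc'])
            · have hjo := Nat.odd_iff.mp (Nat.not_even_iff_odd.mp he)
              have e : j - 1 + 1 = j := by omega
              have hej : Even (j-1) := Nat.even_iff.mpr (by omega)
              have hh : g j = m (g (j-1)) := by rw [← e]; exact gm (j-1) hej
              have hz2 : z = g (j-1) := by rw [hz, hh, hm.1]
              rcases Nat.eq_zero_or_pos (j-1) with h0 | h0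
              · rw [h0, hg0] at hz2; exact hzu hz2
              · exact hzP ⟨j-1, h0, by omega, hz2.symm⟩
          set p : V → V := fun z => if z = u then d' else if z = d' then u
            else if Pp z then n z else m z with hpdef
          have e1 : p u = d' := by simp [hpdef]
          have e2 : p d' = u := by simp [hpdef, hd'u]
          have e5 : ∀ z, z ≠ u → z ≠ d' → Pp z → p z = n z := by
            intro z h1 h2 h3; simp [hpdef, h1, h2, h3]
          have e6 : ∀ z, z ≠ u → z ≠ d' → ¬ Pp z → p z = m z := by
            intro z h1 h2 h3; simp [hpdef, h1, h2, h3]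
          refine ⟨p, ⟨?_, ?_⟩, ?_, ?_⟩
          · intro z
            by_cases h1 : z = u
            · subst h1; rw [e1, e2]
            by_cases h2 : z = d'
            · subst h2; rw [e2, e1]
            by_cases h3 : Pp z
            · have h4 := hPn z h3
              have h5 : n z ≠ u := by
                intro h
                have : z = v := by rw [← hn.1 z, h, huv]
                rw [this] at h3; exact hvP h3
              have h6 : n z ≠ d' := fun h => hdP (h ▸ h4)
              rw [e5 z h1 h2 h3, e5 (n z) h5 h6 h4, hn.1]
            · obtain ⟨h4, h5, h6⟩ := hPm z h3 h1 h2
              rw [e6 z h1 h2 h3, e6 (m z) h5 h6 h4, hm.1]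
          · intro z
            by_cases h1 : z = u
            · subst h1; rw [e1]; exact hud'
            by_cases h2 : z = d'
            · subst h2; rw [e2]; exact hud'.symm
            by_cases h3 : Pp z
            · rw [e5 z h1 h2 h3]; exact hn.2 z
            · rw [e6 z h1 h2 h3]; exact hm.2 z
          · rw [e1]; exact hd'v
          · have h2 : x ≠ d' := fun h => hdP (h ▸ hxP)
            rw [e5 x hxu h2 hxP]; exact hxy
        · -- x lies on the d'-to-v arc
          set Qp : V → Prop := fun z => ∃ j, k₀ + 1 ≤ j ∧ j ≤ T - 1 ∧ g j = z with hQp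
          have hxQ : Qp x := ⟨jx, by omega, by omega, hgjx⟩
          have huQ : ¬ Qp u := by rintro ⟨j, h1, h2, h3⟩; exact no_u j (by omega) (by omega) h3
          have hvQ : ¬ Qp v := by rintro ⟨j, h1, h2, h3⟩; exact hTmin j (by omega) (by omega) h3
          have hcQ : ¬ Qp c' := by
            rintro ⟨j, h1, h2, h3⟩
            have := inj j k₀ (by omega) (by omega) (h3.trans hgk0.symm)
            omega
          have hdQ : Qp d' := ⟨k₀ + 1, le_refl _, by omega, hgk1⟩
          have hQn : ∀ z, Qp z → Qp (n z) := by
            rintro z ⟨j, h1, h2, rfl⟩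
            by_cases he : Even j
            · have hje := Nat.even_iff.mp he
              have e : j - 1 + 1 = j := by omega
              have hoj : ¬ Even (j-1) := by
                intro hh; have := Nat.even_iff.mp hh; omega
              refine ⟨j - 1, by omega, by omega, ?_⟩
              have hh : g j = n (g (j-1)) := by rw [← e]; exact gn (j-1) hoj
              rw [hh, hn.1]
            · have hjo := Nat.odd_iff.mp (Nat.not_even_iff_odd.mp he)
              exact ⟨j+1, by omega, by omega, gn j he⟩
          have hQm : ∀ z, ¬ Qp z → z ≠ v → z ≠ c' →
              ¬ Qp (m z) ∧ m z ≠ v ∧ m z ≠ c' := by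
            intro z hzQ hzv hzc
            have hmzv : m z ≠ v := by
              intro h
              have hz : z = m v := by rw [← hm.1 z, h]
              have e : T - 1 + 1 = T := by omega
              have heT : Even (T-1) := Nat.even_iff.mpr (by omega)
              have hh : g T = m (g (T-1)) := by rw [← e]; exact gm (T-1) heT
              have hmv : m v = g (T-1) := by rw [← hTspec.2, hh, hm.1]
              rw [hmv] at hz
              exact hzQ ⟨T-1, by omega, le_refl _, hz.symm⟩
            have hmzc : m z ≠ c' := by
              intro h
              have : z = d' := by rw [← hm.1 z, h, hmc']
              exact hzQ (this ▸ hdQ)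
            refine ⟨?_, hmzv, hmzc⟩
            rintro ⟨j, h1, h2, h3⟩
            have hz : z = m (g j) := by rw [h3, hm.1]
            by_cases he : Even j
            · have hje := Nat.even_iff.mp he
              rcases lt_or_eq_of_le (show j + 1 ≤ T by omega) with h | h
              · exact hzQ ⟨j+1, by omega, by omega, by rw [gm j he, ← hz]⟩
              · apply hzv; rw [hz, ← gm j he, h]; exact hTspec.2
            · have hjo := Nat.odd_iff.mp (Nat.not_even_iff_odd.mp he)
              have e : j - 1 + 1 = j := by omega
              have hej : Even (j-1) := Nat.even_iff.mpr (by omega)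
              have hh : g j = m (g (j-1)) := by rw [← e]; exact gm (j-1) hej
              have hz2 : z = g (j-1) := by rw [hz, hh, hm.1]
              rcases eq_or_lt_of_le h1 with h0 | h0
              · apply hzc; rw [hz2, show j - 1 = k₀ from by omega, hgk0]
              · exact hzQ ⟨j-1, by omega, by omega, hz2.symm⟩
          set p : V → V := fun z => if z = v then c' else if z = c' then v
            else if Qp z then n z else m z with hpdef
          have e1 : p v = c' := by simp [hpdef]
          have e2 : p c' = v := by simp [hpdef, hc'v]
          have e5 : ∀ z, z ≠ v → z ≠ c' → Qp z → p z = n z := by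
            intro z h1 h2 h3; simp [hpdef, h1, h2, h3]
          have e6 : ∀ z, z ≠ v → z ≠ c' → ¬ Qp z → p z = m z := by
            intro z h1 h2 h3; simp [hpdef, h1, h2, h3]
          refine ⟨p, ⟨?_, ?_⟩, ?_, ?_⟩
          · intro z
            by_cases h1 : z = v
            · subst h1; rw [e1, e2]
            by_cases h2 : z = c'
            · subst h2; rw [e2, e1]
            by_cases h3 : Qp z
            · have h4 := hQn z h3
              have h5 : n z ≠ v := by
                intro h
                have : z = u := by rw [← hn.1 z, h, hnv]
                rw [this] at h3; exact huQ h3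
              have h6 : n z ≠ c' := fun h => hcQ (h ▸ h4)
              rw [e5 z h1 h2 h3, e5 (n z) h5 h6 h4, hn.1]
            · obtain ⟨h4, h5, h6⟩ := hQm z h3 h1 h2
              rw [e6 z h1 h2 h3, e6 (m z) h5 h6 h4, hm.1]
          · intro z
            by_cases h1 : z = v
            · subst h1; rw [e1]; exact hvc'
            by_cases h2 : z = c'
            · subst h2; rw [e2]; exact hvc'.symm
            by_cases h3 : Qp z
            · rw [e5 z h1 h2 h3]; exact hn.2 z
            · rw [e6 z h1 h2 h3]; exact hm.2 z
          · rw [e6 u huv' (Ne.symm hc'u) huQ]; exact hmuv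
          · have h2 : x ≠ c' := fun h => hcQ (h ▸ hxQ)
            rw [e5 x hxv h2 hxQ]; exact hxy
      rcases hk₀spec.2 with hcc | hdd
      · exact core c d hcd hcu hcv hdu hdv hud hvc hcc
          (fun j hj1 hj2 => ⟨fun h => Nat.find_min hex hj2 ⟨hj1, Or.inl h⟩,
            fun h => Nat.find_min hex hj2 ⟨hj1, Or.inr h⟩⟩)
      · exact core d c hmd hdu hdv hcu hcv huc hvd hdd
          (fun j hj1 hj2 => ⟨fun h => Nat.find_min hex hj2 ⟨hj1, Or.inr h⟩,
            fun h => Nat.find_min hex hj2 ⟨hj1, Or.inl h⟩⟩)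
    · -- B1 : c, d off the cycle
      have hdC : ¬ inC d := fun h => hcC (by rw [← hmd]; exact Cm _ h)
      set p : V → V := fun z => if z = u then d else if z = d then u else if z = v then c
        else if z = c then v else if inC z then n z else m z with hpdef
      have e1 : p u = d := by simp [hpdef]
      have e2 : p d = u := by simp [hpdef, hdu]
      have e3 : p v = c := by simp [hpdef, Ne.symm huv', Ne.symm hdv]
      have e4 : p c = v := by simp [hpdef, hcu, hcdne, hcv]
      have e5 : ∀ z, z ≠ u → z ≠ d → z ≠ v → z ≠ c → inC z → p z = n z := by
        intro z h1 h2 h3 h4 h5; simp [hpdef, h1, h2, h3, h4, h5]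
      have e6 : ∀ z, z ≠ u → z ≠ d → z ≠ v → z ≠ c → ¬ inC z → p z = m z := by
        intro z h1 h2 h3 h4 h5; simp [hpdef, h1, h2, h3, h4, h5]
      refine ⟨p, ⟨?_, ?_⟩, ?_, ?_⟩
      · intro z
        by_cases h1 : z = u
        · subst h1; rw [e1, e2]
        by_cases h2 : z = d
        · subst h2; rw [e2, e1]
        by_cases h3 : z = v
        · subst h3; rw [e3, e4]
        by_cases h4 : z = c
        · subst h4; rw [e4, e3]
        by_cases h5 : inC z
        · have h6 := Cn z h5
          have hnu : n z ≠ u := fun h => h3 (by rw [← hn.1 z, h, huv])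
          have hnv' : n z ≠ v := fun h => h1 (by rw [← hn.1 z, h, hnv])
          have hnd : n z ≠ d := fun h => hdC (h ▸ h6)
          have hnc : n z ≠ c := fun h => hcC (h ▸ h6)
          rw [e5 z h1 h2 h3 h4 h5, e5 (n z) hnu hnd hnv' hnc h6, hn.1]
        · have hmC : ¬ inC (m z) := fun h => h5 (by rw [← hm.1 z]; exact Cm _ h)
          have hmu : m z ≠ u := fun h => hmC (h ▸ huC)
          have hmv : m z ≠ v := fun h => hmC (h ▸ hvC)
          have hmd' : m z ≠ d := fun h => h4 (by rw [← hm.1 z, h, hmd])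
          have hmc : m z ≠ c := fun h => h2 (by rw [← hm.1 z, h, hcd])
          rw [e6 z h1 h2 h3 h4 h5, e6 (m z) hmu hmd' hmv hmc hmC, hm.1]
      · intro z
        by_cases h1 : z = u
        · subst h1; rw [e1]; exact hud
        by_cases h2 : z = d
        · subst h2; rw [e2]; exact hud.symm
        by_cases h3 : z = v
        · subst h3; rw [e3]; exact hvc
        by_cases h4 : z = c
        · subst h4; rw [e4]; exact hvc.symm
        by_cases h5 : inC z
        · rw [e5 z h1 h2 h3 h4 h5]; exact hn.2 z
        · rw [e6 z h1 h2 h3 h4 h5]; exact hm.2 z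
      · rw [e1]; exact hdv
      · have hxd : x ≠ d := fun h => hdC (h ▸ hxC)
        have hxc : x ≠ c := fun h => hcC (h ▸ hxC)
        rw [e5 x hxu hxd hxv hxc hxC]; exact hxy
  · -- case A : x off the cycle; flip n on the cycle
    set p : V → V := fun z => if inC z then m z else n z with hpdef
    have e5 : ∀ z, inC z → p z = m z := fun z h => by simp [hpdef, h]
    have e6 : ∀ z, ¬ inC z → p z = n z := fun z h => by simp [hpdef, h]
    refine ⟨p, ⟨?_, ?_⟩, ?_, ?_⟩
    · intro z
      by_cases hz : inC z
      · rw [e5 z hz, e5 (m z) (Cm z hz), hm.1]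
      · have hnz : ¬ inC (n z) := fun h => hz (by rw [← hn.1 z]; exact Cn _ h)
        rw [e6 z hz, e6 (n z) hnz, hn.1]
    · intro z
      by_cases hz : inC z
      · rw [e5 z hz]; exact hm.2 z
      · rw [e6 z hz]; exact hn.2 z
    · rw [e5 u huC]; exact hmuv
    · rw [e6 x hxC]; exact hxy

lemma conn_del {V : Type*} {G : SimpleGraph V} (hc : G.Connected) {u v c : V}
    (huc : G.Adj u c) (hcv : G.Adj c v) (hvu : u ≠ v) :
    (G.deleteEdges {s(u, v)}).Connected := by
  have hcu : c ≠ u := huc.ne'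
  have hcv' : c ≠ v := hcv.ne
  have reach1 : ∀ a b : V, G.Adj a b → (G.deleteEdges {s(u, v)}).Reachable a b := by
    intro a b hab
    by_cases h : s(a, b) = s(u, v)
    · have h1 : (G.deleteEdges {s(u, v)}).Adj u c := by
        rw [deleteEdges_adj]
        refine ⟨huc, ?_⟩
        intro hmem
        rcases Sym2.eq_iff.mp hmem with ⟨-, h2⟩ | ⟨h2, -⟩
        · exact hcv' h2
        · exact hvu h2
      have h2 : (G.deleteEdges {s(u, v)}).Adj c v := by
        rw [deleteEdges_adj]
        refine ⟨hcv, ?_⟩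
        intro hmem
        rcases Sym2.eq_iff.mp hmem with ⟨h2, -⟩ | ⟨h2, -⟩
        · exact hcu h2
        · exact hcv' h2
      have hR : (G.deleteEdges {s(u, v)}).Reachable u v := h1.reachable.trans h2.reachable
      rcases Sym2.eq_iff.mp h with ⟨ha, hb⟩ | ⟨ha, hb⟩
      · subst ha; subst hb; exact hR
      · subst ha; subst hb; exact hR.symm
    · exact SimpleGraph.Adj.reachable (by rw [deleteEdges_adj]; exact ⟨hab, by simpa using h⟩)
  rw [connected_iff]
  refine ⟨?_, hc.nonempty⟩
  intro a b
  obtain ⟨w⟩ := hc.preconnected a b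
  induction w with
  | nil => exact Reachable.refl _
  | cons h p ih => exact (reach1 _ _ h).trans ih

lemma fnm_del {V : Type*} {G : SimpleGraph V} {p : V → V} (h : FnM G p) {u v : V}
    (hpu : p u ≠ v) : FnM (G.deleteEdges {s(u, v)}) p := by
  refine ⟨h.1, fun z => ?_⟩
  rw [deleteEdges_adj]
  refine ⟨h.2 z, ?_⟩
  intro hmem
  rcases Sym2.eq_iff.mp hmem with ⟨h1, h2⟩ | ⟨h1, h2⟩
  · subst h1; exact hpu h2
  · subst h1; apply hpu; rw [← h2, h.1]

/-- A matching covered graph with no removable edge has no complete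
subgraph on 5 vertices. -/
theorem stmt_8 {V : Type*} [Fintype V] (G : SimpleGraph V)
    (hmc : IsMatchingCovered G)
    (hnorem : ∀ u v : V, G.Adj u v → ¬ IsRemovable G u v) :
    ¬ ∃ S : Finset V, S.card = 5 ∧ ∀ x ∈ S, ∀ y ∈ S, x ≠ y → G.Adj x y := by
  classical
  rintro ⟨S, hS5, hSadj⟩
  obtain ⟨u, hu⟩ := Finset.card_pos.mp (by rw [hS5]; norm_num)
  have h2 : ((S.erase u).card) = 4 := by rw [Finset.card_erase_of_mem hu, hS5]
  obtain ⟨v, hv⟩ := Finset.card_pos.mp (by rw [h2]; norm_num)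
  have h3 : (((S.erase u).erase v).card) = 3 := by rw [Finset.card_erase_of_mem hv, h2]
  obtain ⟨c, hcm⟩ := Finset.card_pos.mp (by rw [h3]; norm_num)
  have h4 : ((((S.erase u).erase v).erase c).card) = 2 := by
    rw [Finset.card_erase_of_mem hcm, h3]
  obtain ⟨d, hdm⟩ := Finset.card_pos.mp (by rw [h4]; norm_num)
  obtain ⟨w, hwm⟩ := Finset.card_pos.mp
    (by rw [Finset.card_erase_of_mem hdm, h4]; norm_num)
  have hv1 := Finset.mem_erase.mp hv
  have hvu : v ≠ u := hv1.1
  have hvS : v ∈ S := hv1.2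
  have hc2 := Finset.mem_erase.mp hcm
  have hc1 := Finset.mem_erase.mp hc2.2
  have hcv : c ≠ v := hc2.1
  have hcu : c ≠ u := hc1.1
  have hcS : c ∈ S := hc1.2
  have hd3 := Finset.mem_erase.mp hdm
  have hd2 := Finset.mem_erase.mp hd3.2
  have hd1 := Finset.mem_erase.mp hd2.2
  have hdc : d ≠ c := hd3.1
  have hdv : d ≠ v := hd2.1
  have hdu : d ≠ u := hd1.1
  have hdS : d ∈ S := hd1.2
  have hw4 := Finset.mem_erase.mp hwm
  have hw3 := Finset.mem_erase.mp hw4.2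
  have hw2 := Finset.mem_erase.mp hw3.2
  have hw1 := Finset.mem_erase.mp hw2.2
  have hwd : w ≠ d := hw4.1
  have hwc : w ≠ c := hw3.1
  have hwv : w ≠ v := hw2.1
  have hwu : w ≠ u := hw1.1
  have hwS : w ∈ S := hw1.2
  have Gad : ∀ a b : V, a ∈ S → b ∈ S → a ≠ b → G.Adj a b :=
    fun a b ha hb hne => hSadj a ha b hb hne
  have claim : ∀ v' : V, v' ∈ S → v' ≠ u → v' ≠ c → v' ≠ d →
      ∀ p : V → V, FnM G p → p c = d → p u = v' := by
    intro v' hv'S hv'u hv'c hv'd p hp hpcd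
    by_contra hpu
    have hadjuv' : G.Adj u v' := Gad u v' hu hv'S (Ne.symm hv'u)
    apply hnorem u v' hadjuv'
    refine ⟨?_, ?_, ?_⟩
    · exact conn_del hmc.1 (Gad u c hu hcS (Ne.symm hcu))
        (Gad c v' hcS hv'S (fun h => hv'c h.symm)) hadjuv'.ne
    · refine ⟨s(c, d), ?_⟩
      rw [mem_edgeSet, deleteEdges_adj]
      refine ⟨Gad c d hcS hdS (Ne.symm hdc), ?_⟩
      intro hmem
      rcases Sym2.eq_iff.mp hmem with ⟨hh1, -⟩ | ⟨hh1, -⟩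
      · exact hcu hh1
      · exact hv'c hh1.symm
    · intro a b hab
      rw [deleteEdges_adj] at hab
      obtain ⟨N, hN, hNab⟩ := hmc.2.2 hab.1
      obtain ⟨nf, hnf, hconv⟩ := exists_fn_of_pm hN
      have hnab : nf a = b := hconv a b hNab
      by_cases hnu : nf u = v'
      · have hau : a ≠ u := by
          intro h; subst h
          have hb : b = v' := by rw [← hnab, hnu]
          exact hab.2 (by rw [hb]; rfl)
        have hav : a ≠ v' := by
          intro h; subst h
          have hb : b = u := by rw [← hnab, ← hnu, hnf.1]
          apply hab.2
          rw [hb]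
          rw [Sym2.eq_swap]
          rfl
        obtain ⟨q, hq, hqu, hqab⟩ := key hp hnf hnu hpcd hpu
          (Gad u c hu hcS (Ne.symm hcu)) (Gad u d hu hdS (Ne.symm hdu))
          (Gad v' c hv'S hcS hv'c) (Gad v' d hv'S hdS hv'd)
          hcu (fun h => hv'c h.symm) hdu (fun h => hv'd h.symm) hnab hau hav
        obtain ⟨M, hM, hMadj⟩ := pm_of_fn _ (fnm_del hq hqu)
        exact ⟨M, hM, hMadj a b hqab⟩
      · obtain ⟨M, hM, hMadj⟩ := pm_of_fn _ (fnm_del hnf hnu)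
        exact ⟨M, hM, hMadj a b hnab⟩
  obtain ⟨M, hM, hMcd⟩ := hmc.2.2 (Gad c d hcS hdS (Ne.symm hdc))
  obtain ⟨pf, hpf, hpconv⟩ := exists_fn_of_pm hM
  have hpcd : pf c = d := hpconv c d hMcd
  have hva : pf u = v := claim v hvS hvu (fun h => hcv h.symm) (fun h => hdv h.symm) pf hpf hpcd
  have hwa : pf u = w := claim w hwS hwu hwc hwd pf hpf hpcd
  exact hwv (hwa.symm.trans hva)
end

section
/- Let G be a simple matching covered graph containing a complete subgraph H on exactly 4 vertices such that every edge of H is nonremovable in G, and let u be a vertex of H that has exactly one neighbour w in V(G) \ V(H). Then the edge uw is nonremovable in G. -/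
open SimpleGraph

set_option linter.unusedVariables false


/-- partners in a perfect matching are unique -/
lemma pm_eq {V : Type*} {Γ : SimpleGraph V} {M : Γ.Subgraph}
    (hM : M.IsPerfectMatching) {v a b : V} (h1 : M.Adj v a) (h2 : M.Adj v b) : a = b :=
  (hM.1 (hM.2 v)).unique h1 h2

/-- transfer a perfect matching to another ambient graph -/
lemma pm_transfer {V : Type*} {Γ H : SimpleGraph V} {M : Γ.Subgraph}
    (hM : M.IsPerfectMatching) (h : ∀ a b, M.Adj a b → H.Adj a b) :
    ∃ M' : H.Subgraph, M'.IsPerfectMatching ∧ ∀ a b, M'.Adj a b ↔ M.Adj a b :=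
  ⟨⟨M.verts, M.Adj, fun {a b} hab => h a b hab, fun {a b} hab => M.edge_vert hab, M.symm⟩,
    ⟨hM.1, hM.2⟩, fun _ _ => Iff.rfl⟩

lemma connected_delete {V : Type*} {G : SimpleGraph V} (hGc : G.Connected)
    {x z m : V} (hxm : G.Adj x m) (hmz : G.Adj m z) (hxz : x ≠ z) :
    (G.deleteEdges {s(x,z)}).Connected := by
  have hstep : ∀ a b : V, G.Adj a b → (G.deleteEdges {s(x,z)}).Reachable a b := by
    intro a b hab
    by_cases h : s(a,b) = s(x,z)
    · have h1 : (G.deleteEdges {s(x,z)}).Adj x m := by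
        rw [deleteEdges_adj]
        refine ⟨hxm, ?_⟩
        simp only [Set.mem_singleton_iff, Sym2.eq_iff]
        rintro (⟨-, rfl⟩ | ⟨rfl, -⟩)
        · exact hmz.ne rfl
        · exact hxz rfl
      have h2 : (G.deleteEdges {s(x,z)}).Adj m z := by
        rw [deleteEdges_adj]
        refine ⟨hmz, ?_⟩
        simp only [Set.mem_singleton_iff, Sym2.eq_iff]
        rintro (⟨rfl, -⟩ | ⟨rfl, rfl⟩)
        · exact hxm.ne rfl
        · exact hmz.ne rfl
      have hr : (G.deleteEdges {s(x,z)}).Reachable x z := h1.reachable.trans h2.reachable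
      rw [Sym2.eq_iff] at h
      rcases h with ⟨rfl, rfl⟩ | ⟨rfl, rfl⟩
      · exact hr
      · exact hr.symm
    · exact (SimpleGraph.Adj.reachable (by rw [deleteEdges_adj]; exact ⟨hab, by simpa using h⟩))
  rw [connected_iff]
  refine ⟨fun a b => ?_, hGc.nonempty⟩
  obtain ⟨wlk⟩ := hGc.preconnected a b
  induction wlk with
  | nil => exact Reachable.refl _
  | cons h p ih => exact (hstep _ _ h).trans ih

/-- The swap lemma: replace matching edges `uy, xz` by `ux, yz`. -/
lemma swap_pm {V : Type*} {Γ : SimpleGraph V} {M : Γ.Subgraph}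
    (hM : M.IsPerfectMatching) {u y x z : V}
    (huy : M.Adj u y) (hxz : M.Adj x z)
    (hux : Γ.Adj u x) (hyz : Γ.Adj y z)
    (huz : u ≠ z) (hxy : x ≠ y) :
    ∃ M' : Γ.Subgraph, M'.IsPerfectMatching ∧
      ∀ a b, M'.Adj a b ↔
        ((M.Adj a b ∧ s(a,b) ≠ s(u,y) ∧ s(a,b) ≠ s(x,z)) ∨ s(a,b) = s(u,x) ∨ s(a,b) = s(y,z)) := by
  have huy' : u ≠ y := (M.adj_sub huy).ne
  have hxz' : x ≠ z := (M.adj_sub hxz).ne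
  have hux' : u ≠ x := hux.ne
  have hyz' : y ≠ z := hyz.ne
  set A : V → V → Prop := fun a b =>
    ((M.Adj a b ∧ s(a,b) ≠ s(u,y) ∧ s(a,b) ≠ s(x,z)) ∨ s(a,b) = s(u,x) ∨ s(a,b) = s(y,z)) with hA
  have hAsymm : Symmetric A := by
    intro a b h
    have hsw : s(b,a) = s(a,b) := Sym2.eq_swap
    rcases h with ⟨h1, h2, h3⟩ | h | h
    · exact Or.inl ⟨M.adj_symm h1, by rwa [hsw], by rwa [hsw]⟩
    · exact Or.inr (Or.inl (by rwa [hsw]))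
    · exact Or.inr (Or.inr (by rwa [hsw]))
  have hAsub : ∀ {a b : V}, A a b → Γ.Adj a b := by
    intro a b h
    rcases h with ⟨h1, -, -⟩ | h | h
    · exact M.adj_sub h1
    · rw [Sym2.eq_iff] at h
      rcases h with ⟨rfl, rfl⟩ | ⟨rfl, rfl⟩
      · exact hux
      · exact hux.symm
    · rw [Sym2.eq_iff] at h
      rcases h with ⟨rfl, rfl⟩ | ⟨rfl, rfl⟩
      · exact hyz
      · exact hyz.symm
  refine ⟨⟨Set.univ, A, hAsub, fun {a b} _ => Set.mem_univ a, ⟨fun a b h => hAsymm h⟩⟩,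
    ⟨?_, fun v => Set.mem_univ v⟩, fun a b => Iff.rfl⟩
  intro v _
  show ∃! w, A v w
  by_cases hvu : v = u
  · subst hvu
    refine ⟨x, Or.inr (Or.inl rfl), ?_⟩
    rintro b (⟨hb, hb1, -⟩ | hb | hb)
    · exact absurd (by rw [pm_eq hM hb huy]) hb1
    · rw [Sym2.eq_iff] at hb
      rcases hb with ⟨-, rfl⟩ | ⟨rfl, rfl⟩
      · rfl
      · exact absurd rfl hux'
    · rw [Sym2.eq_iff] at hb
      rcases hb with ⟨rfl, -⟩ | ⟨rfl, rfl⟩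
      · exact absurd rfl huy'
      · exact absurd rfl huz
  by_cases hvx : v = x
  · subst hvx
    refine ⟨u, Or.inr (Or.inl (Sym2.eq_swap)), ?_⟩
    rintro b (⟨hb, -, hb2⟩ | hb | hb)
    · exact absurd (by rw [pm_eq hM hb hxz]) hb2
    · rw [Sym2.eq_iff] at hb
      rcases hb with ⟨rfl, rfl⟩ | ⟨-, rfl⟩
      · exact absurd rfl hux'
      · rfl
    · rw [Sym2.eq_iff] at hb
      rcases hb with ⟨rfl, -⟩ | ⟨rfl, rfl⟩
      · exact absurd rfl hxy
      · exact absurd rfl hxz'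
  by_cases hvy : v = y
  · subst hvy
    refine ⟨z, Or.inr (Or.inr rfl), ?_⟩
    rintro b (⟨hb, hb1, -⟩ | hb | hb)
    · have := pm_eq hM (M.adj_symm huy) hb
      subst this
      exact absurd Sym2.eq_swap hb1
    · rw [Sym2.eq_iff] at hb
      rcases hb with ⟨rfl, -⟩ | ⟨rfl, rfl⟩
      · exact absurd rfl huy'.symm
      · exact absurd rfl (Ne.symm hxy)
    · rw [Sym2.eq_iff] at hb
      rcases hb with ⟨-, rfl⟩ | ⟨rfl, rfl⟩
      · rfl
      · exact absurd rfl hyz'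
  by_cases hvz : v = z
  · subst hvz
    refine ⟨y, Or.inr (Or.inr (Sym2.eq_swap)), ?_⟩
    rintro b (⟨hb, -, hb2⟩ | hb | hb)
    · have := pm_eq hM (M.adj_symm hxz) hb
      subst this
      exact absurd Sym2.eq_swap hb2
    · rw [Sym2.eq_iff] at hb
      rcases hb with ⟨rfl, -⟩ | ⟨rfl, rfl⟩
      · exact absurd rfl huz.symm
      · exact absurd rfl hxz'.symm
    · rw [Sym2.eq_iff] at hb
      rcases hb with ⟨rfl, rfl⟩ | ⟨-, rfl⟩
      · exact absurd rfl hyz'.symm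
      · rfl
  · obtain ⟨m, hm⟩ := (hM.1 (hM.2 v)).exists
    refine ⟨m, Or.inl ⟨hm, ?_, ?_⟩, ?_⟩
    · intro hcon
      rw [Sym2.eq_iff] at hcon
      rcases hcon with ⟨rfl, -⟩ | ⟨rfl, -⟩
      · exact hvu rfl
      · exact hvy rfl
    · intro hcon
      rw [Sym2.eq_iff] at hcon
      rcases hcon with ⟨rfl, -⟩ | ⟨rfl, -⟩
      · exact hvx rfl
      · exact hvz rfl
    · rintro b (⟨hb, -, -⟩ | hb | hb)
      · exact pm_eq hM hb hm
      · rw [Sym2.eq_iff] at hb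
        rcases hb with ⟨rfl, -⟩ | ⟨rfl, -⟩
        · exact absurd rfl hvu
        · exact absurd rfl hvx
      · rw [Sym2.eq_iff] at hb
        rcases hb with ⟨rfl, -⟩ | ⟨rfl, -⟩
        · exact absurd rfl hvy
        · exact absurd rfl hvz

lemma core_removable {V : Type*} {G : SimpleGraph V} {u w x y z t : V}
    (hGc : G.Connected) (huw : G.Adj u w)
    (hG' : IsMatchingCovered (G.deleteEdges {s(u,w)}))
    (hux : G.Adj u x) (huy : G.Adj u y) (huz : G.Adj u z)
    (hxy : G.Adj x y) (hxz : G.Adj x z) (hyz : G.Adj y z)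
    (hwx : w ≠ x) (hwy : w ≠ y)
    (htz : t ≠ z)
    (hupart : ∀ N : (G.deleteEdges {s(u,w)}).Subgraph, N.IsPerfectMatching →
      ∀ v, N.Adj u v → v = x ∨ v = y ∨ v = z)
    (hMw : ∃ M : G.Subgraph, M.IsPerfectMatching ∧ M.Adj u w ∧ M.Adj x t)
    (hNex : ∃ N : (G.deleteEdges {s(u,w)}).Subgraph,
      N.IsPerfectMatching ∧ N.Adj u y ∧ N.Adj x t) :
    IsRemovable G x z := by
  have transferH : ∀ (Γ : SimpleGraph V) (M : Γ.Subgraph) (p q : V), M.IsPerfectMatching →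
      (∀ a b, M.Adj a b → G.Adj a b) → ¬ M.Adj x z → M.Adj p q →
      ∃ M' : (G.deleteEdges {s(x,z)}).Subgraph, M'.IsPerfectMatching ∧ M'.Adj p q := by
    intro Γ M p q hMpm hsub hnxz hpq'
    obtain ⟨M', hM'pm, hM'iff⟩ := pm_transfer hMpm (H := G.deleteEdges {s(x,z)})
      (fun a b hab => by
        rw [deleteEdges_adj]
        refine ⟨hsub a b hab, ?_⟩
        rw [Set.mem_singleton_iff]
        intro hcon
        rw [Sym2.eq_iff] at hcon
        rcases hcon with ⟨rfl, rfl⟩ | ⟨rfl, rfl⟩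
        · exact hnxz hab
        · exact hnxz (M.adj_symm hab))
    exact ⟨M', hM'pm, (hM'iff p q).mpr hpq'⟩
  refine ⟨connected_delete hGc hux.symm huz hxz.ne, ⟨s(u,x), ?_⟩, ?_⟩
  · rw [mem_edgeSet, deleteEdges_adj]
    refine ⟨hux, ?_⟩
    rw [Set.mem_singleton_iff]
    intro hcon
    rw [Sym2.eq_iff] at hcon
    rcases hcon with ⟨rfl, -⟩ | ⟨rfl, -⟩
    · exact hux.ne rfl
    · exact huz.ne rfl
  · intro p q hpq
    rw [deleteEdges_adj, Set.mem_singleton_iff] at hpq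
    obtain ⟨hGpq, hne⟩ := hpq
    by_cases hc : s(p,q) = s(u,w)
    · obtain ⟨Mw, hMwpm, hMwuw, hMwxt⟩ := hMw
      have hnxz : ¬ Mw.Adj x z := fun hcon => htz (pm_eq hMwpm hMwxt hcon)
      refine transferH G Mw p q hMwpm (fun a b hab => Mw.adj_sub hab) hnxz ?_
      rw [Sym2.eq_iff] at hc
      rcases hc with ⟨rfl, rfl⟩ | ⟨rfl, rfl⟩
      · exact hMwuw
      · exact Mw.adj_symm hMwuw
    · have hG'pq : (G.deleteEdges {s(u,w)}).Adj p q := by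
        rw [deleteEdges_adj, Set.mem_singleton_iff]
        exact ⟨hGpq, hc⟩
      obtain ⟨M', hM'pm, hM'pq⟩ := hG'.2.2 hG'pq
      by_cases hxzM : M'.Adj x z
      · have hupartner : M'.Adj u y := by
          obtain ⟨pu, hpu⟩ := (hM'pm.1 (hM'pm.2 u)).exists
          rcases hupart M' hM'pm pu hpu with rfl | rfl | rfl
          · exact absurd (pm_eq hM'pm (M'.adj_symm hpu) hxzM) huz.ne
          · exact hpu
          · exact absurd (pm_eq hM'pm (M'.adj_symm hpu) (M'.adj_symm hxzM)) hux.ne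
        by_cases hey : s(p,q) = s(u,y)
        · obtain ⟨N, hNpm, hNuy, hNxt⟩ := hNex
          have hnxz : ¬ N.Adj x z := fun hcon => htz (pm_eq hNpm hNxt hcon)
          refine transferH _ N p q hNpm
            (fun a b hab => (deleteEdges_adj.mp (N.adj_sub hab)).1) hnxz ?_
          rw [Sym2.eq_iff] at hey
          rcases hey with ⟨rfl, rfl⟩ | ⟨rfl, rfl⟩
          · exact hNuy
          · exact N.adj_symm hNuy
        · have hG'ux : (G.deleteEdges {s(u,w)}).Adj u x := by
            rw [deleteEdges_adj, Set.mem_singleton_iff]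
            refine ⟨hux, ?_⟩
            intro hcon
            rw [Sym2.eq_iff] at hcon
            rcases hcon with ⟨-, rfl⟩ | ⟨-, rfl⟩
            · exact hwx rfl
            · exact hux.ne rfl
          have hG'yz : (G.deleteEdges {s(u,w)}).Adj y z := by
            rw [deleteEdges_adj, Set.mem_singleton_iff]
            refine ⟨hyz, ?_⟩
            intro hcon
            rw [Sym2.eq_iff] at hcon
            rcases hcon with ⟨rfl, -⟩ | ⟨rfl, rfl⟩
            · exact huy.ne rfl
            · exact hwy rfl
          obtain ⟨M'', hM''pm, hM''iff⟩ :=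
            swap_pm hM'pm hupartner hxzM hG'ux hG'yz huz.ne hxy.ne
          have hM''pq : M''.Adj p q := (hM''iff p q).mpr (Or.inl ⟨hM'pq, hey, hne⟩)
          have hnxz : ¬ M''.Adj x z := by
            intro hcon
            rw [hM''iff] at hcon
            rcases hcon with ⟨-, -, hc3⟩ | hc2 | hc2
            · exact hc3 rfl
            · rw [Sym2.eq_iff] at hc2
              rcases hc2 with ⟨rfl, -⟩ | ⟨-, rfl⟩
              · exact hux.ne rfl
              · exact huz.ne rfl
            · rw [Sym2.eq_iff] at hc2
              rcases hc2 with ⟨rfl, -⟩ | ⟨rfl, -⟩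
              · exact hxy.ne rfl
              · exact hxz.ne rfl
          exact transferH _ M'' p q hM''pm
            (fun a b hab => (deleteEdges_adj.mp (M''.adj_sub hab)).1) hnxz hM''pq
      · exact transferH _ M' p q hM'pm
          (fun a b hab => (deleteEdges_adj.mp (M'.adj_sub hab)).1) hxzM hM'pq

/-- Let `G` be a matching covered graph containing a complete subgraph
on a 4-element vertex set `S` all of whose edges are nonremovable in `G`, and let `u ∈ S`
have exactly one neighbour `w` outside `S`. Then the edge `uw` is nonremovable in `G`. -/
theorem stmt_10 {V : Type*} [Fintype V] (G : SimpleGraph V)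
    (hmc : IsMatchingCovered G) (S : Finset V) (hcard : S.card = 4)
    (hcomplete : ∀ x ∈ S, ∀ y ∈ S, x ≠ y → G.Adj x y)
    (hnonrem : ∀ x ∈ S, ∀ y ∈ S, x ≠ y → ¬ IsRemovable G x y)
    (u w : V) (hu : u ∈ S) (hw : w ∉ S) (huw : G.Adj u w)
    (huniq : ∀ x : V, G.Adj u x → x ∉ S → x = w) :
    ¬ IsRemovable G u w := by
  classical
  intro hrem
  obtain ⟨hGc, -, hGpm⟩ := hmc
  -- extract the three other vertices of S
  have hT3 : (S.erase u).card = 3 := by rw [Finset.card_erase_of_mem hu, hcard]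
  obtain ⟨a, b, c, hab, hac, hbc, hTeq⟩ := Finset.card_eq_three.mp hT3
  have hmemT : ∀ v, v ∈ S.erase u ↔ (v = a ∨ v = b ∨ v = c) := by
    intro v; rw [hTeq]; simp
  have haT : a ∈ S.erase u := (hmemT a).mpr (Or.inl rfl)
  have hbT : b ∈ S.erase u := (hmemT b).mpr (Or.inr (Or.inl rfl))
  have hcT : c ∈ S.erase u := (hmemT c).mpr (Or.inr (Or.inr rfl))
  have haS : a ∈ S := (Finset.mem_erase.mp haT).2
  have hbS : b ∈ S := (Finset.mem_erase.mp hbT).2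
  have hcS : c ∈ S := (Finset.mem_erase.mp hcT).2
  -- every PM of G' matches u inside {a,b,c}
  have hupart : ∀ N : (G.deleteEdges {s(u,w)}).Subgraph, N.IsPerfectMatching →
      ∀ v, N.Adj u v → v = a ∨ v = b ∨ v = c := by
    intro N hNpm v hadj
    have h' := N.adj_sub hadj
    rw [deleteEdges_adj, Set.mem_singleton_iff] at h'
    obtain ⟨hGuv, hne⟩ := h'
    have hvw : v ≠ w := by rintro rfl; exact hne rfl
    have hvS : v ∈ S := by
      by_contra hcon
      exact hvw (huniq v hGuv hcon)
    exact (hmemT v).mp (Finset.mem_erase.mpr ⟨hGuv.ne', hvS⟩)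
  -- a perfect matching containing uw
  obtain ⟨Mw, hMwpm, hMwuw⟩ := hGpm huw
  have hpartner : ∀ v : V, ∃ p, Mw.Adj v p := fun v => (hMwpm.1 (hMwpm.2 v)).exists
  -- some vertex of {a,b,c} is matched outside S by Mw
  have hC : ∃ x t, (x = a ∨ x = b ∨ x = c) ∧ Mw.Adj x t ∧ t ∉ S := by
    by_contra hno
    push_neg at hno
    have hTT : ∀ v, (v = a ∨ v = b ∨ v = c) → ∀ p, Mw.Adj v p →
        (p = a ∨ p = b ∨ p = c) := by
      intro v hv p hp
      have hvS : v ∈ S := by rcases hv with rfl | rfl | rfl; exacts [haS, hbS, hcS]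
      have hpS : p ∈ S := hno v p hv hp
      have hpu : p ≠ u := by
        rintro rfl
        have hvw : v = w := pm_eq hMwpm (Mw.adj_symm hp) hMwuw
        exact hw (hvw ▸ hvS)
      exact (hmemT p).mp (Finset.mem_erase.mpr ⟨hpu, hpS⟩)
    obtain ⟨pa, hpa⟩ := hpartner a
    have hpaT := hTT a (Or.inl rfl) pa hpa
    rcases hpaT with rfl | rfl | rfl
    · exact (Mw.adj_sub hpa).ne rfl
    · -- Mw.Adj a b
      obtain ⟨pc, hpc⟩ := hpartner c
      have hpcT := hTT c (Or.inr (Or.inr rfl)) pc hpc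
      rcases hpcT with rfl | rfl | rfl
      · exact hbc (pm_eq hMwpm hpa (Mw.adj_symm hpc))
      · exact hac (pm_eq hMwpm (Mw.adj_symm hpa) (Mw.adj_symm hpc))
      · exact (Mw.adj_sub hpc).ne rfl
    · -- Mw.Adj a c
      obtain ⟨pb, hpb⟩ := hpartner b
      have hpbT := hTT b (Or.inr (Or.inl rfl)) pb hpb
      rcases hpbT with rfl | rfl | rfl
      · exact hbc (pm_eq hMwpm (Mw.adj_symm hpb) hpa)
      · exact (Mw.adj_sub hpb).ne rfl
      · exact hab (pm_eq hMwpm (Mw.adj_symm hpa) (Mw.adj_symm hpb))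
  obtain ⟨x, t, hxT, hxt, htS⟩ := hC
  have hxS : x ∈ S := by rcases hxT with rfl | rfl | rfl; exacts [haS, hbS, hcS]
  have hxu : x ≠ u := by
    rcases hxT with rfl | rfl | rfl <;>
      exact (Finset.mem_erase.mp ((hmemT _).mpr (by tauto))).1
  have htu : t ≠ u := by rintro rfl; exact htS hu
  have htw : t ≠ w := by
    rintro rfl
    exact hxu (pm_eq hMwpm (Mw.adj_symm hxt) (Mw.adj_symm hMwuw))
  -- a perfect matching of G' containing xt
  have hG'xt : (G.deleteEdges {s(u,w)}).Adj x t := by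
    rw [deleteEdges_adj, Set.mem_singleton_iff]
    refine ⟨Mw.adj_sub hxt, ?_⟩
    intro hcon
    rw [Sym2.eq_iff] at hcon
    rcases hcon with ⟨rfl, -⟩ | ⟨rfl, -⟩
    · exact hxu rfl
    · exact hw hxS
  obtain ⟨N, hNpm, hNxt⟩ := hrem.2.2 hG'xt
  obtain ⟨pu, hpu⟩ := (hNpm.1 (hNpm.2 u)).exists
  have hpuT := hupart N hNpm pu hpu
  have hpux : pu ≠ x := by
    rintro rfl
    exact htu (pm_eq hNpm (N.adj_symm hpu) hNxt).symm
  -- generic final step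
  have docase : ∀ x' y' z' : V, x' ∈ S → y' ∈ S → z' ∈ S →
      x' ≠ y' → x' ≠ z' → y' ≠ z' → x' ≠ u → y' ≠ u → z' ≠ u →
      (∀ N' : (G.deleteEdges {s(u,w)}).Subgraph, N'.IsPerfectMatching →
        ∀ v, N'.Adj u v → v = x' ∨ v = y' ∨ v = z') →
      Mw.Adj x' t → N.Adj u y' → N.Adj x' t → False := by
    intro x' y' z' hxS' hyS' hzS' hxy' hxz' hyz' hxu' hyu' hzu' hup hMwxt hNuy hNxt'
    refine hnonrem x' hxS' z' hzS' hxz' ?_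
    refine core_removable hGc huw hrem
      (hcomplete u hu x' hxS' (Ne.symm hxu'))
      (hcomplete u hu y' hyS' (Ne.symm hyu'))
      (hcomplete u hu z' hzS' (Ne.symm hzu'))
      (hcomplete x' hxS' y' hyS' hxy')
      (hcomplete x' hxS' z' hzS' hxz')
      (hcomplete y' hyS' z' hzS' hyz')
      (by rintro rfl; exact hw hxS')
      (by rintro rfl; exact hw hyS')
      (by rintro rfl; exact htS hzS')
      hup ⟨Mw, hMwpm, hMwuw, hMwxt⟩ ⟨N, hNpm, hNuy, hNxt'⟩
  -- six cases
  rcases hxT with rfl | rfl | rfl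
  · rcases hpuT with rfl | rfl | rfl
    · exact hpux rfl
    · exact docase x pu c hxS hbS hcS hab hac hbc hxu
        (Finset.mem_erase.mp hbT).1 (Finset.mem_erase.mp hcT).1
        (fun N' h v hv => hupart N' h v hv) hxt hpu hNxt
    · exact docase x pu b hxS hcS hbS hac hab (Ne.symm hbc) hxu
        (Finset.mem_erase.mp hcT).1 (Finset.mem_erase.mp hbT).1
        (fun N' h v hv => by rcases hupart N' h v hv with h1 | h1 | h1 <;> tauto)
        hxt hpu hNxt
  · rcases hpuT with rfl | rfl | rfl
    · exact docase x pu c hxS haS hcS (Ne.symm hab) hbc hac hxu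
        (Finset.mem_erase.mp haT).1 (Finset.mem_erase.mp hcT).1
        (fun N' h v hv => by rcases hupart N' h v hv with h1 | h1 | h1 <;> tauto)
        hxt hpu hNxt
    · exact hpux rfl
    · exact docase x pu a hxS hcS haS hbc (Ne.symm hab) (Ne.symm hac) hxu
        (Finset.mem_erase.mp hcT).1 (Finset.mem_erase.mp haT).1
        (fun N' h v hv => by rcases hupart N' h v hv with h1 | h1 | h1 <;> tauto)
        hxt hpu hNxt
  · rcases hpuT with rfl | rfl | rfl
    · exact docase x pu b hxS haS hbS (Ne.symm hac) (Ne.symm hbc) hab hxu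
        (Finset.mem_erase.mp haT).1 (Finset.mem_erase.mp hbT).1
        (fun N' h v hv => by rcases hupart N' h v hv with h1 | h1 | h1 <;> tauto)
        hxt hpu hNxt
    · exact docase x pu a hxS hbS haS (Ne.symm hbc) (Ne.symm hac) (Ne.symm hab) hxu
        (Finset.mem_erase.mp hbT).1 (Finset.mem_erase.mp haT).1
        (fun N' h v hv => by rcases hupart N' h v hv with h1 | h1 | h1 <;> tauto)
        hxt hpu hNxt
    · exact hpux rfl
end

section
/- Let G be a simple cubic claw-free matching covered graph. Then every ridge of G (every edge of G that lies in no triangle) is nonremovable in G. -/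
open SimpleGraph

/-- A graph is cubic: every vertex has exactly 3 neighbours. -/
def IsCubic {V : Type*} (G : SimpleGraph V) : Prop :=
  ∀ v : V, Nat.card (G.neighborSet v) = 3

/-- A graph is claw-free: it has no induced `K_{1,3}`. -/
def IsClawFree {V : Type*} (G : SimpleGraph V) : Prop :=
  ∀ u a b c : V, G.Adj u a → G.Adj u b → G.Adj u c →
    a ≠ b → a ≠ c → b ≠ c → ¬ G.Adj a b → ¬ G.Adj a c → ¬ G.Adj b c → False

/-- In a cubic claw-free matching covered graph, every ridge (edge not
lying in a triangle) is nonremovable. -/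
theorem stmt_12 {V : Type*} [Fintype V] (G : SimpleGraph V)
    (hcubic : IsCubic G) (hcf : IsClawFree G) (hmc : IsMatchingCovered G)
    (u v : V) (huv : G.Adj u v)
    (hridge : ∀ x : V, ¬ (G.Adj u x ∧ G.Adj v x)) :
    ¬ IsRemovable G u v := by
  intro hrem
  have hv : v ∈ G.neighborSet u := huv
  have hfin : (G.neighborSet u).Finite := Set.toFinite _
  have hcard : (G.neighborSet u).ncard = 3 := by
    rw [← Nat.card_coe_set_eq]; exact hcubic u
  have h2 : ((G.neighborSet u) \ {v}).ncard = 2 := by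
    rw [Set.ncard_diff_singleton_of_mem hv, hcard]
  obtain ⟨a, b, hab, hS⟩ := Set.ncard_eq_two.mp h2
  have ha : a ∈ G.neighborSet u \ {v} := by rw [hS]; left; rfl
  have hb : b ∈ G.neighborSet u \ {v} := by rw [hS]; right; rfl
  have hua : G.Adj u a := ha.1
  have hub : G.Adj u b := hb.1
  have hav : a ≠ v := ha.2
  have hbv : b ≠ v := hb.2
  have hva : ¬ G.Adj v a := fun h => hridge a ⟨hua, h⟩
  have hvb : ¬ G.Adj v b := fun h => hridge b ⟨hub, h⟩
  have habAdj : G.Adj a b := by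
    by_contra h
    exact hcf u v a b huv hua hub (Ne.symm hav) (Ne.symm hbv) hab hva hvb h
  -- ab survives the edge deletion
  have hG'ab : (G.deleteEdges {s(u, v)}).Adj a b := by
    rw [SimpleGraph.deleteEdges_adj]
    refine ⟨habAdj, ?_⟩
    simp only [Set.mem_singleton_iff, Sym2.eq_iff]
    rintro (⟨rfl, rfl⟩ | ⟨rfl, rfl⟩)
    · exact hua.ne rfl
    · exact hav rfl
  obtain ⟨M, hM, hMab⟩ := hrem.2.2 hG'ab
  -- u's partner in M
  obtain ⟨x, hx, -⟩ := hM.1 (hM.2 u)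
  have hG'ux : (G.deleteEdges {s(u, v)}).Adj u x := M.adj_sub hx
  rw [SimpleGraph.deleteEdges_adj] at hG'ux
  have hxv : x ≠ v := by
    rintro rfl
    exact hG'ux.2 rfl
  have hxmem : x ∈ G.neighborSet u \ {v} := ⟨hG'ux.1, hxv⟩
  rw [hS] at hxmem
  rcases hxmem with rfl | rfl
  · -- x = a : a matched to both u and b
    obtain ⟨y, hy, huniq⟩ := hM.1 (hM.2 x)
    have h1 : u = y := huniq u hx.symm
    have h2 : b = y := huniq b hMab
    exact hub.ne (h1.trans h2.symm)
  · -- x = b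
    obtain ⟨y, hy, huniq⟩ := hM.1 (hM.2 x)
    have h1 : u = y := huniq u hx.symm
    have h2 : a = y := huniq a hMab.symm
    exact hua.ne (h1.trans h2.symm)
end

section
/- Every simple cubic bicritical graph is 3-connected, i.e., it has more than 3 vertices and remains connected after the deletion of any set of at most 2 vertices. -/
open SimpleGraph

/-- A graph is bicritical: it has at least four vertices and deleting any two
distinct vertices leaves a graph with a perfect matching. -/
def IsBicritical {V : Type*} [Fintype V] (G : SimpleGraph V) : Prop :=
  4 ≤ Fintype.card V ∧
    ∀ u v : V, u ≠ v →
      ∃ M : (G.induce (({u, v} : Set V)ᶜ)).Subgraph, M.IsPerfectMatching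

section Aux

variable {V : Type*} [Fintype V] {G : SimpleGraph V}

/-- A "bad cut": `Sᶜ` splits into two nonempty pieces with no edges between them. -/
def BadCut (G : SimpleGraph V) (S : Set V) : Prop :=
  ∃ A B : Set V, A.Nonempty ∧ B.Nonempty ∧ Disjoint A B ∧ A ∪ B = Sᶜ ∧
    ∀ a ∈ A, ∀ b ∈ B, ¬ G.Adj a b

/-- If `G.induce T` has a perfect matching and `W ⊆ T` has no edges to the rest
of `T`, then `W` has even cardinality. -/
lemma even_of_separated {T W : Set V} (hWT : W ⊆ T)
    (hsep : ∀ w ∈ W, ∀ z ∈ T, G.Adj w z → z ∈ W)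
    {M : (G.induce T).Subgraph} (hM : M.IsPerfectMatching) :
    Even (Nat.card W) := by
  classical
  set W' : Set ↥T := {x | (x : V) ∈ W} with hW'
  have hMW : (M.induce W').IsMatching := by
    intro x hx
    have hx' : (x : V) ∈ W := hx
    obtain ⟨y, hy, hyu⟩ := hM.1 (hM.2 x)
    have hyW : (y : V) ∈ W := by
      have hGadj : G.Adj (x : V) (y : V) := M.adj_sub hy
      exact hsep _ hx' _ y.2 hGadj
    refine ⟨y, ⟨hx, hyW, hy⟩, ?_⟩
    rintro z ⟨-, -, hz⟩
    exact hyu z hz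
  have hverts : (M.induce W').verts = W' := rfl
  have heven : Even (M.induce W').verts.toFinset.card := hMW.even_card
  rw [hverts] at heven
  have e : W ≃ W' :=
    { toFun := fun x => ⟨⟨x, hWT x.2⟩, x.2⟩
      invFun := fun y => ⟨(y : ↥T), y.2⟩
      left_inv := fun x => rfl
      right_inv := fun y => Subtype.ext (Subtype.ext rfl) }
  rw [Nat.card_congr e, Nat.card_eq_fintype_card, ← Set.toFinset_card]
  exact heven


/-- Core contradiction: a nonempty even piece `A` separated from everything except
`{u,v}`, such that `u` has at most one neighbour inside `A`, contradicts bicriticality. -/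
lemma key_contra (hbc : IsBicritical G) {u v : V} (huv : u ≠ v) {A : Set V}
    (hA : A.Nonempty) (hsub : A ⊆ ({u, v} : Set V)ᶜ)
    (hsep : ∀ a ∈ A, ∀ z, G.Adj a z → z ∈ A ∪ {u, v})
    (heven : Even (Nat.card A))
    (hu1 : ∀ x ∈ A, ∀ y ∈ A, G.Adj u x → G.Adj u y → x = y) : False := by
  classical
  -- choose `x ∈ A` absorbing all neighbours of `u` in `A`
  obtain ⟨x, hxA, hx⟩ : ∃ x ∈ A, ∀ w ∈ A, G.Adj u w → w = x := by
    by_cases h : ∃ w ∈ A, G.Adj u w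
    · obtain ⟨w, hwA, hw⟩ := h
      exact ⟨w, hwA, fun w' hw' hadj => hu1 w' hw' w hwA hadj hw⟩
    · push_neg at h
      obtain ⟨a, ha⟩ := hA
      exact ⟨a, ha, fun w hw hadj => absurd hadj (h w hw)⟩
  have hxv : v ≠ x := by
    intro h; exact (hsub hxA) (by simp [← h])
  obtain ⟨M, hM⟩ := hbc.2 v x hxv
  have hWT : A \ {x} ⊆ ({v, x} : Set V)ᶜ := by
    intro w hw
    simp only [Set.mem_compl_iff, Set.mem_insert_iff, Set.mem_singleton_iff]
    push_neg
    refine ⟨?_, fun h => hw.2 h⟩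
    intro h; exact (hsub hw.1) (by simp [h])
  have hsep' : ∀ w ∈ A \ {x}, ∀ z ∈ ({v, x} : Set V)ᶜ, G.Adj w z → z ∈ A \ {x} := by
    intro w hw z hz hadj
    have hz' := hsep w hw.1 z hadj
    simp only [Set.mem_compl_iff, Set.mem_insert_iff, Set.mem_singleton_iff] at hz
    push_neg at hz
    rcases hz' with hzA | hz2
    · exact ⟨hzA, hz.2⟩
    · rcases hz2 with h | h
      · exfalso
        have : w = x := hx w hw.1 (by rw [h] at hadj; exact hadj.symm)
        exact hw.2 this
      · exact absurd h hz.1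
  have heven' : Even (Nat.card ↥(A \ {x})) := even_of_separated hWT hsep' hM
  rw [Nat.card_coe_set_eq] at heven heven'
  have hcard : (A \ {x}).ncard + 1 = A.ncard := Set.ncard_diff_singleton_add_one hxA
  rw [← hcard, Nat.even_add_one] at heven
  exact heven heven'

/-- A bad cut of size two contradicts cubic + bicritical. -/
lemma badCut_two (hcubic : IsCubic G) (hbc : IsBicritical G) {u v : V} (huv : u ≠ v)
    (hbad : BadCut G ({u, v} : Set V)) : False := by
  classical
  obtain ⟨A, B, hA, hB, hdAB, hU, hE⟩ := hbad
  have hsubA : A ⊆ ({u, v} : Set V)ᶜ := hU ▸ Set.subset_union_left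
  have hsubB : B ⊆ ({u, v} : Set V)ᶜ := hU ▸ Set.subset_union_right
  have hsepA : ∀ a ∈ A, ∀ z, G.Adj a z → z ∈ A ∪ ({u, v} : Set V) := by
    intro a ha z hadj
    by_cases hz : z ∈ ({u, v} : Set V)
    · exact Or.inr hz
    · have : z ∈ A ∪ B := hU ▸ hz
      rcases this with h | h
      · exact Or.inl h
      · exact absurd hadj (hE a ha z h)
  have hsepB : ∀ a ∈ B, ∀ z, G.Adj a z → z ∈ B ∪ ({u, v} : Set V) := by
    intro a ha z hadj
    by_cases hz : z ∈ ({u, v} : Set V)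
    · exact Or.inr hz
    · have : z ∈ A ∪ B := hU ▸ hz
      rcases this with h | h
      · exact absurd hadj.symm (hE z h a ha)
      · exact Or.inl h
  obtain ⟨M, hM⟩ := hbc.2 u v huv
  have hevenA : Even (Nat.card ↥A) := by
    refine even_of_separated hsubA ?_ hM
    intro w hw z hz hadj
    rcases hsepA w hw z hadj with h | h
    · exact h
    · exact absurd h hz
  have hevenB : Even (Nat.card ↥B) := by
    refine even_of_separated hsubB ?_ hM
    intro w hw z hz hadj
    rcases hsepB w hw z hadj with h | h
    · exact h
    · exact absurd h hz
  -- `u` has at most one neighbour in `A` or at most one in `B`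
  have hdeg : (G.neighborSet u).ncard = 3 := by
    rw [← Nat.card_coe_set_eq]; exact hcubic u
  have hcases : (∀ x ∈ A, ∀ y ∈ A, G.Adj u x → G.Adj u y → x = y) ∨
      (∀ x ∈ B, ∀ y ∈ B, G.Adj u x → G.Adj u y → x = y) := by
    by_contra h
    push_neg at h
    obtain ⟨⟨x, hxA, y, hyA, hux, huy, hxy⟩, ⟨x', hx'B, y', hy'B, hux', huy', hxy'⟩⟩ := h
    have h2A : 1 < (G.neighborSet u ∩ A).ncard := by
      rw [Set.one_lt_ncard_iff (Set.toFinite _)]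
      exact ⟨x, y, ⟨hux, hxA⟩, ⟨huy, hyA⟩, hxy⟩
    have h2B : 1 < (G.neighborSet u ∩ B).ncard := by
      rw [Set.one_lt_ncard_iff (Set.toFinite _)]
      exact ⟨x', y', ⟨hux', hx'B⟩, ⟨huy', hy'B⟩, hxy'⟩
    have hdisj : Disjoint (G.neighborSet u ∩ A) (G.neighborSet u ∩ B) :=
      hdAB.mono Set.inter_subset_right Set.inter_subset_right
    have hle : (G.neighborSet u ∩ A ∪ G.neighborSet u ∩ B).ncard ≤ (G.neighborSet u).ncard :=
      Set.ncard_le_ncard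
        (Set.union_subset Set.inter_subset_left Set.inter_subset_left) (Set.toFinite _)
    rw [Set.ncard_union_eq hdisj (Set.toFinite _) (Set.toFinite _), hdeg] at hle
    omega
  rcases hcases with h | h
  · exact key_contra hbc huv hA hsubA hsepA hevenA h
  · exact key_contra hbc huv hB hsubB hsepB hevenB h

/-- A bad cut of size at most one can be enlarged. -/
lemma badCut_pad (hbc4 : 4 ≤ Fintype.card V) {S : Set V} (hS : Nat.card S ≤ 1)
    (hbad : BadCut G S) : ∃ S' : Set V, Nat.card ↥S' = Nat.card ↥S + 1 ∧ BadCut G S' := by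
  classical
  obtain ⟨A, B, hA, hB, hdAB, hU, hE⟩ := hbad
  have hcompl : Sᶜ.ncard = Fintype.card V - S.ncard := by
    have h := Set.ncard_add_ncard_compl S
    have : Nat.card V = Fintype.card V := Nat.card_eq_fintype_card
    omega
  have hsum : A.ncard + B.ncard = Sᶜ.ncard := by
    rw [← hU, Set.ncard_union_eq hdAB (Set.toFinite _) (Set.toFinite _)]
  rw [Nat.card_coe_set_eq] at hS
  have hbig : 2 ≤ A.ncard ∨ 2 ≤ B.ncard := by omega
  -- a symmetric helper
  have main : ∀ A' B' : Set V, A'.Nonempty → B'.Nonempty → Disjoint A' B' →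
      A' ∪ B' = Sᶜ → (∀ a ∈ A', ∀ b ∈ B', ¬ G.Adj a b) → 2 ≤ A'.ncard →
      ∃ S' : Set V, Nat.card ↥S' = Nat.card ↥S + 1 ∧ BadCut G S' := by
    intro A' B' hA' hB' hd hU' hE' h2
    obtain ⟨a, ha⟩ := hA'
    have haS : a ∉ S := by
      have : a ∈ Sᶜ := hU' ▸ Set.mem_union_left _ ha
      exact this
    refine ⟨insert a S, ?_, A' \ {a}, B', ?_, hB', ?_, ?_, ?_⟩
    · rw [Nat.card_coe_set_eq, Nat.card_coe_set_eq, Set.ncard_insert_of_notMem haS]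
    · have hd1 : (A' \ {a}).ncard + 1 = A'.ncard := Set.ncard_diff_singleton_add_one ha
      exact Set.nonempty_of_ncard_ne_zero (by omega)
    · exact hd.mono_left Set.diff_subset
    · ext z
      constructor
      · rintro (⟨hz, hza⟩ | hz)
        · simp only [Set.mem_compl_iff, Set.mem_insert_iff]
          push_neg
          refine ⟨hza, ?_⟩
          have : z ∈ Sᶜ := hU' ▸ Set.mem_union_left _ hz
          exact this
        · simp only [Set.mem_compl_iff, Set.mem_insert_iff]
          push_neg
          constructor
          · intro h; exact hd.ne_of_mem ha (h ▸ hz) rfl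
          · have : z ∈ Sᶜ := hU' ▸ Set.mem_union_right _ hz
            exact this
      · intro hz
        simp only [Set.mem_compl_iff, Set.mem_insert_iff] at hz
        push_neg at hz
        have : z ∈ A' ∪ B' := hU' ▸ hz.2
        rcases this with h | h
        · exact Or.inl ⟨h, hz.1⟩
        · exact Or.inr h
    · intro x hx y hy
      exact hE' x hx.1 y hy
  rcases hbig with h2 | h2
  · exact main A B hA hB hdAB hU hE h2
  · refine main B A hB hA hdAB.symm (by rw [Set.union_comm]; exact hU) ?_ h2
    intro b hb a ha hadj
    exact hE a ha b hb hadj.symm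

/-- A disconnected induced subgraph yields a bad cut. -/
lemma badCut_of_not_connected {S : Set V} (hne : (Sᶜ : Set V).Nonempty)
    (h : ¬ (G.induce (Sᶜ : Set V)).Connected) : BadCut G S := by
  classical
  rw [connected_iff] at h
  push_neg at h
  have hpre : ¬ (G.induce (Sᶜ : Set V)).Preconnected := by
    intro hp
    exact absurd (h hp) (not_isEmpty_iff.mpr hne.to_subtype)
  rw [Preconnected] at hpre
  push_neg at hpre
  obtain ⟨x, y, hxy⟩ := hpre
  refine ⟨{z : V | ∃ hz : z ∈ Sᶜ, (G.induce (Sᶜ : Set V)).Reachable x ⟨z, hz⟩},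
    {z : V | ∃ hz : z ∈ Sᶜ, ¬ (G.induce (Sᶜ : Set V)).Reachable x ⟨z, hz⟩}, ?_, ?_, ?_, ?_, ?_⟩
  · exact ⟨x, x.2, Reachable.refl x⟩
  · exact ⟨y, y.2, hxy⟩
  · rw [Set.disjoint_left]
    rintro z ⟨hz, hr⟩ ⟨hz', hr'⟩
    exact hr' hr
  · ext z
    simp only [Set.mem_union, Set.mem_setOf_eq, Set.mem_compl_iff]
    constructor
    · rintro (⟨hz, -⟩ | ⟨hz, -⟩) <;> exact hz
    · intro hz
      by_cases hr : (G.induce (Sᶜ : Set V)).Reachable x ⟨z, hz⟩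
      · exact Or.inl ⟨hz, hr⟩
      · exact Or.inr ⟨hz, hr⟩
  · rintro a ⟨ha, hra⟩ b ⟨hb, hrb⟩ hadj
    exact hrb (hra.trans (Adj.reachable (by simpa using hadj)))


end Aux
/-- Every cubic bicritical graph is 3-connected: it has more than
3 vertices and deleting any set of at most 2 vertices leaves it connected. -/
theorem stmt_13 {V : Type*} [Fintype V] (G : SimpleGraph V)
    (hcubic : IsCubic G) (hbc : IsBicritical G) :
    3 < Fintype.card V ∧
      ∀ S : Set V, Nat.card S ≤ 2 → (G.induce (Sᶜ : Set V)).Connected := by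
  classical
  refine ⟨by have := hbc.1; omega, ?_⟩
  intro S hS
  by_contra hcon
  have hne : (Sᶜ : Set V).Nonempty := by
    rw [Set.nonempty_iff_ne_empty]
    intro h
    have hSu : S = Set.univ := by rwa [Set.compl_empty_iff] at h
    rw [hSu] at hS
    have huniv : Nat.card (Set.univ : Set V) = Fintype.card V := by
      rw [Nat.card_coe_set_eq, Set.ncard_univ, Nat.card_eq_fintype_card]
    have := hbc.1
    omega
  have hbad : BadCut G S := badCut_of_not_connected hne hcon
  have elim2 : ∀ T : Set V, Nat.card T = 2 → BadCut G T → False := by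
    intro T hT hb
    rw [Nat.card_coe_set_eq, Set.ncard_eq_two] at hT
    obtain ⟨u, v, huv, rfl⟩ := hT
    exact badCut_two hcubic hbc huv hb
  have key : ∀ n, ∀ T : Set V, Nat.card T + n = 2 → BadCut G T → False := by
    intro n
    induction n with
    | zero => intro T hT hb; exact elim2 T (by omega) hb
    | succ k ih =>
      intro T hT hb
      obtain ⟨T', hc, hb'⟩ := badCut_pad hbc.1 (by omega) hb
      exact ih T' (by omega) hb'
  exact key (2 - Nat.card S) S (by omega) hbad
end

section
/- Let G be a 3-connected simple cubic claw-free graph that is not isomorphic to K4. Then every vertex of G lies in exactly one triangle of G. -/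
open SimpleGraph

/-- A graph is 3-connected: it has more than 3 vertices and deleting any set of at
most 2 vertices leaves it connected. -/
def ThreeConnected {V : Type*} [Fintype V] (G : SimpleGraph V) : Prop :=
  3 < Fintype.card V ∧
    ∀ S : Set V, Nat.card S ≤ 2 → (G.induce (Sᶜ : Set V)).Connected

/-! If an edge `vp` lay in two triangles `vpq` and `vpr`, then, the graph being cubic, all
neighbours of `v` and `p` lie in `{v, p, q, r}`, so deleting `q` and `r` would cut `{v, p}` off
from every other vertex. By 3-connectivity `V = {v, p, q, r}`, and a cubic graph on four vertices
is `K₄`. So every edge lies in at most one triangle. Claw-freeness at `v` gives a triangle through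
`v`, and two triangles through `v` use two pairs among its three neighbours, hence share an edge
at `v` and coincide. -/

open Finset

section

variable {V : Type*} {G : SimpleGraph V}

lemma SimpleGraph.Reachable.mem_of_adj_closed {C : Set V}
    (hC : ∀ ⦃x y⦄, G.Adj x y → x ∈ C → y ∈ C) {u w : V} (huw : G.Reachable u w)
    (hu : u ∈ C) : w ∈ C := by
  obtain ⟨p⟩ := huw
  induction p with
  | nil => exact hu
  | cons h _ ih => exact ih (hC h hu)

lemma SimpleGraph.IsRegularOfDegree.eq_top [Fintype V] [DecidableRel G.Adj]
    (hG : G.IsRegularOfDegree (Fintype.card V - 1)) : G = ⊤ :=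
  G.eq_top_iff_forall_isUniversal.2 fun v => (G.degree_eq_card_sub_one v).1 (hG v)

lemma IsCubic.ncard_neighborSet (hG : IsCubic G) (v : V) : (G.neighborSet v).ncard = 3 := by
  rw [← Nat.card_coe_set_eq]; exact hG v

lemma IsCubic.isRegularOfDegree [G.LocallyFinite] (hG : IsCubic G) : G.IsRegularOfDegree 3 :=
  fun v => by rw [← G.card_neighborSet_eq_degree, ← Nat.card_eq_fintype_card]; exact hG v

lemma IsCubic.neighborSet_eq (hG : IsCubic G) {v p q r : V}
    (hp : G.Adj v p) (hq : G.Adj v q) (hr : G.Adj v r)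
    (hpq : p ≠ q) (hpr : p ≠ r) (hqr : q ≠ r) :
    G.neighborSet v = {p, q, r} := by
  have hfin : (G.neighborSet v).Finite :=
    Set.finite_of_ncard_ne_zero (by rw [hG.ncard_neighborSet]; decide)
  refine (Set.eq_of_subset_of_ncard_le ?_ ?_ hfin).symm
  · simp [Set.insert_subset_iff, hp, hq, hr]
  · rw [hG.ncard_neighborSet, Set.ncard_eq_three.2 ⟨p, q, r, hpq, hpr, hqr, rfl⟩]

lemma ThreeConnected.eq_or_eq_or_eq_or_eq_of_adj [Fintype V] (h3c : ThreeConnected G)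
    (hG : IsCubic G) {v p q r : V} (hvp : G.Adj v p) (hvq : G.Adj v q) (hvr : G.Adj v r)
    (hpq : G.Adj p q) (hpr : G.Adj p r) (hqr : q ≠ r) (w : V) :
    w = v ∨ w = p ∨ w = q ∨ w = r := by
  have hNv := hG.neighborSet_eq hvp hvq hvr hpq.ne hpr.ne hqr
  have hNp := hG.neighborSet_eq hvp.symm hpq hpr hvq.ne hvr.ne hqr
  have hconn := h3c.2 {q, r} (by rw [Nat.card_coe_set_eq, Set.ncard_pair hqr])
  have hclosed : ∀ ⦃x y : ↥({q, r} : Set V)ᶜ⦄, (G.induce _).Adj x y →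
      x ∈ {z | z.1 = v ∨ z.1 = p} → y ∈ {z | z.1 = v ∨ z.1 = p} := by
    intro ⟨x, _⟩ ⟨y, hyS⟩ (hxy : G.Adj x y) (hx : x = v ∨ x = p)
    show y = v ∨ y = p
    have hy : y ∈ G.neighborSet x := hxy
    rcases hx with rfl | rfl <;> simp_all
  by_contra! hw
  have := (hconn.preconnected ⟨v, by simp [hvq.ne, hvr.ne]⟩ ⟨w, by simp [hw]⟩)
    |>.mem_of_adj_closed hclosed (by simp)
  simp_all

lemma ThreeConnected.commonNeighbors_subsingleton [Fintype V] (h3c : ThreeConnected G)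
    (hG : IsCubic G) (hK4 : ¬ Nonempty (G ≃g (⊤ : SimpleGraph (Fin 4)))) {v p : V}
    (hvp : G.Adj v p) : (G.commonNeighbors v p).Subsingleton := by
  classical
  intro q hq r hr
  rw [mem_commonNeighbors] at hq hr
  by_contra hqr
  have hspan := h3c.eq_or_eq_or_eq_or_eq_of_adj hG hvp hq.1 hr.1 hq.2 hr.2 hqr
  have hcard : Fintype.card V = 4 := by
    have : univ ⊆ ({v, p, q, r} : Finset V) := fun w _ => by simpa using hspan w
    have := (card_le_card this).trans card_le_four
    have := h3c.1
    rw [card_univ] at *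
    omega
  have htop : G = ⊤ := SimpleGraph.IsRegularOfDegree.eq_top (by
    rw [hcard]; exact hG.isRegularOfDegree)
  exact hK4 ⟨htop ▸ Iso.completeGraph (Fintype.equivFinOfCardEq hcard)⟩

lemma IsClawFree.exists_isNClique_three_mem [DecidableEq V] (hcf : IsClawFree G)
    (hG : IsCubic G) (v : V) : ∃ s : Finset V, v ∈ s ∧ G.IsNClique 3 s := by
  obtain ⟨a, b, c, hab, hac, hbc, hN⟩ := Set.ncard_eq_three.1 (hG.ncard_neighborSet v)
  have hadj : ∀ x ∈ ({a, b, c} : Set V), G.Adj v x :=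
    fun x hx => (hN ▸ hx : x ∈ G.neighborSet v)
  have htri : ∀ {x y}, G.Adj v x → G.Adj v y → G.Adj x y →
      ∃ s : Finset V, v ∈ s ∧ G.IsNClique 3 s :=
    fun hx hy hxy => ⟨{v, _, _}, mem_insert_self _ _, is3Clique_triple_iff.2 ⟨hx, hy, hxy⟩⟩
  have ha := hadj a (by simp); have hb := hadj b (by simp); have hc := hadj c (by simp)
  by_contra h
  exact hcf v a b c ha hb hc hab hac hbc (fun h' => h (htri ha hb h'))
    (fun h' => h (htri ha hc h')) (fun h' => h (htri hb hc h'))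

lemma IsCubic.eq_of_isNClique_three_mem [G.LocallyFinite] [DecidableEq V] (hG : IsCubic G)
    (hedge : ∀ ⦃v p⦄, G.Adj v p → (G.commonNeighbors v p).Subsingleton) {v : V}
    {s t : Finset V} (hs : G.IsNClique 3 s) (ht : G.IsNClique 3 t) (hvs : v ∈ s) (hvt : v ∈ t) :
    s = t := by
  have herase : ∀ {u : Finset V}, G.IsNClique 3 u → v ∈ u →
      u.erase v ⊆ G.neighborFinset v :=
    fun hu hvu x hx => (mem_neighborFinset _ _ _).2
      (hu.isClique hvu (mem_of_mem_erase hx) (ne_of_mem_erase hx).symm)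
  obtain ⟨p, hp⟩ := inter_nonempty_of_card_lt_card_add_card (herase hs hvs) (herase ht hvt) (by
    rw [card_neighborFinset_eq_degree, hG.isRegularOfDegree v, card_erase_of_mem hvs,
      card_erase_of_mem hvt, hs.card_eq, ht.card_eq]
    decide)
  obtain ⟨hps, hpt⟩ := mem_inter.1 hp
  have hcommon : ∀ {u : Finset V}, G.IsNClique 3 u → v ∈ u → p ∈ u →
      ∀ x ∈ u, x ∉ ({v, p} : Finset V) → x ∈ G.commonNeighbors v p := by
    intro u hu hvu hpu x hxu hx
    simp only [mem_insert, mem_singleton, not_or] at hx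
    exact ⟨hu.isClique hvu hxu (Ne.symm hx.1), hu.isClique hpu hxu (Ne.symm hx.2)⟩
  have hvp : G.Adj v p := hs.isClique hvs (mem_of_mem_erase hps) (ne_of_mem_erase hps).symm
  obtain ⟨y, hyt, hy⟩ := exists_mem_notMem_of_card_lt_card (s := {v, p}) (t := t)
    (by rw [ht.card_eq]; exact card_le_two.trans_lt (by decide))
  refine eq_of_subset_of_card_le (fun x hxs => ?_) (by rw [hs.card_eq, ht.card_eq])
  by_cases hx : x ∈ ({v, p} : Finset V)
  · simp only [mem_insert, mem_singleton] at hx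
    rcases hx with rfl | rfl
    exacts [hvt, mem_of_mem_erase hpt]
  · have hxy := hedge hvp (hcommon hs hvs (mem_of_mem_erase hps) x hxs hx)
      (hcommon ht hvt (mem_of_mem_erase hpt) y hyt hy)
    exact hxy ▸ hyt

end

/-- In a 3-connected cubic claw-free graph different from `K₄`, every
vertex lies in exactly one triangle (a triangle being a 3-set of pairwise adjacent
vertices). -/
theorem stmt_18 {V : Type*} [Fintype V] (G : SimpleGraph V)
    (h3c : ThreeConnected G) (hcubic : IsCubic G) (hcf : IsClawFree G)
    (hK4 : ¬ Nonempty (G ≃g (⊤ : SimpleGraph (Fin 4)))) :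
    ∀ v : V, ∃! T : Finset V,
      v ∈ T ∧ T.card = 3 ∧ ∀ x ∈ T, ∀ y ∈ T, x ≠ y → G.Adj x y := by
  classical
  intro v
  have htriangle (T : Finset V) :
      (T.card = 3 ∧ ∀ x ∈ T, ∀ y ∈ T, x ≠ y → G.Adj x y) ↔ G.IsNClique 3 T :=
    ⟨fun ⟨h3, hT⟩ => ⟨fun x hx y hy => hT x hx y hy, h3⟩,
      fun hT => ⟨hT.card_eq, fun _ hx _ hy => hT.isClique hx hy⟩⟩
  simp only [htriangle]
  obtain ⟨T, hvT, hT⟩ := hcf.exists_isNClique_three_mem hcubic v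
  exact ⟨T, ⟨hvT, hT⟩, fun S ⟨hvS, hS⟩ => hcubic.eq_of_isNClique_three_mem
    (fun _ _ => h3c.commonNeighbors_subsingleton hcubic hK4) hS hT hvS hvT⟩
end
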